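/- arXiv:2406.14667 — 8 statements merged into one kernel-verified Lean document; each statement's English description precedes it below -/
import Mathlib

section
/- Let Γ be a connected simplicial graph and let H(Γ) be the combinatorial horoball based on Γ (vertex set Γ⁰ × ℤ≥0, vertical edges from (x,n) to (x,n+1), and horizontal edges from (x,n) to (y,n) whenever d_Γ(x,y) ≤ 2^n). Then for any distinct vertices v, w of Γ, we have (1/2)·d_H((v,0),(w,0)) − 2 < log₂(d_Γ(v,w)) < (1/2)·d_H((v,0),(w,0)) + 1, where d_H denotes the path metric on H(Γ). -/
open SimpleGraph

/-- The combinatorial horoball based on a simplicial graph `G`: vertex set `V × ℕ`,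
vertical edges from `(x, n)` to `(x, n+1)`, and horizontal edges from `(x, n)` to `(y, n)`
whenever `d_G(x, y) ≤ 2 ^ n`. -/
def combHoroball {V : Type*} (G : SimpleGraph V) : SimpleGraph (V × ℕ) :=
  SimpleGraph.fromRel fun a b =>
    (a.1 = b.1 ∧ b.2 = a.2 + 1) ∨ (a.2 = b.2 ∧ G.dist a.1 b.1 ≤ 2 ^ a.2)

/-- Key combinatorial lemma: a walk in the horoball from `(x, j)` to `(y, k)` of length `L`
yields some level `N ≥ j, k` with `2N ≤ L + j + k` and `d_G(x,y) ≤ 2^N (L + j + k - 2N)`. -/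
lemma horoball_walk_key {V : Type*} {G : SimpleGraph V} (hG : G.Connected) :
    ∀ {a b : V × ℕ} (p : (combHoroball G).Walk a b),
      ∃ N : ℕ, a.2 ≤ N ∧ b.2 ≤ N ∧ 2*N ≤ p.length + a.2 + b.2 ∧
        G.dist a.1 b.1 ≤ 2^N * (p.length + a.2 + b.2 - 2*N) := by
  intro a b p
  induction p with
  | nil =>
    refine ⟨_, le_rfl, le_rfl, ?_, ?_⟩ <;> simp [SimpleGraph.dist_self] <;> omega
  | @cons u c d h p ih =>
    obtain ⟨N, hcN, hdN, h2N, hd⟩ := ih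
    rw [combHoroball, SimpleGraph.fromRel_adj] at h
    simp only [SimpleGraph.Walk.length_cons]
    obtain ⟨hne, (⟨h1, h2⟩ | ⟨h1, h2⟩) | (⟨h1, h2⟩ | ⟨h1, h2⟩)⟩ := h
    · -- up step: u.1 = c.1, c.2 = u.2 + 1
      refine ⟨N, by omega, hdN, by omega, ?_⟩
      rw [h1]
      calc G.dist c.1 d.1 ≤ 2^N * (p.length + c.2 + d.2 - 2*N) := hd
        _ ≤ _ := by apply Nat.mul_le_mul_left; omega
    · -- horizontal: u.2 = c.2, dist u.1 c.1 ≤ 2^u.2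
      refine ⟨N, by omega, hdN, by omega, ?_⟩
      have htri : G.dist u.1 d.1 ≤ G.dist u.1 c.1 + G.dist c.1 d.1 := hG.dist_triangle
      have hpow : (2:ℕ)^u.2 ≤ 2^N := Nat.pow_le_pow_right (by norm_num) (by omega)
      have hK : p.length + 1 + u.2 + d.2 - 2*N = (p.length + c.2 + d.2 - 2*N) + 1 := by omega
      rw [hK, Nat.mul_add, Nat.mul_one]
      omega
    · -- down step: c.1 = u.1, u.2 = c.2 + 1
      by_cases hN : u.2 ≤ N
      · refine ⟨N, hN, hdN, by omega, ?_⟩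
        rw [← h1]
        calc G.dist c.1 d.1 ≤ 2^N * (p.length + c.2 + d.2 - 2*N) := hd
          _ ≤ _ := by apply Nat.mul_le_mul_left; omega
      · have hNc : N = c.2 := by omega
        refine ⟨N + 1, by omega, by omega, by omega, ?_⟩
        rw [← h1]
        calc G.dist c.1 d.1 ≤ 2^N * (p.length + c.2 + d.2 - 2*N) := hd
          _ ≤ 2^(N+1) * (p.length + 1 + u.2 + d.2 - 2*(N+1)) := by
            apply Nat.mul_le_mul (Nat.pow_le_pow_right (by norm_num) (by omega)) (by omega)
    · -- horizontal (reversed): c.2 = u.2, dist c.1 u.1 ≤ 2^c.2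
      refine ⟨N, by omega, hdN, by omega, ?_⟩
      have htri : G.dist u.1 d.1 ≤ G.dist u.1 c.1 + G.dist c.1 d.1 := hG.dist_triangle
      have h2' : G.dist u.1 c.1 ≤ 2 ^ u.2 := by rw [SimpleGraph.dist_comm, ← h1]; exact h2
      have hpow : (2:ℕ)^u.2 ≤ 2^N := Nat.pow_le_pow_right (by norm_num) (by omega)
      have hK : p.length + 1 + u.2 + d.2 - 2*N = (p.length + c.2 + d.2 - 2*N) + 1 := by omega
      rw [hK, Nat.mul_add, Nat.mul_one]
      omega

lemma horoball_adj_up {V : Type*} (G : SimpleGraph V) (v : V) (n : ℕ) :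
    (combHoroball G).Adj (v, n) (v, n + 1) := by
  rw [combHoroball, SimpleGraph.fromRel_adj]
  exact ⟨by simp, Or.inl (Or.inl ⟨rfl, rfl⟩)⟩

lemma horoball_up_walk {V : Type*} (G : SimpleGraph V) (v : V) (n : ℕ) :
    ∃ p : (combHoroball G).Walk (v, 0) (v, n), p.length = n := by
  induction n with
  | zero => exact ⟨SimpleGraph.Walk.nil, rfl⟩
  | succ n ih =>
    obtain ⟨p, hp⟩ := ih
    exact ⟨p.concat (horoball_adj_up G v n), by simp [SimpleGraph.Walk.length_concat, hp]⟩

lemma horoball_short_walk {V : Type*} (G : SimpleGraph V) {v w : V} (hvw : v ≠ w) :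
    ∃ p : (combHoroball G).Walk (v, 0) (w, 0),
      p.length = 2 * Nat.clog 2 (G.dist v w) + 1 := by
  set n := Nat.clog 2 (G.dist v w) with hn
  have hadj : (combHoroball G).Adj (v, n) (w, n) := by
    rw [combHoroball, SimpleGraph.fromRel_adj]
    exact ⟨by simp [hvw], Or.inl (Or.inr ⟨rfl, Nat.le_pow_clog (by norm_num) _⟩)⟩
  obtain ⟨p, hp⟩ := horoball_up_walk G v n
  obtain ⟨q, hq⟩ := horoball_up_walk G w n
  refine ⟨p.append (SimpleGraph.Walk.cons hadj q.reverse), ?_⟩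
  simp [SimpleGraph.Walk.length_append, SimpleGraph.Walk.length_cons,
    SimpleGraph.Walk.length_reverse, hp, hq]
  omega

lemma nat_sq_lt_two_pow (t : ℕ) : t^2 < 2^(t+2) := by
  induction t with
  | zero => norm_num
  | succ n ih =>
    have ha : n + 1 < 2^(n+1) := Nat.lt_two_pow_self (n := n+1)
    have hb : (2:ℕ)^(n+3) = 2 * 2^(n+2) := by ring
    have hc : (2:ℕ)^(n+2) = 2 * 2^(n+1) := by ring
    nlinarith [ih, ha, hb, hc]

lemma real_t_lt_rpow (t : ℕ) : (t:ℝ) < (2:ℝ) ^ ((t:ℝ)/2 + 1) := by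
  have h0 : (0:ℝ) ≤ (2:ℝ) ^ ((t:ℝ)/2 + 1) := (Real.rpow_pos_of_pos two_pos _).le
  refine lt_of_pow_lt_pow_left₀ 2 h0 ?_
  have h1 : ((2:ℝ) ^ ((t:ℝ)/2 + 1)) ^ (2:ℕ) = (2:ℝ) ^ ((t:ℝ) + 2) := by
    rw [← Real.rpow_natCast ((2:ℝ) ^ ((t:ℝ)/2+1)) 2, ← Real.rpow_mul (by norm_num)]
    ring_nf
  rw [h1]
  have h2 : (2:ℝ) ^ ((t:ℝ)+2) = ((2^(t+2) : ℕ) : ℝ) := by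
    rw [show ((t:ℝ)+2) = ((t+2:ℕ):ℝ) by push_cast; ring, Real.rpow_natCast]
    push_cast; ring
  rw [h2]
  exact_mod_cast nat_sq_lt_two_pow t

/-- **Lemma (horoball distortion).** For a connected simplicial graph `Γ` and distinct vertices
`v, w`, writing `d_H` for the path metric of the combinatorial horoball `H(Γ)`:
`(1/2)·d_H((v,0),(w,0)) − 2 < log₂ d_Γ(v,w) < (1/2)·d_H((v,0),(w,0)) + 1`. -/
theorem horoball_distance_estimate {V : Type*} (G : SimpleGraph V) (hG : G.Connected)
    (v w : V) (hvw : v ≠ w) :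
    ((combHoroball G).dist (v, 0) (w, 0) : ℝ) / 2 - 2 < Real.logb 2 (G.dist v w) ∧
      Real.logb 2 (G.dist v w) < ((combHoroball G).dist (v, 0) (w, 0) : ℝ) / 2 + 1 := by
  have hd1 : 1 ≤ G.dist v w := hG.pos_dist_of_ne hvw
  set d := G.dist v w with hdd
  set D := (combHoroball G).dist (v, 0) (w, 0) with hDD
  set n := Nat.clog 2 d with hn
  obtain ⟨q, hq⟩ := horoball_short_walk G hvw
  have hDle : D ≤ 2 * n + 1 := by
    calc D ≤ q.length := SimpleGraph.dist_le q
      _ = 2 * n + 1 := hq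
  have hreach : (combHoroball G).Reachable (v, 0) (w, 0) := ⟨q⟩
  obtain ⟨r, hr⟩ := hreach.exists_walk_length_eq_dist
  obtain ⟨N, -, -, h2N, hdle⟩ := horoball_walk_key hG r
  rw [hr] at h2N hdle
  simp only [Nat.add_zero] at h2N hdle
  set t := D - 2 * N with htdef
  have ht1 : 1 ≤ t := by
    rcases Nat.eq_zero_or_pos t with h | h
    · rw [h, Nat.mul_zero] at hdle; omega
    · exact h
  have hDeq : D = 2 * N + t := by omega
  constructor
  · -- lower estimate
    rcases eq_or_lt_of_le hd1 with h1 | h2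
    · have hn0 : n = 0 := by rw [hn, ← h1, Nat.clog_one_right]
      have hD1 : D ≤ 1 := by omega
      have hD1' : (D:ℝ) ≤ 1 := by exact_mod_cast hD1
      rw [← h1]
      simp only [Nat.cast_one, Real.logb_one]
      linarith
    · have hn1 : 1 ≤ n := Nat.clog_pos one_lt_two h2
      have hlt : 2^(n-1) < d := Nat.pow_pred_clog_lt_self one_lt_two h2
      have hlogb : ((n:ℝ) - 1) < Real.logb 2 d := by
        have hstep : Real.logb 2 ((2^(n-1) : ℕ) : ℝ) < Real.logb 2 d :=
          Real.logb_lt_logb one_lt_two (by positivity) (by exact_mod_cast hlt)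
        have hval : Real.logb 2 ((2^(n-1) : ℕ) : ℝ) = (n:ℝ) - 1 := by
          push_cast
          rw [Real.logb_pow, Real.logb_self_eq_one one_lt_two, mul_one,
            Nat.cast_sub hn1, Nat.cast_one]
        rw [hval] at hstep
        exact hstep
      have hDle' : (D:ℝ) ≤ 2 * (n:ℝ) + 1 := by exact_mod_cast hDle
      linarith
  · -- upper estimate
    rw [Real.logb_lt_iff_lt_rpow one_lt_two (by exact_mod_cast hd1)]
    have key : (d:ℝ) ≤ (2:ℝ)^(N:ℕ) * (t:ℝ) := by exact_mod_cast hdle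
    have hlt2 : (2:ℝ)^(N:ℕ) * (t:ℝ) < (2:ℝ)^(N:ℕ) * (2:ℝ) ^ ((t:ℝ)/2 + 1) :=
      mul_lt_mul_of_pos_left (real_t_lt_rpow t) (by positivity)
    have heq : (2:ℝ)^(N:ℕ) * (2:ℝ) ^ ((t:ℝ)/2 + 1) = (2:ℝ) ^ ((D:ℝ)/2 + 1) := by
      rw [← Real.rpow_natCast 2 N, ← Real.rpow_add two_pos]
      congr 1
      have hD : (D:ℝ) = 2 * (N:ℝ) + (t:ℝ) := by exact_mod_cast hDeq
      rw [hD]; ring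
    linarith
end

section
/- Let Γ be a graph and D > 0. If the complex Γ^{2D} obtained from Γ by gluing disks to all edge-loops of length at most 2D is simply connected, then π₁(Γ) is generated by loops freely homotopic to loops of diameter at most D (i.e., Γ is D-simply connected). Conversely, if Γ is D-simply connected, then Γ^{2D+1} is simply connected. -/
open SimpleGraph

variable {V : Type*}

/-- `D`-homotopy of walks in a graph `G`: the equivalence relation on walks with common
endpoints generated (congruently with respect to concatenation) by backtracking moves and by
identifying two walks whose difference is an edge-loop of length at most `D`.  Two closed walks
based at `a` are `D`-homotopic exactly when they represent the same element of
`π₁^D(G, a) = π₁(G^D, a)`, where `G^D` is obtained from `G` by gluing disks to all edge-loops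
of length at most `D`. -/
inductive DHomotopic (G : SimpleGraph V) (D : ℝ) : ∀ {u v : V}, G.Walk u v → G.Walk u v → Prop
  | refl {u v : V} (p : G.Walk u v) : DHomotopic G D p p
  | symm {u v : V} {p q : G.Walk u v} : DHomotopic G D p q → DHomotopic G D q p
  | trans {u v : V} {p q r : G.Walk u v} :
      DHomotopic G D p q → DHomotopic G D q r → DHomotopic G D p r
  | backtrack {u v : V} (h : G.Adj u v) :
      DHomotopic G D (Walk.nil : G.Walk u u) (Walk.cons h (Walk.cons h.symm Walk.nil))
  | small {u v : V} (p q : G.Walk u v) :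
      ((p.append q.reverse).length : ℝ) ≤ D → DHomotopic G D p q
  | congr {u v w x : V} {p p' : G.Walk v w} (r : G.Walk u v) (s : G.Walk w x) :
      DHomotopic G D p p' →
      DHomotopic G D (r.append (p.append s)) (r.append (p'.append s))

/-- `π₁^D(G, u)` is trivial: every closed walk based at `u` is `D`-homotopically trivial.
For a connected graph this says exactly that `G^D` is simply connected. -/
def DSimplyConnectedComplex (G : SimpleGraph V) (D : ℝ) : Prop :=
  ∀ (u : V) (p : G.Walk u u), DHomotopic G D p Walk.nil

/-- `G` is `D`-simply connected: `π₁(G)` is generated by loops freely homotopic to loops of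
diameter at most `D`, i.e. every closed walk is graph-homotopic to a concatenation of
conjugates `c · l · c⁻¹` of closed walks `l` of diameter at most `D`. -/
def DSimplyConnected (G : SimpleGraph V) (D : ℝ) : Prop :=
  ∀ (u : V) (p : G.Walk u u), ∃ L : List (G.Walk u u),
    DHomotopic G 0 p (L.foldr Walk.append Walk.nil) ∧
    ∀ w ∈ L, ∃ (v : V) (c : G.Walk u v) (l : G.Walk v v),
      w = c.append (l.append c.reverse) ∧
      ∀ x ∈ l.support, ∀ y ∈ l.support, (G.dist x y : ℝ) ≤ D

/-! A `2D`-null-homotopy of a loop is a product of conjugates of loops of length at most `2D`,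
and such a loop has diameter at most `D`; this gives the first implication. Conversely a loop
of diameter at most `D` is coned off from one of its vertices by triangles of length at most
`2D + 1`, whose third sides are geodesics to the cone point. -/

namespace DHomotopic

variable {G : SimpleGraph V} {D : ℝ}

lemma mono {D' : ℝ} (hDD : D ≤ D') {u v : V} {p q : G.Walk u v}
    (h : DHomotopic G D p q) : DHomotopic G D' p q := by
  induction h with
  | refl p => exact .refl p
  | symm _ ih => exact ih.symm
  | trans _ _ ih₁ ih₂ => exact ih₁.trans ih₂
  | backtrack h => exact .backtrack h
  | small p q h => exact .small p q (h.trans hDD)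
  | congr r s _ ih => exact .congr r s ih

lemma append_right {u v w : V} {p p' : G.Walk u v} (s : G.Walk v w)
    (h : DHomotopic G D p p') : DHomotopic G D (p.append s) (p'.append s) := by
  simpa using DHomotopic.congr Walk.nil s h

lemma append_left {u v w : V} (r : G.Walk u v) {p p' : G.Walk v w}
    (h : DHomotopic G D p p') : DHomotopic G D (r.append p) (r.append p') := by
  simpa using DHomotopic.congr r Walk.nil h

lemma append {u v w : V} {p p' : G.Walk u v} {q q' : G.Walk v w}
    (hp : DHomotopic G D p p') (hq : DHomotopic G D q q') :
    DHomotopic G D (p.append q) (p'.append q') :=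
  (hp.append_right q).trans (hq.append_left p')

lemma append_reverse_self {u v : V} (p : G.Walk u v) :
    DHomotopic G D (p.append p.reverse) Walk.nil := by
  induction p with
  | nil => exact .refl _
  | cons h q ih =>
    refine DHomotopic.trans ?_ (DHomotopic.backtrack h).symm
    simpa [← Walk.append_assoc] using
      DHomotopic.congr (Walk.cons h Walk.nil) (Walk.cons h.symm Walk.nil) ih

lemma insert_backtrack {u v w x : V} (a : G.Walk u v) (m : G.Walk v w) (b : G.Walk v x) :
    DHomotopic G D (a.append b) ((a.append m).append (m.reverse.append b)) := by
  simpa [← Walk.append_assoc] using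
    DHomotopic.congr a b (append_reverse_self (D := D) m).symm

lemma reverse {u v : V} {p q : G.Walk u v} (h : DHomotopic G D p q) :
    DHomotopic G D p.reverse q.reverse := by
  induction h with
  | refl p => exact .refl _
  | symm _ ih => exact ih.symm
  | trans _ _ ih₁ ih₂ => exact ih₁.trans ih₂
  | backtrack h => simpa using DHomotopic.backtrack (D := D) h
  | small p q h =>
    refine .small _ _ ?_
    simpa [Walk.length_append, add_comm] using h
  | congr r s _ ih =>
    simpa [Walk.reverse_append, ← Walk.append_assoc] using
      DHomotopic.congr s.reverse r.reverse ih

end DHomotopic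

section SmallLassos

variable {G : SimpleGraph V} {D : ℝ}

def loopProd {u : V} (L : List (G.Walk u u)) : G.Walk u u :=
  L.foldr Walk.append Walk.nil

lemma loopProd_append {u : V} (L₁ L₂ : List (G.Walk u u)) :
    loopProd (L₁ ++ L₂) = (loopProd L₁).append (loopProd L₂) := by
  induction L₁ with
  | nil => rfl
  | cons w L₁ ih =>
    change w.append (loopProd (L₁ ++ L₂)) = (w.append (loopProd L₁)).append _
    rw [ih, Walk.append_assoc]

lemma reverse_loopProd {u : V} (L : List (G.Walk u u)) :
    (loopProd L).reverse = loopProd (L.reverse.map Walk.reverse) := by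
  induction L with
  | nil => rfl
  | cons w L ih =>
    change (w.append (loopProd L)).reverse = _
    rw [Walk.reverse_append, ih, List.reverse_cons, List.map_append, loopProd_append]
    simp [loopProd]

lemma dHomotopic_conj_loopProd {u v : V} (r : G.Walk u v) (L : List (G.Walk v v)) :
    DHomotopic G 0 (r.append ((loopProd L).append r.reverse))
      (loopProd (L.map fun w => r.append (w.append r.reverse))) := by
  induction L with
  | nil => simpa [loopProd] using DHomotopic.append_reverse_self r
  | cons w L ih =>
    refine DHomotopic.trans ?_ ((DHomotopic.refl _).append ih)
    have h := DHomotopic.insert_backtrack (D := 0) (r.append w) r.reverse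
      ((loopProd L).append r.reverse)
    rw [Walk.reverse_reverse] at h
    change DHomotopic G 0 (r.append ((w.append (loopProd L)).append r.reverse)) _
    simpa [← Walk.append_assoc] using h

def IsSmallLasso (G : SimpleGraph V) (D : ℝ) {u : V} (w : G.Walk u u) : Prop :=
  ∃ (v : V) (c : G.Walk u v) (l : G.Walk v v),
    w = c.append (l.append c.reverse) ∧
    ∀ x ∈ l.support, ∀ y ∈ l.support, (G.dist x y : ℝ) ≤ D

def IsGeneratedBySmallLassos (G : SimpleGraph V) (D : ℝ) {u : V} (p : G.Walk u u) : Prop :=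
  ∃ L : List (G.Walk u u), DHomotopic G 0 p (loopProd L) ∧ ∀ w ∈ L, IsSmallLasso G D w

lemma IsSmallLasso.reverse {u : V} {w : G.Walk u u} (h : IsSmallLasso G D w) :
    IsSmallLasso G D w.reverse := by
  obtain ⟨v, c, l, rfl, hl⟩ := h
  refine ⟨v, c, l.reverse, by simp [Walk.reverse_append, ← Walk.append_assoc], ?_⟩
  simpa using hl

namespace IsGeneratedBySmallLassos

lemma of_dHomotopic {u : V} {p q : G.Walk u u} (h : DHomotopic G 0 p q)
    (hq : IsGeneratedBySmallLassos G D q) : IsGeneratedBySmallLassos G D p :=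
  let ⟨L, hL, hsmall⟩ := hq
  ⟨L, h.trans hL, hsmall⟩

lemma of_dHomotopic_nil {u : V} {p : G.Walk u u} (h : DHomotopic G 0 p Walk.nil) :
    IsGeneratedBySmallLassos G D p :=
  ⟨[], h, by simp⟩

lemma append {u : V} {p q : G.Walk u u} (hp : IsGeneratedBySmallLassos G D p)
    (hq : IsGeneratedBySmallLassos G D q) : IsGeneratedBySmallLassos G D (p.append q) := by
  obtain ⟨L₁, h₁, hsmall₁⟩ := hp
  obtain ⟨L₂, h₂, hsmall₂⟩ := hq
  refine ⟨L₁ ++ L₂, loopProd_append L₁ L₂ ▸ h₁.append h₂, ?_⟩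
  rintro w hw
  rcases List.mem_append.1 hw with hw | hw
  exacts [hsmall₁ w hw, hsmall₂ w hw]

lemma reverse {u : V} {p : G.Walk u u} (h : IsGeneratedBySmallLassos G D p) :
    IsGeneratedBySmallLassos G D p.reverse := by
  obtain ⟨L, hL, hsmall⟩ := h
  refine ⟨L.reverse.map Walk.reverse, reverse_loopProd L ▸ hL.reverse, ?_⟩
  simp only [List.mem_map, List.mem_reverse, forall_exists_index, and_imp]
  rintro _ w hw rfl
  exact (hsmall w hw).reverse

lemma conj {u v : V} (r : G.Walk u v) {p : G.Walk v v} (h : IsGeneratedBySmallLassos G D p) :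
    IsGeneratedBySmallLassos G D (r.append (p.append r.reverse)) := by
  obtain ⟨L, hL, hsmall⟩ := h
  refine ⟨L.map fun w => r.append (w.append r.reverse),
    (DHomotopic.congr r r.reverse hL).trans (dHomotopic_conj_loopProd r L), ?_⟩
  simp only [List.mem_map, forall_exists_index, and_imp]
  rintro _ w hw rfl
  obtain ⟨z, c, l, rfl, hl⟩ := hsmall w hw
  exact ⟨z, r.append c, l, by simp [Walk.reverse_append, ← Walk.append_assoc], hl⟩

end IsGeneratedBySmallLassos

lemma two_mul_dist_le_length {u x y : V} (p : G.Walk u u) (hx : x ∈ p.support)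
    (hy : y ∈ p.support) : 2 * G.dist x y ≤ p.length := by
  classical
  set q := p.rotate x hx
  have hy' : y ∈ q.support := (p.mem_support_rotate_iff x hx).2 hy
  have h₁ := dist_le (q.takeUntil y hy')
  have h₂ := dist_le (q.dropUntil y hy')
  have hq := congrArg Walk.length (q.take_spec hy')
  rw [Walk.length_append, Walk.length_rotate] at hq
  rw [dist_comm] at h₂
  omega

theorem DHomotopic.isGeneratedBySmallLassos {u v : V} {p q : G.Walk u v}
    (h : DHomotopic G (2 * D) p q) : IsGeneratedBySmallLassos G D (p.append q.reverse) := by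
  induction h with
  | refl p => exact .of_dHomotopic_nil (.append_reverse_self p)
  | symm _ ih => simpa [Walk.reverse_append] using ih.reverse
  | @trans _ _ p q r _ _ ih₁ ih₂ =>
    refine .of_dHomotopic ?_ (ih₁.append ih₂)
    simpa using DHomotopic.insert_backtrack (D := 0) p q.reverse r.reverse
  | backtrack h =>
    refine .of_dHomotopic_nil ?_
    simpa using (DHomotopic.backtrack (D := 0) h).symm.reverse
  | @small a _ p q hle =>
    refine ⟨[p.append q.reverse], by simpa [loopProd] using .refl _, ?_⟩
    simp only [List.mem_singleton, forall_eq]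
    refine ⟨a, Walk.nil, p.append q.reverse, by simp, fun x hx y hy => ?_⟩
    have h := two_mul_dist_le_length _ hx hy
    have : (2 * G.dist x y : ℝ) ≤ (p.append q.reverse).length := by exact_mod_cast h
    linarith
  | @congr _ _ _ _ p p' r s _ ih =>
    refine .of_dHomotopic ?_ (ih.conj r)
    simpa [Walk.reverse_append, ← Walk.append_assoc] using
      (DHomotopic.insert_backtrack (D := 0) (r.append p) s (p'.reverse.append r.reverse)).symm

/-- Coning off `l` from `u`: the triangle over each edge `a b` of `l` has sides `c`, `a b`, and
a geodesic from `u` to `b`. -/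
lemma dHomotopic_nil_of_forall_dist_le {u v w : V} (l : G.Walk v w) (c : G.Walk u v)
    (c' : G.Walk u w) (hc : (c.length : ℝ) ≤ D) (hc' : (c'.length : ℝ) ≤ D)
    (hnear : ∀ x ∈ l.support, (G.dist u x : ℝ) ≤ D) :
    DHomotopic G (2 * D + 1) ((c.append l).append c'.reverse) Walk.nil := by
  induction l with
  | nil =>
    refine .small _ _ ?_
    simp only [Walk.append_nil, Walk.length_append, Walk.length_reverse, Walk.length_nil]
    push_cast
    linarith
  | @cons a b _ hab l ih =>
    obtain ⟨g, hg⟩ := (c.concat hab).reachable.exists_walk_length_eq_dist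
    have hg' : (g.length : ℝ) ≤ D := hg ▸ hnear b (by simp)
    have htriangle : DHomotopic G (2 * D + 1)
        ((c.append (Walk.cons hab Walk.nil)).append g.reverse) Walk.nil := by
      refine .small _ _ ?_
      simp only [Walk.length_append, Walk.length_reverse, Walk.length_cons, Walk.length_nil]
      push_cast
      linarith
    have hrest := ih g c' hg' hc' fun x hx => hnear x (by simp [hx])
    rw [← Walk.append_assoc] at hrest
    have h := DHomotopic.insert_backtrack (D := 2 * D + 1) (c.append (Walk.cons hab Walk.nil))
      g.reverse (l.append c'.reverse)
    rw [Walk.reverse_reverse] at h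
    simpa [← Walk.append_assoc] using h.trans (htriangle.append hrest)

lemma IsSmallLasso.dHomotopic_nil {u : V} {w : G.Walk u u} (h : IsSmallLasso G D w) :
    DHomotopic G (2 * D + 1) w Walk.nil := by
  obtain ⟨z, c, l, rfl, hl⟩ := h
  have hD : 0 ≤ D := by simpa using hl z l.start_mem_support z l.start_mem_support
  have hnil : DHomotopic G (2 * D + 1) l Walk.nil := by
    simpa using dHomotopic_nil_of_forall_dist_le l Walk.nil Walk.nil (by simpa using hD)
      (by simpa using hD) (hl z l.start_mem_support)
  simpa using (DHomotopic.congr c c.reverse hnil).trans (.append_reverse_self c)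

lemma loopProd_dHomotopic_nil {u : V} {L : List (G.Walk u u)}
    (hL : ∀ w ∈ L, IsSmallLasso G D w) : DHomotopic G (2 * D + 1) (loopProd L) Walk.nil := by
  induction L with
  | nil => exact .refl _
  | cons w L ih =>
    simpa [loopProd] using
      (hL w (by simp)).dHomotopic_nil.append (ih fun w' hw' => hL w' (by simp [hw']))

end SmallLassos

theorem csc_vs_coarse_pi1_general (G : SimpleGraph V) (D : ℝ) (hD : 0 < D) :
    (DSimplyConnectedComplex G (2 * D) → DSimplyConnected G D) ∧
    (DSimplyConnected G D → DSimplyConnectedComplex G (2 * D + 1)) := by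
  constructor
  · intro h u p
    have hp := (h u p).isGeneratedBySmallLassos
    rwa [Walk.reverse_nil, Walk.append_nil] at hp
  · intro h u p
    obtain ⟨L, hL, hsmall⟩ := h u p
    exact (hL.mono (by linarith)).trans (loopProd_dHomotopic_nil hsmall)

/-- **Lemma.** Let `Γ` be a (connected) graph, `D > 0`.  If `Γ^{2D}` is simply connected then
`Γ` is `D`-simply connected; conversely if `Γ` is `D`-simply connected then `Γ^{2D+1}` is
simply connected. -/
theorem csc_vs_coarse_pi1 (G : SimpleGraph V) (hG : G.Connected) (D : ℝ) (hD : 0 < D) :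
    (DSimplyConnectedComplex G (2 * D) → DSimplyConnected G D) ∧
    (DSimplyConnected G D → DSimplyConnectedComplex G (2 * D + 1)) :=
  csc_vs_coarse_pi1_general G D hD
end

section
/- Let Γ be a connected simplicial graph, D ≥ 5, and suppose Γ^D is simply connected. Let {Γᵢ} be a collection of disjoint connected subgraphs of Γ, and let Γ̂ be the graph obtained from Γ by gluing a combinatorial horoball H(Γᵢ) onto each Γᵢ (along the depth-0 copy of Γᵢ). Then Γ̂ is connected and Γ̂^D is simply connected. -/
open SimpleGraph

variable {V : Type*}

variable {ι : Type*}

/-- Vertices of the graph obtained from `G` by gluing a combinatorial horoball onto each of the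
disjoint connected subgraphs `Γᵢ` (recorded by their vertex sets `S i`): the original vertices
together with, for each `i`, the vertices of the horoball over `Γᵢ` at depth `≥ 1`
(`(i, x, k)` has depth `k + 1`; the depth-0 copy of `Γᵢ` is identified with `Γᵢ ⊆ G`). -/
def GluedV (S : ι → Set V) : Type _ :=
  V ⊕ {q : ι × V × ℕ // q.2.1 ∈ S q.1}

/-- The generating relation for the edges of the glued graph: edges of `G`; vertical horoball
edges; and horizontal horoball edges between vertices at depth `n` whose distance in `Γᵢ` is at
most `2 ^ n`. -/
def gluedRel (G : SimpleGraph V) (S : ι → Set V) : GluedV S → GluedV S → Prop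
  | .inl u, .inl v => G.Adj u v
  | .inl u, .inr ⟨(_, x, k), _⟩ => k = 0 ∧ u = x
  | .inr _, .inl _ => False
  | .inr ⟨(i, x, k), _⟩, .inr ⟨(j, y, l), hy⟩ =>
      (i = j ∧ x = y ∧ l = k + 1) ∨
      (k = l ∧ ∃ h : j = i,
        (G.induce (S i)).dist ⟨x, by assumption⟩ ⟨y, h ▸ hy⟩ ≤ 2 ^ (k + 1))

/-- The graph `Γ̂` obtained from `G` by gluing a combinatorial horoball onto each `Γᵢ`. -/
def GluedGraph (G : SimpleGraph V) (S : ι → Set V) : SimpleGraph (GluedV S) :=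
  SimpleGraph.fromRel (gluedRel G S)

namespace GluedAux

variable {G : SimpleGraph V} {S : ι → Set V} {D : ℝ}

/-- depth of a glued vertex -/
def dep : GluedV S → ℕ
  | .inl _ => 0
  | .inr q => q.1.2.2 + 1

/-- the vertex directly below a horoball vertex -/
def below (q : {q : ι × V × ℕ // q.2.1 ∈ S q.1}) : GluedV S :=
  match q with
  | ⟨(_, x, 0), _⟩ => Sum.inl x
  | ⟨(i, x, k+1), hx⟩ => Sum.inr ⟨(i, x, k), hx⟩

lemma dep_below (q : {q : ι × V × ℕ // q.2.1 ∈ S q.1}) :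
    dep (below q : GluedV S) + 1 = dep (Sum.inr q : GluedV S) := by
  obtain ⟨⟨i, x, (_ | k)⟩, hx⟩ := q <;> rfl

lemma dep_eq_zero {a : GluedV S} (h : dep a = 0) : ∃ u, a = Sum.inl u := by
  cases a with
  | inl u => exact ⟨u, rfl⟩
  | inr q => exact absurd h (by simp [dep])


lemma inr_eq_iff {p q : {q : ι × V × ℕ // q.2.1 ∈ S q.1}} :
    (Sum.inr p : GluedV S) = Sum.inr q ↔ p.1 = q.1 := by
  constructor
  · intro h
    exact Subtype.ext_iff.mp (Sum.inr_injective h)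
  · intro h
    exact congrArg Sum.inr (Subtype.ext h)

lemma adj_inl_inl {u v : V} :
    (GluedGraph G S).Adj (Sum.inl u) (Sum.inl v) ↔ G.Adj u v := by
  rw [GluedGraph]; erw [fromRel_adj]
  constructor
  · rintro ⟨hne, h | h⟩
    · exact h
    · exact h.symm
  · intro h
    exact ⟨fun hc => h.ne (Sum.inl_injective hc), Or.inl h⟩

def inlHom (G : SimpleGraph V) (S : ι → Set V) : G →g GluedGraph G S :=
  ⟨Sum.inl, fun h => adj_inl_inl.mpr h⟩

lemma adj_below (q : {q : ι × V × ℕ // q.2.1 ∈ S q.1}) :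
    (GluedGraph G S).Adj (Sum.inr q) (below q) := by
  obtain ⟨⟨i, x, k⟩, hx⟩ := q
  rw [GluedGraph]; erw [fromRel_adj]
  cases k with
  | zero =>
      exact ⟨Sum.inr_ne_inl, Or.inr ⟨rfl, rfl⟩⟩
  | succ k =>
      refine ⟨?_, Or.inr (Or.inl ⟨rfl, rfl, rfl⟩)⟩
      intro hc; have := inr_eq_iff.mp hc; simp at this

lemma adj_hor {i : ι} {x y : V} {k : ℕ} (hx : x ∈ S i) (hy : y ∈ S i) (hne : x ≠ y)
    (hd : (G.induce (S i)).dist ⟨x, hx⟩ ⟨y, hy⟩ ≤ 2 ^ (k + 1)) :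
    (GluedGraph G S).Adj (Sum.inr ⟨(i, x, k), hx⟩) (Sum.inr ⟨(i, y, k), hy⟩) := by
  rw [GluedGraph]; erw [fromRel_adj]
  refine ⟨?_, Or.inl (Or.inr ⟨rfl, rfl, hd⟩)⟩
  intro hc; have := inr_eq_iff.mp hc; simp at this; exact hne this

lemma adj_cases {a b : GluedV S} (h : (GluedGraph G S).Adj a b) :
    (∃ u v, G.Adj u v ∧ a = Sum.inl u ∧ b = Sum.inl v) ∨
    (∃ q : {q : ι × V × ℕ // q.2.1 ∈ S q.1},
      (a = Sum.inr q ∧ b = below q) ∨ (a = below q ∧ b = Sum.inr q)) ∨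
    (∃ (i : ι) (x y : V) (k : ℕ) (hx : x ∈ S i) (hy : y ∈ S i), x ≠ y ∧
      (G.induce (S i)).dist ⟨x, hx⟩ ⟨y, hy⟩ ≤ 2 ^ (k + 1) ∧
      a = Sum.inr ⟨(i, x, k), hx⟩ ∧ b = Sum.inr ⟨(i, y, k), hy⟩) := by
  erw [GluedGraph, fromRel_adj] at h
  obtain ⟨hne, h⟩ := h
  cases a with
  | inl u =>
    cases b with
    | inl v =>
      refine Or.inl ⟨u, v, ?_, rfl, rfl⟩
      rcases h with h | h
      · exact h
      · exact (h : G.Adj v u).symm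
    | inr q =>
      obtain ⟨⟨i, x, k⟩, hx⟩ := q
      rcases h with h | h
      · obtain ⟨hk, hux⟩ := (h : k = 0 ∧ u = x)
        subst hk; subst hux
        exact Or.inr (Or.inl ⟨⟨(i, u, 0), hx⟩, Or.inr ⟨rfl, rfl⟩⟩)
      · exact (h : False).elim
  | inr q =>
    obtain ⟨⟨i, x, k⟩, hx⟩ := q
    cases b with
    | inl v =>
      rcases h with h | h
      · exact (h : False).elim
      · obtain ⟨hk, hux⟩ := (h : k = 0 ∧ v = x)
        subst hk; subst hux
        exact Or.inr (Or.inl ⟨⟨(i, v, 0), hx⟩, Or.inl ⟨rfl, rfl⟩⟩)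
    | inr q' =>
      obtain ⟨⟨j, y, l⟩, hy⟩ := q'
      rcases h with h | h
      · rcases (h : _ ∨ _) with ⟨hij, hxy, hl⟩ | ⟨hkl, hji, hdist⟩
        · subst hij; subst hxy; subst hl
          exact Or.inr (Or.inl ⟨⟨(i, x, k + 1), hy⟩, Or.inr ⟨rfl, rfl⟩⟩)
        · subst hji; subst hkl
          refine Or.inr (Or.inr ⟨j, x, y, k, hx, hy, ?_, hdist, rfl, rfl⟩)
          intro hc; subst hc; exact hne rfl
      · rcases (h : _ ∨ _) with ⟨hji, hyx, hk⟩ | ⟨hlk, hij, hdist⟩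
        · subst hji; subst hyx; subst hk
          exact Or.inr (Or.inl ⟨⟨(j, y, l + 1), hx⟩, Or.inl ⟨rfl, rfl⟩⟩)
        · subst hij; subst hlk
          refine Or.inr (Or.inr ⟨i, x, y, l, hx, hy, ?_, ?_, rfl, rfl⟩)
          · intro hc; subst hc; exact hne rfl
          · rw [SimpleGraph.dist_comm]; exact hdist

section DHomHelp
variable {W W' : Type*} {H : SimpleGraph W} {H' : SimpleGraph W'}

lemma dhom_append_left {u v w : W} {p p' : H.Walk u v} (s : H.Walk v w)
    (h : DHomotopic H D p p') : DHomotopic H D (p.append s) (p'.append s) :=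
  DHomotopic.congr Walk.nil s h

lemma dhom_append_right {u v w : W} (r : H.Walk u v) {p p' : H.Walk v w}
    (h : DHomotopic H D p p') : DHomotopic H D (r.append p) (r.append p') := by
  have := DHomotopic.congr r Walk.nil h
  rwa [Walk.append_nil, Walk.append_nil] at this

lemma dhom_map (f : H →g H') {u v : W} {p q : H.Walk u v} (h : DHomotopic H D p q) :
    DHomotopic H' D (p.map f) (q.map f) := by
  induction h with
  | refl p => exact .refl _
  | symm _ ih => exact .symm ih
  | trans _ _ ih1 ih2 => exact .trans ih1 ih2
  | backtrack hadj =>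
      simp only [Walk.map_nil, Walk.map_cons]
      exact DHomotopic.backtrack (f.map_adj hadj)
  | small p q hl =>
      apply DHomotopic.small
      rw [Walk.reverse_map, ← Walk.map_append, Walk.length_map]
      exact hl
  | congr r s _ ih =>
      simp only [Walk.map_append]
      exact .congr _ _ ih

/-- reduced walks: no immediate backtracking -/
def Red {a b : W} (p : H.Walk a b) : Prop :=
  p.darts.Chain' fun d d' => d.fst ≠ d'.snd

lemma red_nil {a : W} : Red (Walk.nil : H.Walk a a) := List.isChain_nil

lemma red_single {a b : W} (h : H.Adj a b) : Red (Walk.cons h Walk.nil) := by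
  simp [Red, List.Chain']

lemma red_tail {a b c : W} {h : H.Adj a b} {p : H.Walk b c}
    (hr : Red (Walk.cons h p)) : Red p := by
  rw [Red, Walk.darts_cons] at hr; exact hr.tail

lemma red_cons_cons_iff {a b c d : W} {h : H.Adj a b} {h' : H.Adj b c} {p : H.Walk c d} :
    Red (Walk.cons h (Walk.cons h' p)) ↔ a ≠ c ∧ Red (Walk.cons h' p) := by
  rw [Red, Red, Walk.darts_cons, Walk.darts_cons, List.Chain', List.isChain_cons_cons, ← Walk.darts_cons]; rfl

end DHomHelp

/-- edge bound: horizontal horoball edges must be at subtype-level `< n` -/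
def eOK (n : ℕ) : GluedV S → GluedV S → Prop
  | .inr q, .inr q' => q.1.2.2 = q'.1.2.2 → q.1.2.2 < n
  | _, _ => True

lemma eOK_symm {n : ℕ} {a b : GluedV S} (h : eOK n a b) : eOK n b a := by
  cases a with
  | inl u => cases b with
    | inl v => trivial
    | inr q => trivial
  | inr q => cases b with
    | inl v => trivial
    | inr q' => intro e; exact e ▸ h e.symm

lemma eOK_mono {m n : ℕ} (hmn : m ≤ n) {a b : GluedV S} (h : eOK m a b) : eOK n a b := by
  cases a with
  | inl u => cases b with
    | inl v => trivial
    | inr q => trivial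
  | inr q => cases b with
    | inl v => trivial
    | inr q' => intro e; exact lt_of_lt_of_le (h e) hmn

def HB (n : ℕ) {a b : GluedV S} (p : (GluedGraph G S).Walk a b) : Prop :=
  ∀ d ∈ p.darts, eOK n d.fst d.snd

lemma hb_mono {m n : ℕ} (hmn : m ≤ n) {a b : GluedV S} {p : (GluedGraph G S).Walk a b}
    (h : HB m p) : HB n p := fun d hd => eOK_mono hmn (h d hd)

lemma hb_nil {n : ℕ} {a : GluedV S} : HB n (Walk.nil : (GluedGraph G S).Walk a a) := by
  intro d hd; simp [Walk.darts_nil] at hd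

lemma hb_cons_iff {n : ℕ} {a b c : GluedV S} {h : (GluedGraph G S).Adj a b}
    {p : (GluedGraph G S).Walk b c} :
    HB n (Walk.cons h p) ↔ eOK n a b ∧ HB n p := by
  simp [HB, Walk.darts_cons]

lemma hb_append_iff {n : ℕ} {a b c : GluedV S} {p : (GluedGraph G S).Walk a b}
    {q : (GluedGraph G S).Walk b c} :
    HB n (p.append q) ↔ HB n p ∧ HB n q := by
  simp [HB, Walk.darts_append, or_imp, forall_and]

lemma hb_sub {n : ℕ} {a b c d : GluedV S} {p : (GluedGraph G S).Walk a b}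
    {q : (GluedGraph G S).Walk c d} (hsub : q.darts ⊆ p.darts) (h : HB n p) : HB n q :=
  fun e he => h e (hsub he)

lemma two_le_D (hD : (5:ℝ) ≤ D) {a : GluedV S} {p : (GluedGraph G S).Walk a a}
    (hl : p.length ≤ 2) : ((p.append (Walk.nil.reverse : (GluedGraph G S).Walk a a)).length : ℝ) ≤ D := by
  rw [Walk.reverse_nil, Walk.append_nil]
  have : (p.length : ℝ) ≤ 2 := by exact_mod_cast hl
  linarith

lemma exists_red (hD : (5:ℝ) ≤ D) :
    ∀ (n : ℕ) {a b : GluedV S} (p : (GluedGraph G S).Walk a b), p.length ≤ n →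
      ∃ q : (GluedGraph G S).Walk a b,
        DHomotopic (GluedGraph G S) D p q ∧ Red q ∧ q.length ≤ p.length ∧ q.darts ⊆ p.darts := by
  intro n
  induction n using Nat.strong_induction_on with
  | _ n IH =>
    intro a b p hlen
    cases p with
    | nil => exact ⟨.nil, .refl _, red_nil, le_rfl, List.Subset.refl _⟩
    | cons h p' =>
      cases p' with
      | nil => exact ⟨.cons h .nil, .refl _, red_single h, le_rfl, List.Subset.refl _⟩
      | @cons b₀ c _ h' p'' =>
        have hlen' : p''.length + 2 ≤ n := by
          simp [Walk.length_cons] at hlen; omega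
        by_cases hac : a = c
        · subst hac
          have h2 : DHomotopic (GluedGraph G S) D (Walk.cons h (Walk.cons h' Walk.nil)) Walk.nil :=
            DHomotopic.small _ _ (two_le_D hD (by simp))
          have h3 : DHomotopic (GluedGraph G S) D (Walk.cons h (Walk.cons h' p'')) p'' :=
            dhom_append_left p'' h2
          obtain ⟨q, hq1, hq2, hq3, hq4⟩ := IH p''.length (by omega) p'' le_rfl
          refine ⟨q, h3.trans hq1, hq2, ?_, ?_⟩
          · simp only [Walk.length_cons]; omega
          · intro d hd
            rw [Walk.darts_cons, Walk.darts_cons]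
            exact List.mem_cons_of_mem _ (List.mem_cons_of_mem _ (hq4 hd))
        · obtain ⟨q2, hq1, hq2, hq3, hq4⟩ := IH (n - 1) (by omega) (Walk.cons h' p'')
            (by simp only [Walk.length_cons]; omega)
          have step : DHomotopic (GluedGraph G S) D (Walk.cons h (Walk.cons h' p''))
              (Walk.cons h q2) := dhom_append_right (Walk.cons h Walk.nil) hq1
          have hq3' : q2.length ≤ p''.length + 1 := by
            simpa [Walk.length_cons] using hq3
          have hq4' : q2.darts ⊆ (Walk.cons h (Walk.cons h' p'')).darts := by
            intro d hd
            rw [Walk.darts_cons]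
            exact List.mem_cons_of_mem _ (hq4 hd)
          by_cases hred : Red (Walk.cons h q2)
          · refine ⟨Walk.cons h q2, step, hred, ?_, ?_⟩
            · simp only [Walk.length_cons]; omega
            · intro d hd
              rw [Walk.darts_cons] at hd
              rcases List.mem_cons.mp hd with rfl | hd
              · rw [Walk.darts_cons]; exact List.mem_cons_self
              · exact hq4' hd
          · cases q2 with
            | nil => exact absurd (red_single h) hred
            | @cons _ c₂ _ h₂ r₂ =>
              have hac2 : a = c₂ := by
                by_contra hne
                exact hred (red_cons_cons_iff.mpr ⟨hne, hq2⟩)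
              subst hac2
              have h2 : DHomotopic (GluedGraph G S) D (Walk.cons h (Walk.cons h₂ Walk.nil))
                  Walk.nil := DHomotopic.small _ _ (two_le_D hD (by simp))
              have h3 : DHomotopic (GluedGraph G S) D (Walk.cons h (Walk.cons h₂ r₂)) r₂ :=
                dhom_append_left r₂ h2
              have hlr : r₂.length + 1 ≤ p''.length + 1 := by
                simpa [Walk.length_cons] using hq3'
              obtain ⟨q4, k1, k2, k3, k4⟩ := IH r₂.length (by omega) r₂ le_rfl
              refine ⟨q4, (step.trans h3).trans k1, k2, ?_, ?_⟩
              · simp only [Walk.length_cons]; omega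
              · intro d hd
                refine hq4' ?_
                rw [Walk.darts_cons]
                exact List.mem_cons_of_mem _ (k4 hd)

lemma hb_tail {n : ℕ} {a b c : GluedV S} {h : (GluedGraph G S).Adj a b}
    {p : (GluedGraph G S).Walk b c} (hh : HB n (Walk.cons h p)) : HB n p :=
  (hb_cons_iff.mp hh).2

lemma hb_head {n : ℕ} {a b c : GluedV S} {h : (GluedGraph G S).Adj a b}
    {p : (GluedGraph G S).Walk b c} (hh : HB n (Walk.cons h p)) : eOK n a b :=
  (hb_cons_iff.mp hh).1

lemma adj_below_unique {qv : {q : ι × V × ℕ // q.2.1 ∈ S q.1}} {x : GluedV S}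
    (h : (GluedGraph G S).Adj x (Sum.inr qv)) (hd : dep x ≤ dep (Sum.inr qv : GluedV S))
    (hOK : eOK 0 x (Sum.inr qv)) : x = below qv := by
  rcases adj_cases h with ⟨u, v, hadj, hx, hb⟩ | ⟨q, ⟨hx, hb⟩ | ⟨hx, hb⟩⟩ |
    ⟨i, x', y, k, hx', hy, hne, hdist, ha, hb⟩
  · simp at hb
  · -- x = inr q, inr qv = below q : impossible since dep x ≤ dep qv
    subst hx
    have h1 := dep_below q
    rw [← hb] at h1
    omega
  · have hq : qv = q := Sum.inr_injective hb
    subst hq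
    exact hx
  · subst ha
    have hq : qv = ⟨(i, y, k), hy⟩ := Sum.inr_injective hb
    subst hq
    exact absurd (hOK rfl) (by omega)

lemma up_lemma : ∀ {c b : GluedV S} (w : (GluedGraph G S).Walk c b),
    ∀ {a : GluedV S} (h : (GluedGraph G S).Adj a c), Red (Walk.cons h w) →
    HB 0 (Walk.cons h w) → dep c = dep a + 1 → dep c ≤ dep b := by
  intro c b w
  induction w with
  | nil => intro a h _ _ _; exact le_rfl
  | @cons c c₂ b h' w' ih =>
    intro a h hred hhb hdep
    rcases adj_cases h' with ⟨u, v, hadj, hc, hc₂⟩ | ⟨q, ⟨hc, hc₂⟩ | ⟨hc, hc₂⟩⟩ |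
      ⟨i, x, y, k, hx, hy, hne, hdist, hc, hc₂⟩
    · rw [hc] at hdep; simp [dep] at hdep
    · -- c = inr q, c₂ = below q : next step down, so a = below q = c₂, contra Red
      have ha : a = below q := by
        refine adj_below_unique (hc ▸ h) ?_ ?_
        · rw [hc] at hdep; omega
        · have := hb_head hhb
          rw [hc] at this
          exact this
      have hne2 : a ≠ c₂ := (red_cons_cons_iff.mp hred).1
      exact absurd (ha.trans hc₂.symm) hne2
    · -- up again
      have hd2 : dep c₂ = dep c + 1 := by rw [hc, hc₂]; exact (dep_below q).symm
      have hb2 := ih h' (red_tail hred) (hb_tail hhb) hd2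
      omega
    · -- horizontal excluded by HB 0
      have hOK : eOK 0 c c₂ := hb_head (hb_tail hhb)
      rw [hc, hc₂] at hOK
      exact absurd (hOK rfl) (by omega)

lemma max_helper {dv dc da db : ℕ} (h1 : dv ≤ max dc db) (h2 : dc ≤ max da db) :
    dv ≤ max da db := by
  rcases le_max_iff.mp h1 with h | h
  · exact le_trans h h2
  · exact le_trans h (le_max_right _ _)

lemma supp_bound : ∀ {a b : GluedV S} (w : (GluedGraph G S).Walk a b), Red w → HB 0 w →
    ∀ v ∈ w.support, dep v ≤ max (dep a) (dep b) := by
  intro a b w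
  induction w with
  | nil =>
    intro _ _ v hv
    rw [Walk.support_nil] at hv
    simp at hv
    subst hv
    exact le_max_left _ _
  | @cons a c b h w' ih =>
    intro hred hhb v hv
    rw [Walk.support_cons] at hv
    rcases List.mem_cons.mp hv with rfl | hv
    · exact le_max_left _ _
    · have ihv := ih (red_tail hred) (hb_tail hhb) v hv
      rcases adj_cases h with ⟨u', v', hadj, ha, hc⟩ | ⟨q, ⟨ha, hc⟩ | ⟨ha, hc⟩⟩ |
        ⟨i, x, y, k, hx, hy, hne, hdist, ha, hc⟩
      · have hc0 : dep c = 0 := by rw [hc]; rfl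
        exact max_helper ihv (hc0 ▸ Nat.zero_le _)
      · -- down
        have hd : dep c + 1 = dep a := by rw [ha, hc]; exact dep_below q
        exact max_helper ihv (le_trans (by omega) (le_max_left _ _))
      · -- up
        have hd2 : dep c = dep a + 1 := by rw [ha, hc]; exact (dep_below q).symm
        have hcb := up_lemma w' h hred hhb hd2
        exact max_helper ihv (le_trans hcb (le_max_right _ _))
      · have hOK : eOK 0 a c := hb_head hhb
        rw [ha, hc] at hOK
        exact absurd (hOK rfl) (by omega)

lemma walk_inl : ∀ {a b : GluedV S} (p : (GluedGraph G S).Walk a b),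
    (∀ v ∈ p.support, dep v = 0) →
    ∃ (u' v' : V) (hu : a = Sum.inl u') (hv : b = Sum.inl v') (p' : G.Walk u' v'),
      p = (p'.map (inlHom G S)).copy hu.symm hv.symm := by
  intro a b p
  induction p with
  | nil =>
    intro hs
    obtain ⟨u, hu⟩ := dep_eq_zero (hs _ (by rw [Walk.support_nil]; exact List.mem_singleton_self _))
    subst hu
    exact ⟨u, u, rfl, rfl, Walk.nil, by rfl⟩
  | @cons a c b h p' ih =>
    intro hs
    obtain ⟨u, hu⟩ := dep_eq_zero (hs a (Walk.start_mem_support _))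
    obtain ⟨u₁, v', hu₁, hv, p'', hp⟩ :=
      ih (fun v hv => hs v (by rw [Walk.support_cons]; exact List.mem_cons_of_mem _ hv))
    subst hu; subst hu₁; subst hv
    refine ⟨u, v', rfl, rfl, Walk.cons (adj_inl_inl.mp h) p'', ?_⟩
    simp only [Walk.copy_rfl_rfl, Walk.map_cons] at hp ⊢
    rw [hp]; rfl

lemma hb0_nil (hD : (5:ℝ) ≤ D) (hGD : DSimplyConnectedComplex G D) :
    ∀ (n : ℕ) {u : GluedV S} (p : (GluedGraph G S).Walk u u), p.length ≤ n → HB 0 p →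
      DHomotopic (GluedGraph G S) D p Walk.nil := by
  intro n
  induction n using Nat.strong_induction_on with
  | _ n IH =>
    intro u p hlen hhb
    obtain ⟨q, hpq, hqred, hqlen, hqdarts⟩ := exists_red hD n p hlen
    have hqhb : HB 0 q := hb_sub hqdarts hhb
    cases q with
    | nil => exact hpq
    | @cons _ c _ h q' =>
      have hsupp := supp_bound _ hqred hqhb
      by_cases hu0 : dep u = 0
      · -- everything at depth zero: use simple connectivity of G
        have hall : ∀ v ∈ (Walk.cons h q').support, dep v = 0 := by
          intro v hv
          have := hsupp v hv
          rw [hu0] at this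
          simpa using this
        obtain ⟨u', v', hu, hv, p', hp⟩ := walk_inl _ hall
        have huv : u' = v' := Sum.inl_injective (hu.symm.trans hv)
        subst huv
        subst hu
        have hcp : (Walk.map (inlHom G S) p').copy rfl hv.symm = p'.map (inlHom G S) :=
          Walk.copy_rfl_rfl _
        erw [hcp] at hp
        have hnull := dhom_map (inlHom G S) (hGD u' p')
        rw [Walk.map_nil] at hnull
        rw [← hp] at hnull
        exact hpq.trans hnull
      · -- the basepoint is inside a horoball
        obtain ⟨qv, hqv⟩ : ∃ qv, u = Sum.inr qv := by
          cases u with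
          | inl w => simp [dep] at hu0
          | inr qq => exact ⟨qq, rfl⟩
        subst hqv
        have hcb : c = below qv := by
          refine adj_below_unique h.symm ?_ (eOK_symm (hb_head hqhb))
          have := hsupp c (by
            erw [Walk.support_cons]
            exact List.mem_cons_of_mem _ (Walk.start_mem_support _))
          simpa using this
        subst hcb
        have hne' : below qv ≠ (Sum.inr qv : GluedV S) := by
          intro e
          have := dep_below qv
          rw [e] at this
          omega
        obtain ⟨c₃, h₃, q'', heq'⟩ := Walk.not_nil_iff.mp (Walk.not_nil_of_ne hne' (p := q'))
        subst heq'
        obtain ⟨x, r₂, h₂, heq⟩ := Walk.exists_cons_eq_concat h₃ q''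
        have hxsupp : x ∈ (Walk.cons h (Walk.cons h₃ q'')).support := by
          erw [Walk.support_cons]
          refine List.mem_cons_of_mem _ ?_
          erw [heq, Walk.concat_eq_append, Walk.support_append]
          exact List.mem_append_left _ (Walk.end_mem_support r₂)
        have hdart : (⟨(x, Sum.inr qv), h₂⟩ : (GluedGraph G S).Dart) ∈
            (Walk.cons h (Walk.cons h₃ q'')).darts := by
          erw [Walk.darts_cons]
          refine List.mem_cons_of_mem _ ?_
          erw [heq, Walk.concat_eq_append, Walk.darts_append]
          refine List.mem_append_right _ ?_
          erw [Walk.darts_cons]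
          exact List.mem_cons_self
        have hx : x = below qv := by
          refine adj_below_unique h₂ ?_ (hqhb _ hdart)
          have := hsupp x hxsupp
          simpa using this
        subst hx
        -- r₂ is a closed walk at `below qv`, strictly shorter
        have hrlen : r₂.length + 2 ≤ n := by
          have h1 : (Walk.cons h₃ q'').length = r₂.length + 1 := by
            erw [heq, Walk.length_concat]
          have h2 : (Walk.cons h (Walk.cons h₃ q'')).length ≤ p.length := hqlen
          erw [Walk.length_cons, h1] at h2
          omega
        have hrhb : HB 0 r₂ := by
          refine hb_sub ?_ hqhb
          intro d hd
          erw [Walk.darts_cons]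
          refine List.mem_cons_of_mem _ ?_
          erw [heq, Walk.concat_eq_append, Walk.darts_append]
          exact List.mem_append_left _ hd
        have hr₂ := IH r₂.length (by omega) r₂ le_rfl hrhb
        have hfin : DHomotopic (GluedGraph G S) D (Walk.cons h (r₂.concat h₂))
            (Walk.cons h (Walk.cons h₂ Walk.nil)) :=
          dhom_append_right (Walk.cons h Walk.nil) (dhom_append_left (Walk.cons h₂ Walk.nil) hr₂)
        have hsm : DHomotopic (GluedGraph G S) D (Walk.cons h (Walk.cons h₂ Walk.nil))
            Walk.nil := DHomotopic.small _ _ (two_le_D hD (by exact Nat.le_of_ble_eq_true rfl))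
        rw [heq] at hpq
        exact hpq.trans (hfin.trans hsm)

lemma mid {W : Type*} {H : SimpleGraph W} (hc : H.Connected) :
    ∀ (a : ℕ) {b : ℕ} (x y : W), H.dist x y ≤ a + b →
      ∃ z, H.dist x z ≤ a ∧ H.dist z y ≤ b := by
  intro a
  induction a with
  | zero =>
    intro b x y h
    exact ⟨x, by simp, by simpa using h⟩
  | succ a ih =>
    intro b x y h
    by_cases h' : H.dist x y ≤ a + b
    · obtain ⟨z, hz1, hz2⟩ := ih x y h'
      exact ⟨z, le_trans hz1 (by omega), hz2⟩
    · push_neg at h'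
      obtain ⟨p, hp⟩ := hc.exists_walk_length_eq_dist x y
      cases p with
      | nil => simp at hp; rw [SimpleGraph.dist_self] at h'; omega
      | @cons _ x' _ hadj p' =>
        have hd' : H.dist x' y ≤ a + b := by
          have h2 := SimpleGraph.dist_le p'
          rw [Walk.length_cons] at hp
          omega
        obtain ⟨z, hz1, hz2⟩ := ih x' y hd'
        refine ⟨z, ?_, hz2⟩
        have htri := hc.dist_triangle (u := x) (v := x') (w := z)
        have h1 : H.dist x x' ≤ 1 := by
          have h3 := SimpleGraph.dist_le (Walk.cons hadj Walk.nil)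
          simpa using h3
        omega

def subHom (G : SimpleGraph V) (s : Set V) : G.induce s →g G :=
  ⟨Subtype.val, fun {a b} hab => hab⟩

lemma hb_map {n : ℕ} {i : ι} :
    ∀ {s t : ↥(S i)} (p : (G.induce (S i)).Walk s t),
      HB n (p.map ((inlHom G S).comp (subHom G (S i)))) := by
  intro s t p
  induction p with
  | nil => exact hb_nil
  | cons h p' ih =>
    rw [Walk.map_cons]
    exact hb_cons_iff.mpr ⟨trivial, ih⟩

lemma eok_vert (n : ℕ) (q : {q : ι × V × ℕ // q.2.1 ∈ S q.1}) :
    eOK n (Sum.inr q : GluedV S) (below q) := by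
  obtain ⟨⟨i, x, _ | k⟩, hx⟩ := q
  · trivial
  · intro e; exact absurd e (by simp)

lemma horStep {i : ι} (m : ℕ) (u v : ↥(S i)) (hd : (G.induce (S i)).dist u v ≤ 2 ^ (m + 1)) :
    ∃ w : (GluedGraph G S).Walk (Sum.inr ⟨(i, u.val, m), u.prop⟩)
        (Sum.inr ⟨(i, v.val, m), v.prop⟩),
      w.length ≤ 1 ∧ HB (m + 1) w := by
  by_cases huv : u = v
  · subst huv
    exact ⟨Walk.nil, by exact Nat.le_of_ble_eq_true rfl, hb_nil⟩
  · refine ⟨Walk.cons (adj_hor u.prop v.prop (fun e => huv (Subtype.ext e)) hd) Walk.nil,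
      by exact Nat.le_of_ble_eq_true rfl, hb_cons_iff.mpr ⟨fun _ => Nat.lt_succ_self m, hb_nil⟩⟩

lemma edge_push (hD : (5:ℝ) ≤ D) (hconn : ∀ i, (G.induce (S i)).Connected) (n : ℕ)
    {a b : GluedV S} (h : (GluedGraph G S).Adj a b) (hOK : eOK (n + 1) a b) :
    ∃ w : (GluedGraph G S).Walk a b,
      DHomotopic (GluedGraph G S) D (Walk.cons h Walk.nil) w ∧ HB n w := by
  rcases adj_cases h with ⟨u, v, hadj, ha, hb⟩ | ⟨q, hq⟩ |
    ⟨i, x, y, k, hx, hy, hne, hdist, ha, hb⟩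
  · subst ha; subst hb
    exact ⟨Walk.cons h Walk.nil, .refl _, hb_cons_iff.mpr ⟨trivial, hb_nil⟩⟩
  · refine ⟨Walk.cons h Walk.nil, .refl _, hb_cons_iff.mpr ⟨?_, hb_nil⟩⟩
    rcases hq with ⟨ha, hb⟩ | ⟨ha, hb⟩
    · subst ha; subst hb; exact eok_vert n q
    · subst ha; subst hb; exact eOK_symm (eok_vert n q)
  · subst ha; subst hb
    have hk : k ≤ n := Nat.lt_succ_iff.mp (hOK rfl)
    cases k with
    | zero =>
      obtain ⟨pw, hpw⟩ := (hconn i).exists_walk_length_eq_dist ⟨x, hx⟩ ⟨y, hy⟩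
      refine ⟨Walk.cons (adj_below ⟨(i, x, 0), hx⟩)
        ((pw.map ((inlHom G S).comp (subHom G (S i)))).append
          (Walk.cons ((adj_below ⟨(i, y, 0), hy⟩).symm) Walk.nil)), ?_, ?_⟩
      · apply DHomotopic.small
        have hlen : ((Walk.cons h Walk.nil).append (Walk.cons (adj_below ⟨(i, x, 0), hx⟩)
            ((pw.map ((inlHom G S).comp (subHom G (S i)))).append
              (Walk.cons ((adj_below ⟨(i, y, 0), hy⟩).symm) Walk.nil))).reverse).length ≤ 5 := by
          erw [Walk.length_append, Walk.length_reverse, Walk.length_cons, Walk.length_cons, Walk.length_append, Walk.length_map, Walk.length_cons]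
          change 0 + 1 + (pw.length + (0 + 1) + 1) ≤ 5
          rw [hpw]
          have : (G.induce (S i)).dist ⟨x, hx⟩ ⟨y, hy⟩ ≤ 2 := by
            have := hdist; norm_num at this ⊢; omega
          omega
        calc (((Walk.cons h Walk.nil).append _).length : ℝ) ≤ (5 : ℕ) := by exact_mod_cast hlen
          _ ≤ D := by exact_mod_cast (by norm_num : ((5:ℕ):ℝ) = 5) ▸ hD
      · exact hb_cons_iff.mpr ⟨trivial,
          hb_append_iff.mpr ⟨hb_map pw, hb_cons_iff.mpr ⟨trivial, hb_nil⟩⟩⟩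
    | succ m =>
      have hsplit : (G.induce (S i)).dist ⟨x, hx⟩ ⟨y, hy⟩ ≤ 2 ^ (m + 1) + 2 ^ (m + 1) := by
        have := hdist
        have h2 : (2:ℕ) ^ (m + 1 + 1) = 2 ^ (m + 1) + 2 ^ (m + 1) := by ring
        omega
      obtain ⟨z, hz1, hz2⟩ := mid (hconn i) (2 ^ (m + 1)) ⟨x, hx⟩ ⟨y, hy⟩ hsplit
      obtain ⟨w₁, hw₁l, hw₁⟩ := horStep m ⟨x, hx⟩ z hz1
      obtain ⟨w₂, hw₂l, hw₂⟩ := horStep m z ⟨y, hy⟩ hz2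
      refine ⟨Walk.cons (adj_below ⟨(i, x, m + 1), hx⟩)
        ((w₁.append w₂).append (Walk.cons ((adj_below ⟨(i, y, m + 1), hy⟩).symm) Walk.nil)),
        ?_, ?_⟩
      · apply DHomotopic.small
        have hlen : ((Walk.cons h Walk.nil).append (Walk.cons (adj_below ⟨(i, x, m + 1), hx⟩)
            ((w₁.append w₂).append
              (Walk.cons ((adj_below ⟨(i, y, m + 1), hy⟩).symm) Walk.nil))).reverse).length ≤ 5 := by
          erw [Walk.length_append, Walk.length_reverse, Walk.length_cons, Walk.length_cons, Walk.length_append, Walk.length_append, Walk.length_cons]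
          change 0 + 1 + (w₁.length + w₂.length + (0 + 1) + 1) ≤ 5
          omega
        calc (((Walk.cons h Walk.nil).append _).length : ℝ) ≤ (5 : ℕ) := by exact_mod_cast hlen
          _ ≤ D := by exact_mod_cast (by norm_num : ((5:ℕ):ℝ) = 5) ▸ hD
      · refine hb_cons_iff.mpr ⟨fun e => absurd e (by simp), hb_append_iff.mpr ⟨hb_append_iff.mpr
          ⟨hb_mono hk hw₁, hb_mono hk hw₂⟩, hb_cons_iff.mpr ⟨fun e => absurd e (by simp), hb_nil⟩⟩⟩

lemma pass (hD : (5:ℝ) ≤ D) (hconn : ∀ i, (G.induce (S i)).Connected) (n : ℕ) :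
    ∀ {a b : GluedV S} (p : (GluedGraph G S).Walk a b), HB (n + 1) p →
      ∃ q, DHomotopic (GluedGraph G S) D p q ∧ HB n q := by
  intro a b p
  induction p with
  | nil => exact fun _ => ⟨Walk.nil, .refl _, hb_nil⟩
  | @cons a c b h p' ih =>
    intro hhb
    obtain ⟨w, hw1, hw2⟩ := edge_push hD hconn n h (hb_head hhb)
    obtain ⟨q', hq1, hq2⟩ := ih (hb_tail hhb)
    refine ⟨w.append q', ?_, hb_append_iff.mpr ⟨hw2, hq2⟩⟩
    exact (dhom_append_left p' hw1).trans (dhom_append_right w hq1)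

lemma toHB0 (hD : (5:ℝ) ≤ D) (hconn : ∀ i, (G.induce (S i)).Connected) :
    ∀ (n : ℕ) {a b : GluedV S} (p : (GluedGraph G S).Walk a b), HB n p →
      ∃ q, DHomotopic (GluedGraph G S) D p q ∧ HB 0 q := by
  intro n
  induction n with
  | zero => exact fun p h => ⟨p, .refl _, h⟩
  | succ n ih =>
    intro a b p hp
    obtain ⟨q, h1, h2⟩ := pass hD hconn n p hp
    obtain ⟨q', h3, h4⟩ := ih q h2
    exact ⟨q', h1.trans h3, h4⟩

def dval : GluedV S → GluedV S → ℕ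
  | .inr q, .inr _ => q.1.2.2 + 1
  | _, _ => 0

lemma eok_dval (a b : GluedV S) : eOK (dval a b) a b := by
  cases a with
  | inl u => cases b with
    | inl v => trivial
    | inr q => trivial
  | inr q => cases b with
    | inl v => trivial
    | inr q' => intro _; exact Nat.lt_succ_self _

lemma exists_hb : ∀ {a b : GluedV S} (p : (GluedGraph G S).Walk a b), ∃ n, HB n p := by
  intro a b p
  induction p with
  | nil => exact ⟨0, hb_nil⟩
  | @cons a c b h p' ih =>
    obtain ⟨n', hn'⟩ := ih
    exact ⟨max (dval a c) n', hb_cons_iff.mpr ⟨eOK_mono (le_max_left _ _) (eok_dval a c),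
      hb_mono (le_max_right _ _) hn'⟩⟩

end GluedAux

/-- **Proposition.** Let `Γ` be a connected simplicial graph, `D ≥ 5`, with `Γ^D` simply
connected.  Let `{Γᵢ}` be disjoint connected subgraphs of `Γ` and let `Γ̂` be obtained by
gluing a combinatorial horoball onto each `Γᵢ`.  Then `Γ̂` is connected and `Γ̂^D` is simply
connected. -/
theorem glued_horoballs_simply_connected
    (G : SimpleGraph V) (hG : G.Connected) (D : ℝ) (hD : 5 ≤ D)
    (hGD : DSimplyConnectedComplex G D)
    (S : ι → Set V)
    (hdisj : ∀ i j, i ≠ j → Disjoint (S i) (S j))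
    (hconn : ∀ i, (G.induce (S i)).Connected) :
    (GluedGraph G S).Connected ∧ DSimplyConnectedComplex (GluedGraph G S) D := by
  constructor
  · have hnv : Nonempty V := hG.nonempty
    have reach_down : ∀ (k : ℕ) (a : GluedV S), GluedAux.dep a ≤ k →
        ∃ u, (GluedGraph G S).Reachable a (Sum.inl u) := by
      intro k
      induction k with
      | zero =>
        intro a ha
        obtain ⟨u, hu⟩ := GluedAux.dep_eq_zero (Nat.le_zero.mp ha)
        exact ⟨u, hu ▸ Reachable.refl _⟩
      | succ k ih =>
        intro a ha
        cases a with
        | inl u => exact ⟨u, Reachable.refl _⟩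
        | inr q =>
          have h1 := GluedAux.dep_below (S := S) q
          obtain ⟨u, hu⟩ := ih (GluedAux.below q) (by omega)
          exact ⟨u, (GluedAux.adj_below q).reachable.trans hu⟩
    haveI : Nonempty (GluedV S) := ⟨Sum.inl hnv.some⟩
    constructor
    intro a b
    obtain ⟨ua, ha⟩ := reach_down (GluedAux.dep a) a le_rfl
    obtain ⟨ub, hb⟩ := reach_down (GluedAux.dep b) b le_rfl
    have hmid : (GluedGraph G S).Reachable (Sum.inl ua) (Sum.inl ub) :=
      (hG.preconnected ua ub).map (GluedAux.inlHom G S)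
    exact ha.trans (hmid.trans hb.symm)
  · intro u p
    obtain ⟨n, hn⟩ := GluedAux.exists_hb p
    obtain ⟨q, hpq, hq0⟩ := GluedAux.toHB0 hD hconn n p hn
    exact hpq.trans (GluedAux.hb0_nil hD hGD q.length q le_rfl hq0)
end

section
/- Let Υ be a δ-hyperbolic geodesic metric space, A a λ-quasi-convex subset, and α a geodesic ray starting at a point w ∈ A whose endpoint at infinity is not in the limit set of A. Then for any points y, z on α which are each at distance greater than 6δ + λ from A, one has |d(y,z) − |d(y,A) − d(z,A)|| ≤ 10δ. -/
open Metric Set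

variable {X : Type*} [MetricSpace X]

/-- `f` parametrizes a geodesic segment from `x` to `y` (by arc length on `[0, dist x y]`). -/
def IsGeodesicSegment (f : ℝ → X) (x y : X) : Prop :=
  f 0 = x ∧ f (dist x y) = y ∧
    ∀ s ∈ Icc (0 : ℝ) (dist x y), ∀ t ∈ Icc (0 : ℝ) (dist x y), dist (f s) (f t) = |s - t|

/-- `r` is a unit-speed geodesic ray (parametrized on `[0, ∞)`). -/
def IsGeodesicRay (r : ℝ → X) : Prop :=
  ∀ ⦃s t : ℝ⦄, 0 ≤ s → 0 ≤ t → dist (r s) (r t) = |s - t|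

/-- `X` is `δ`-hyperbolic in the sense that geodesic triangles are `δ`-thin. -/
def SlimTriangles (X : Type*) [MetricSpace X] (δ : ℝ) : Prop :=
  ∀ (x y z : X) (f g h : ℝ → X), IsGeodesicSegment f x y → IsGeodesicSegment g y z →
    IsGeodesicSegment h x z → ∀ t ∈ Icc (0 : ℝ) (dist x z),
      ∃ s, (s ∈ Icc (0 : ℝ) (dist x y) ∧ dist (h t) (f s) ≤ δ) ∨
           (s ∈ Icc (0 : ℝ) (dist y z) ∧ dist (h t) (g s) ≤ δ)

def GeodesicSpace (X : Type*) [MetricSpace X] : Prop :=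
  ∀ x y : X, ∃ f : ℝ → X, IsGeodesicSegment f x y

def QuasiConvexSet (A : Set X) (lam : ℝ) : Prop :=
  ∀ x ∈ A, ∀ y ∈ A, ∀ f : ℝ → X, IsGeodesicSegment f x y →
    ∀ t ∈ Icc (0 : ℝ) (dist x y), infDist (f t) A ≤ lam

/-!
For `a ∈ A`, consider the geodesic triangle `w, a, z` whose side `[w, z]` lies on the ray.
A point `y` of `[w, z]` deeper than `δ + λ` in the complement of `A` cannot be `δ`-close to
`[w, a]`, which stays `λ`-close to `A`, so it is `δ`-close to some `p ∈ [a, z]`. Then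
`d(y, A) ≤ d(p, a) + δ` and `d(y, z) ≤ d(p, z) + δ`, which add up to
`d(y, z) + d(y, A) ≤ d(a, z) + 2δ`; take the infimum over `a`. Together with the `1`-Lipschitz
bound on `d(·, A)` this gives `0 ≤ d(y, z) − |d(y, A) − d(z, A)| ≤ 2δ`.
-/

lemma IsGeodesicSegment.dist_apply_left {f : ℝ → X} {x y : X} (hf : IsGeodesicSegment f x y)
    {u : ℝ} (hu : u ∈ Icc (0 : ℝ) (dist x y)) : dist (f u) x = u := by
  rw [← hf.1, hf.2.2 u hu 0 ⟨le_rfl, dist_nonneg⟩, sub_zero, abs_of_nonneg hu.1]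

lemma IsGeodesicSegment.dist_apply_right {f : ℝ → X} {x y : X} (hf : IsGeodesicSegment f x y)
    {u : ℝ} (hu : u ∈ Icc (0 : ℝ) (dist x y)) : dist (f u) y = dist x y - u := by
  conv_lhs => rw [← hf.2.1]
  rw [hf.2.2 u hu _ ⟨dist_nonneg, le_rfl⟩, abs_sub_comm, abs_of_nonneg (sub_nonneg.2 hu.2)]

lemma IsGeodesicRay.dist_apply_zero {r : ℝ → X} (hr : IsGeodesicRay r) {t : ℝ} (ht : 0 ≤ t) :
    dist (r 0) (r t) = t := by
  rw [hr le_rfl ht, zero_sub, abs_neg, abs_of_nonneg ht]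

lemma IsGeodesicRay.isGeodesicSegment {r : ℝ → X} (hr : IsGeodesicRay r) {t : ℝ} (ht : 0 ≤ t) :
    IsGeodesicSegment r (r 0) (r t) :=
  ⟨rfl, by rw [hr.dist_apply_zero ht], fun _ hu _ hv => hr hu.1 hv.1⟩

lemma abs_infDist_sub_infDist_le (A : Set X) (x y : X) :
    |infDist x A - infDist y A| ≤ dist x y := by
  simpa [Real.dist_eq] using (lipschitz_infDist_pt A).dist_le_mul x y

section SlimTriangles

variable {δ lam : ℝ} {A : Set X} {w a z : X} {γ : ℝ → X}

lemma SlimTriangles.nonneg (hslim : SlimTriangles X δ) (x : X) : 0 ≤ δ := by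
  have hconst : IsGeodesicSegment (fun _ => x) x x := ⟨rfl, rfl, fun u hu v hv => by
    rw [dist_self, Icc_self, mem_singleton_iff] at hu hv
    simp [hu, hv]⟩
  obtain ⟨u, ⟨-, h⟩ | ⟨-, h⟩⟩ :=
    hslim x x x _ _ _ hconst hconst hconst 0 (by simp)
  all_goals simpa using h

lemma SlimTriangles.dist_add_infDist_le_dist (hgeo : GeodesicSpace X)
    (hslim : SlimTriangles X δ) (hqc : QuasiConvexSet A lam) (hw : w ∈ A) (ha : a ∈ A)
    (hγ : IsGeodesicSegment γ w z) {t : ℝ} (ht : t ∈ Icc (0 : ℝ) (dist w z))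
    (hdeep : δ + lam < infDist (γ t) A) :
    dist (γ t) z + infDist (γ t) A ≤ dist a z + 2 * δ := by
  obtain ⟨f, hf⟩ := hgeo w a
  obtain ⟨g, hg⟩ := hgeo a z
  obtain ⟨u, ⟨hu, hclose⟩ | ⟨hu, hclose⟩⟩ := hslim w a z f g γ hf hg hγ t ht
  · have hfA : infDist (f u) A ≤ lam := hqc w hw a ha f hf u hu
    linarith [infDist_le_infDist_add_dist (x := γ t) (y := f u) (s := A)]
  · have hA : infDist (γ t) A ≤ dist (γ t) a := infDist_le_dist_of_mem ha
    have hgu_a := hg.dist_apply_left hu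
    have hgu_z := hg.dist_apply_right hu
    linarith [dist_triangle (γ t) (g u) a, dist_triangle (γ t) (g u) z]

lemma SlimTriangles.dist_add_infDist_le_infDist (hgeo : GeodesicSpace X)
    (hslim : SlimTriangles X δ) (hqc : QuasiConvexSet A lam) (hw : w ∈ A)
    (hγ : IsGeodesicSegment γ w z) {t : ℝ} (ht : t ∈ Icc (0 : ℝ) (dist w z))
    (hdeep : δ + lam < infDist (γ t) A) :
    dist (γ t) z + infDist (γ t) A ≤ infDist z A + 2 * δ := by
  have key : dist (γ t) z + infDist (γ t) A - 2 * δ ≤ infDist z A :=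
    (le_infDist ⟨w, hw⟩).2 fun a ha => by
      linarith [hslim.dist_add_infDist_le_dist hgeo hqc hw ha hγ ht hdeep, dist_comm a z]
  linarith

lemma SlimTriangles.dist_le_abs_infDist_sub_add_of_le (hgeo : GeodesicSpace X)
    (hslim : SlimTriangles X δ) (hqc : QuasiConvexSet A lam) {α : ℝ → X}
    (hα : IsGeodesicRay α) (hw : α 0 ∈ A) {s t : ℝ} (hs : 0 ≤ s) (hst : s ≤ t)
    (hdeep : δ + lam < infDist (α s) A) :
    dist (α s) (α t) ≤ |infDist (α s) A - infDist (α t) A| + 2 * δ := by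
  have ht : 0 ≤ t := hs.trans hst
  have hsmem : s ∈ Icc (0 : ℝ) (dist (α 0) (α t)) := by
    rw [hα.dist_apply_zero ht]
    exact ⟨hs, hst⟩
  have := hslim.dist_add_infDist_le_infDist hgeo hqc hw (hα.isGeodesicSegment ht) hsmem hdeep
  linarith [neg_abs_le (infDist (α s) A - infDist (α t) A)]

end SlimTriangles

theorem constant_progress_general
    (δ lam : ℝ) (hgeo : GeodesicSpace X) (hslim : SlimTriangles X δ)
    (A : Set X) (hqc : QuasiConvexSet A lam)
    (α : ℝ → X) (hα : IsGeodesicRay α) (hw : α 0 ∈ A)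
    (s t : ℝ) (hs : 0 ≤ s) (ht : 0 ≤ t)
    (hys : 6 * δ + lam < infDist (α s) A) (hzt : 6 * δ + lam < infDist (α t) A) :
    abs (dist (α s) (α t) - abs (infDist (α s) A - infDist (α t) A)) ≤ 10 * δ := by
  have hδ := hslim.nonneg (α 0)
  have hlip := abs_infDist_sub_infDist_le A (α s) (α t)
  have hprogress : dist (α s) (α t) ≤ |infDist (α s) A - infDist (α t) A| + 2 * δ := by
    rcases le_total s t with hst | hts
    · exact hslim.dist_le_abs_infDist_sub_add_of_le hgeo hqc hα hw hs hst (by linarith)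
    · rw [dist_comm, abs_sub_comm]
      exact hslim.dist_le_abs_infDist_sub_add_of_le hgeo hqc hα hw ht hts (by linarith)
  rw [abs_le]
  constructor <;> linarith

/-- **Lemma (constant progress).** Let `Υ` be a `δ`-hyperbolic geodesic space, `A` a
`λ`-quasi-convex subset, and `α` a geodesic ray starting at a point `w ∈ A` whose endpoint at
infinity is not in the limit set of `A` (i.e. `α` does not stay at bounded distance from `A`).
Then for points `y = α s`, `z = α t` at distance greater than `6δ + λ` from `A`,
`|d(y,z) − |d(y,A) − d(z,A)|| ≤ 10δ`. -/
theorem constant_progress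
    (δ lam : ℝ) (hgeo : GeodesicSpace X) (hslim : SlimTriangles X δ)
    (A : Set X) (hA : A.Nonempty) (hqc : QuasiConvexSet A lam)
    (α : ℝ → X) (hα : IsGeodesicRay α) (hw : α 0 ∈ A)
    (hnotlim : ¬ ∃ C : ℝ, ∀ t : ℝ, 0 ≤ t → infDist (α t) A ≤ C)
    (s t : ℝ) (hs : 0 ≤ s) (ht : 0 ≤ t)
    (hys : 6 * δ + lam < infDist (α s) A) (hzt : 6 * δ + lam < infDist (α t) A) :
    abs (dist (α s) (α t) - abs (infDist (α s) A - infDist (α t) A)) ≤ 10 * δ :=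
  constant_progress_general δ lam hgeo hslim A hqc α hα hw s t hs ht hys hzt
end

section
/- Let Γ and Ξ be metric graphs (with path metrics, all edges of length 1), let p ∈ Γ, and let R > 3 be an integer. Suppose f : B_R(p) → Ξ is an injective simplicial map defined on the closed ball of radius R about p, which is a local homeomorphism at every point of B_{R−1}(p). Then f restricts to an isometry from B_{R/3}(p) onto B_{R/3}(f(p)). -/
/-!
Paths in `Ξ` starting in the image of the ball lift step by step along the local homeomorphism,
so `f` does not shorten distances between points whose connecting geodesics stay in `B_R(p)`;
it does not lengthen them because it is simplicial. For points of `B_{R/3}(p)` a geodesic and its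
lift stay inside `B_R(p)`, where injectivity identifies the endpoint of the lift.
-/

open SimpleGraph

namespace SimpleGraph

variable {V W : Type*} {G : SimpleGraph V} {H : SimpleGraph W} {f : V → W}

theorem Walk.dist_le_length_of_mem_support {x y v : V} (q : G.Walk x y) (hv : v ∈ q.support) :
    G.dist x v ≤ q.length := by
  classical
  exact (dist_le (q.takeUntil v hv)).trans (q.length_takeUntil_le_length hv)

theorem Walk.exists_map_of_support_subset {s : Set V}
    (hf : ∀ u ∈ s, ∀ v ∈ s, G.Adj u v → H.Adj (f u) (f v)) {x y : V} :
    ∀ q : G.Walk x y, (∀ v ∈ q.support, v ∈ s) →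
      ∃ q' : H.Walk (f x) (f y), q'.length = q.length
  | .nil, _ => ⟨.nil, rfl⟩
  | .cons hadj q, hs => by
    obtain ⟨q', hq'⟩ := q.exists_map_of_support_subset hf fun v hv => hs v (by simp [hv])
    exact ⟨.cons (hf _ (hs _ (by simp)) _ (hs _ (by simp)) hadj) q', by simp [hq']⟩

theorem Walk.exists_lift {s : Set V}
    (hlift : ∀ v ∈ s, ∀ w, H.Adj (f v) w → ∃ u, G.Adj v u ∧ f u = w) {a b : W} :
    ∀ (q : H.Walk a b) (x : V), f x = a → (∀ v, G.dist x v < q.length → v ∈ s) →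
      ∃ u, f u = b ∧ ∃ r : G.Walk x u, r.length = q.length := by
  intro q
  induction q with
  | nil => exact fun x hx _ => ⟨x, hx, .nil, rfl⟩
  | cons hadj q ih =>
    intro x hx hs
    subst hx
    obtain ⟨y, hxy, rfl⟩ := hlift x (hs x (by simp)) _ hadj
    have hs' : ∀ v, G.dist y v < q.length → v ∈ s := fun v hv => hs v <| by
      have := hxy.reachable.dist_triangle_left v
      rw [dist_eq_one_iff_adj.mpr hxy] at this
      simp only [Walk.length_cons]
      omega
    obtain ⟨u, hu, r, hr⟩ := ih y rfl hs'
    exact ⟨u, hu, .cons hxy r, by simp [hr]⟩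

section Ball

variable {p : V} {R : ℕ}

theorem dist_map_le_of_dist_add_dist_le (hG : G.Connected)
    (hsimp : ∀ u v, G.dist p u ≤ R → G.dist p v ≤ R → G.Adj u v → H.Adj (f u) (f v))
    {x y : V} (h : G.dist p x + G.dist x y ≤ R) : H.dist (f x) (f y) ≤ G.dist x y := by
  obtain ⟨q, hq⟩ := hG.exists_walk_length_eq_dist x y
  have hball : ∀ v ∈ q.support, v ∈ {v | G.dist p v ≤ R} := fun v hv => show _ ≤ R by
    have := q.dist_le_length_of_mem_support hv
    have := hG.dist_triangle (u := p) (v := x) (w := v)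
    omega
  obtain ⟨q', hq'⟩ := q.exists_map_of_support_subset (fun u hu v hv => hsimp u v hu hv) hball
  have := dist_le q'
  omega

theorem exists_dist_le_of_walk_of_dist_add_length_le (hG : G.Connected)
    (hloc : ∀ v, G.dist p v < R → ∀ w, H.Adj (f v) w → ∃ u, G.Adj v u ∧ f u = w)
    {x : V} {w : W} (q : H.Walk (f x) w) (h : G.dist p x + q.length ≤ R) :
    ∃ u, f u = w ∧ G.dist x u ≤ q.length := by
  have hball : ∀ v, G.dist x v < q.length → v ∈ {v | G.dist p v < R} := fun v hv =>
      show _ < R by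
      have := hG.dist_triangle (u := p) (v := x) (w := v)
      omega
  obtain ⟨u, hu, r, hr⟩ := q.exists_lift hloc x rfl hball
  exact ⟨u, hu, hr ▸ dist_le r⟩

theorem dist_le_dist_map_of_dist_add_dist_le (hG : G.Connected)
    (hinj : Set.InjOn f {v | G.dist p v ≤ R})
    (hloc : ∀ v, G.dist p v < R → ∀ w, H.Adj (f v) w → ∃ u, G.Adj v u ∧ f u = w)
    {x y : V} (hreach : H.Reachable (f x) (f y)) (h : G.dist p x + H.dist (f x) (f y) ≤ R)
    (hy : G.dist p y ≤ R) : G.dist x y ≤ H.dist (f x) (f y) := by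
  obtain ⟨q, hq⟩ := hreach.exists_walk_length_eq_dist
  obtain ⟨u, hu, hxu⟩ := exists_dist_le_of_walk_of_dist_add_length_le hG hloc q (hq ▸ h)
  have hpu : G.dist p u ≤ R := by
    have := hG.dist_triangle (u := p) (v := x) (w := u)
    omega
  obtain rfl : u = y := hinj hpu hy hu
  exact hq ▸ hxu

end Ball

end SimpleGraph

theorem natCast_le_div_three_iff {d R : ℕ} : (d : ℝ) ≤ R / 3 ↔ 3 * d ≤ R := by
  rw [le_div_iff₀ (by norm_num), mul_comm]
  exact_mod_cast Iff.rfl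

theorem ball_isometry_from_local_homeo_general
    {V W : Type*} (G : SimpleGraph V) (H : SimpleGraph W)
    (hG : G.Connected) (hH : H.Connected)
    (p : V) (R : ℕ) (f : V → W)
    -- `f` is simplicial on the ball `B_R(p)`
    (hsimp : ∀ u v, G.dist p u ≤ R → G.dist p v ≤ R → G.Adj u v → H.Adj (f u) (f v))
    -- `f` is injective on `B_R(p)`
    (hinj : Set.InjOn f {v | G.dist p v ≤ R})
    -- `f` is a local homeomorphism at every point of `B_{R-1}(p)`: it maps the star of
    -- each such vertex onto the star of its image
    (hloc : ∀ v, G.dist p v ≤ R - 1 →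
      ∀ w, H.Adj (f v) w → ∃ u, G.Adj v u ∧ f u = w) :
    (∀ x y, (G.dist p x : ℝ) ≤ R / 3 → (G.dist p y : ℝ) ≤ R / 3 →
      H.dist (f x) (f y) = G.dist x y) ∧
    f '' {x | (G.dist p x : ℝ) ≤ R / 3} = {y | (H.dist (f p) y : ℝ) ≤ R / 3} := by
  have hloc' : ∀ v, G.dist p v < R → ∀ w, H.Adj (f v) w → ∃ u, G.Adj v u ∧ f u = w :=
    fun v hv => hloc v (by omega)
  have hiso : ∀ x y, 3 * G.dist p x ≤ R → 3 * G.dist p y ≤ R →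
      H.dist (f x) (f y) = G.dist x y := fun x y hx hy => by
    have hxy : G.dist x y ≤ G.dist x p + G.dist p y := hG.dist_triangle
    rw [dist_comm (u := x) (v := p)] at hxy
    have hle := dist_map_le_of_dist_add_dist_le hG hsimp (x := x) (y := y) (by omega)
    exact hle.antisymm <| dist_le_dist_map_of_dist_add_dist_le hG hinj hloc'
      (hH.preconnected _ _) (by omega) (by omega)
  refine ⟨fun x y hx hy => hiso x y (natCast_le_div_three_iff.mp hx)
    (natCast_le_div_three_iff.mp hy), ?_⟩
  ext w
  simp only [Set.mem_image, Set.mem_ofPred_eq, natCast_le_div_three_iff]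
  constructor
  · rintro ⟨x, hx, rfl⟩
    rwa [hiso p x (by simp) hx]
  · intro hw
    obtain ⟨q, hq⟩ := hH.exists_walk_length_eq_dist (f p) w
    obtain ⟨u, hu, hpu⟩ :=
      exists_dist_le_of_walk_of_dist_add_length_le hG hloc' q (by rw [dist_self]; omega)
    exact ⟨u, by omega, hu⟩

/-- **Lemma.** Let `Γ`, `Ξ` be (connected) metric graphs with path metrics (edges of length 1),
`p ∈ Γ`, and let `R > 3` be an integer.  If `f` is an injective simplicial map defined on the
closed ball `B_R(p)` which is a local homeomorphism at every point of `B_{R−1}(p)`, then `f`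
restricts to an isometry from `B_{R/3}(p)` onto `B_{R/3}(f p)`. -/
theorem ball_isometry_from_local_homeo
    {V W : Type*} (G : SimpleGraph V) (H : SimpleGraph W)
    (hG : G.Connected) (hH : H.Connected)
    (p : V) (R : ℕ) (hR : 3 < R) (f : V → W)
    -- `f` is simplicial on the ball `B_R(p)`
    (hsimp : ∀ u v, G.dist p u ≤ R → G.dist p v ≤ R → G.Adj u v → H.Adj (f u) (f v))
    -- `f` is injective on `B_R(p)`
    (hinj : Set.InjOn f {v | G.dist p v ≤ R})
    -- `f` is a local homeomorphism at every point of `B_{R-1}(p)`: it maps the star of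
    -- each such vertex onto the star of its image
    (hloc : ∀ v, G.dist p v ≤ R - 1 →
      ∀ w, H.Adj (f v) w → ∃ u, G.Adj v u ∧ f u = w) :
    (∀ x y, (G.dist p x : ℝ) ≤ R / 3 → (G.dist p y : ℝ) ≤ R / 3 →
      H.dist (f x) (f y) = G.dist x y) ∧
    f '' {x | (G.dist p x : ℝ) ≤ R / 3} = {y | (H.dist (f p) y : ℝ) ≤ R / 3} :=
  ball_isometry_from_local_homeo_general G H hG hH p R f hsimp hinj hloc
end

section
/- Let Υ be a δ-hyperbolic geodesic space and let P be a parabolic group of isometries of Υ fixing the parabolic point p ∈ ∂Υ. Let ρ be a visual metric on ∂Υ with parameter ε based at a point w, and let x, y ∈ ∂Υ \ {p}. Then there is a constant C > 0 (depending on δ, ε, the visual metric, and x, y) such that for all g ∈ P: ρ(gx, gy) ≤ C · ρ(p, gx) · ρ(p, gy). -/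
open Metric Set

section Prelim

variable {X : Type*} [MetricSpace X]

/-- A geodesic ray in `X`. -/
structure GRay (X : Type*) [MetricSpace X] where
  toFun : ℝ → X
  isRay : IsGeodesicRay toFun

/-- Two rays are asymptotic if they stay at bounded distance from one another. -/
def GRay.asymp (r r' : GRay X) : Prop :=
  ∃ C : ℝ, ∀ t : ℝ, 0 ≤ t → dist (r.toFun t) (r'.toFun t) ≤ C

instance raySetoid (X : Type*) [MetricSpace X] : Setoid (GRay X) where
  r := GRay.asymp
  iseqv := by
    refine ⟨fun r => ⟨0, fun t ht => by simp⟩, ?_, ?_⟩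
    · rintro r r' ⟨C, hC⟩
      exact ⟨C, fun t ht => by rw [dist_comm]; exact hC t ht⟩
    · rintro r r' r'' ⟨C, hC⟩ ⟨C', hC'⟩
      exact ⟨C + C', fun t ht =>
        (dist_triangle _ (r'.toFun t) _).trans (add_le_add (hC t ht) (hC' t ht))⟩

/-- The Gromov boundary of `X`: asymptoty classes of geodesic rays. -/
abbrev GromovBdry (X : Type*) [MetricSpace X] := Quotient (raySetoid X)

/-- The Gromov product of `x` and `y` with respect to `w`. -/
noncomputable def gromovProd (w x y : X) : ℝ :=
  (dist x w + dist y w - dist x y) / 2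

/-- `X` is `δ`-hyperbolic (four-point Gromov product condition). -/
def GromovHyperbolic (X : Type*) [MetricSpace X] (δ : ℝ) : Prop :=
  ∀ x y z w : X, min (gromovProd w x y) (gromovProd w y z) - δ ≤ gromovProd w x z

/-- `X` is `μ`-visible: from every `a` there is a geodesic ray passing within `μ` of `b`. -/
def Visible (X : Type*) [MetricSpace X] (μ : ℝ) : Prop :=
  ∀ a b : X, ∃ r : GRay X, r.toFun 0 = a ∧ ∃ t : ℝ, 0 ≤ t ∧ dist b (r.toFun t) ≤ μ

/-- The Gromov product of two boundary points with respect to `w` (infimum over representing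
rays of the liminf of Gromov products along the rays). -/
noncomputable def bProd (w : X) (ξ η : GromovBdry X) : ℝ :=
  sInf {a | ∃ r r' : GRay X, Quotient.mk (raySetoid X) r = ξ ∧
    Quotient.mk (raySetoid X) r' = η ∧
    a = Filter.liminf (fun t => gromovProd w (r.toFun t) (r'.toFun t)) Filter.atTop}


/-- Post-composition of a geodesic ray with an isometry of `X`. -/
def GRay.comp (g : X ≃ᵢ X) (r : GRay X) : GRay X :=
  ⟨fun t => g (r.toFun t), fun s t hs ht => by
    rw [IsometryEquiv.dist_eq]; exact r.isRay hs ht⟩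

/-- The homeomorphism of the Gromov boundary induced by an isometry of `X`. -/
def bdryMap (g : X ≃ᵢ X) : GromovBdry X → GromovBdry X :=
  Quotient.map (GRay.comp g) (by
    rintro r r' ⟨C, hC⟩
    exact ⟨C, fun t ht => by
      simpa [GRay.comp, IsometryEquiv.dist_eq] using hC t ht⟩)

/-- A Busemann-type function based at the boundary point `ξ`:
`β_ξ(x, y) = limsup_{t→∞} (d(x, r t) − d(y, r t))` along a ray `r` representing `ξ`. -/
noncomputable def busemann (ξ : GromovBdry X) (x y : X) : ℝ :=
  Filter.limsup
    (fun t => dist x ((Quotient.out ξ).toFun t) - dist y ((Quotient.out ξ).toFun t))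
    Filter.atTop

section Helpers
variable {X : Type*} [MetricSpace X]

lemma gp_def (w a b : X) : gromovProd w a b = (dist a w + dist b w - dist a b)/2 := rfl

lemma gp_nonneg (w a b : X) : 0 ≤ gromovProd w a b := by
  have h := dist_triangle a w b
  have : dist w b = dist b w := dist_comm w b
  rw [gp_def]; linarith

lemma gp_le_left (w a b : X) : gromovProd w a b ≤ dist a w := by
  have h := dist_triangle b a w
  have h2 : dist a w = dist a w := rfl
  have h3 : dist b a = dist a b := dist_comm b a
  rw [gp_def]; linarith

lemma gp_comm (w a b : X) : gromovProd w a b = gromovProd w b a := by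
  rw [gp_def, gp_def, dist_comm a b]; ring_nf

lemma gp_lip_right (w a b b' : X) : gromovProd w a b ≤ gromovProd w a b' + dist b b' := by
  have h1 : dist b w ≤ dist b b' + dist b' w := dist_triangle b b' w
  have h2 : dist a b' ≤ dist a b + dist b b' := dist_triangle a b b'
  rw [gp_def, gp_def]; linarith

lemma gp_lip_left (w a a' b : X) : gromovProd w a b ≤ gromovProd w a' b + dist a a' := by
  rw [gp_comm w a b, gp_comm w a' b]; exact gp_lip_right w b a a'

lemma gp_base (w u a b : X) : gromovProd w a b ≤ gromovProd u a b + dist w u := by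
  have h1 : dist a w ≤ dist a u + dist u w := dist_triangle a u w
  have h2 : dist b w ≤ dist b u + dist u w := dist_triangle b u w
  have h3 : dist u w = dist w u := dist_comm u w
  rw [gp_def, gp_def]; linarith

lemma ray_dist_le (r : GRay X) (w : X) {t : ℝ} (ht : 0 ≤ t) :
    dist (r.toFun t) w ≤ t + dist (r.toFun 0) w := by
  have h := dist_triangle (r.toFun t) (r.toFun 0) w
  have h2 : dist (r.toFun t) (r.toFun 0) = t := by
    rw [r.isRay ht le_rfl]; rw [abs_of_nonneg]; ring_nf; linarith [ht]
  linarith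

lemma ray_dist_ge (r : GRay X) (w : X) {t : ℝ} (ht : 0 ≤ t) :
    t - dist (r.toFun 0) w ≤ dist (r.toFun t) w := by
  have h := dist_triangle (r.toFun t) w (r.toFun 0)
  have h2 : dist (r.toFun t) (r.toFun 0) = t := by
    rw [r.isRay ht le_rfl]; rw [abs_of_nonneg]; ring_nf; linarith [ht]
  have h3 : dist w (r.toFun 0) = dist (r.toFun 0) w := dist_comm _ _
  linarith

lemma gp_ray_self (r : GRay X) (w : X) {s t : ℝ} (hs : 0 ≤ s) (ht : 0 ≤ t) :
    min s t - dist (r.toFun 0) w ≤ gromovProd w (r.toFun s) (r.toFun t) := by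
  have hd : dist (r.toFun s) (r.toFun t) = |s - t| := r.isRay hs ht
  have h1 := ray_dist_ge r w hs
  have h2 := ray_dist_ge r w ht
  rw [gp_def, hd]
  rcases le_total s t with h | h
  · rw [abs_of_nonpos (by linarith), min_eq_left h]; linarith
  · rw [abs_of_nonneg (by linarith), min_eq_right h]; linarith

end Helpers
section LiminfHelpers
open Filter

lemma liminf_ge_of_ev {f : ℝ → ℝ} {c U : ℝ} (h : ∀ᶠ t in atTop, c ≤ f t)
    (hb : ∀ᶠ t in atTop, f t ≤ U) : c ≤ Filter.liminf f atTop := by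
  rw [Filter.liminf_eq]
  refine le_csSup ⟨U, ?_⟩ h
  rintro a (ha : ∀ᶠ t in atTop, a ≤ f t)
  obtain ⟨t, h1, h2⟩ := (ha.and hb).exists
  linarith

lemma liminf_le_of_ev {f : ℝ → ℝ} {c : ℝ} (h : ∀ᶠ t in atTop, f t ≤ c) :
    Filter.liminf f atTop ≤ max c 0 := by
  rw [Filter.liminf_eq]
  refine Real.sSup_le ?_ (le_max_right _ _)
  rintro a (ha : ∀ᶠ t in atTop, a ≤ f t)
  obtain ⟨t, h1, h2⟩ := (ha.and h).exists
  exact le_max_of_le_left (by linarith)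

lemma liminf_nonneg {f : ℝ → ℝ} (h : ∀ t, 0 ≤ f t) : 0 ≤ Filter.liminf f atTop := by
  rw [Filter.liminf_eq]
  have h0 : (0:ℝ) ∈ {a | ∀ᶠ t in atTop, a ≤ f t} := Filter.Eventually.of_forall h
  by_cases hb : BddAbove {a : ℝ | ∀ᶠ t in atTop, a ≤ f t}
  · exact le_csSup hb h0
  · rw [Real.sSup_of_not_bddAbove hb]

end LiminfHelpers
section Bfn
open Filter Topology
variable {X : Type*} [MetricSpace X]

noncomputable def Bfn (R : GRay X) (z : X) : ℝ :=
  sSup ((fun t => t - dist z (R.toFun t)) '' Ici 0)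

lemma fB_mono (R : GRay X) (z : X) {s t : ℝ} (hs : 0 ≤ s) (hst : s ≤ t) :
    s - dist z (R.toFun s) ≤ t - dist z (R.toFun t) := by
  have h := dist_triangle z (R.toFun s) (R.toFun t)
  have h2 : dist (R.toFun s) (R.toFun t) = t - s := by
    rw [R.isRay hs (hs.trans hst), abs_of_nonpos (by linarith)]; ring
  linarith

lemma fB_le_dist (R : GRay X) (z : X) {t : ℝ} (ht : 0 ≤ t) :
    t - dist z (R.toFun t) ≤ dist z (R.toFun 0) := by
  have h := dist_triangle (R.toFun 0) z (R.toFun t)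
  have h2 : dist (R.toFun 0) (R.toFun t) = t := by
    rw [R.isRay le_rfl ht, abs_of_nonpos (by linarith)]; ring
  have h3 : dist (R.toFun 0) z = dist z (R.toFun 0) := dist_comm _ _
  linarith

lemma bddAbove_fB (R : GRay X) (z : X) :
    BddAbove ((fun t => t - dist z (R.toFun t)) '' Ici 0) := by
  refine ⟨dist z (R.toFun 0), ?_⟩
  rintro a ⟨t, ht, rfl⟩
  exact fB_le_dist R z ht

lemma le_Bfn (R : GRay X) (z : X) {t : ℝ} (ht : 0 ≤ t) :
    t - dist z (R.toFun t) ≤ Bfn R z :=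
  le_csSup (bddAbove_fB R z) ⟨t, ht, rfl⟩

lemma Bfn_le (R : GRay X) (z : X) {c : ℝ}
    (h : ∀ t, 0 ≤ t → t - dist z (R.toFun t) ≤ c) : Bfn R z ≤ c := by
  refine csSup_le ⟨-dist z (R.toFun 0), 0, self_mem_Ici, by simp⟩ ?_
  rintro a ⟨t, ht, rfl⟩
  exact h t ht

lemma Bfn_le_dist (R : GRay X) (z : X) : Bfn R z ≤ dist z (R.toFun 0) :=
  Bfn_le R z fun t ht => fB_le_dist R z ht

lemma Bfn_exists_near (R : GRay X) (z : X) {η : ℝ} (hη : 0 < η) :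
    ∃ t₀, 0 ≤ t₀ ∧ Bfn R z - η < t₀ - dist z (R.toFun t₀) := by
  have hne : ((fun t => t - dist z (R.toFun t)) '' Ici 0).Nonempty := ⟨_, 0, self_mem_Ici, rfl⟩
  obtain ⟨a, ⟨t₀, ht₀, rfl⟩, ha⟩ := exists_lt_of_lt_csSup hne (by linarith : Bfn R z - η < Bfn R z)
  exact ⟨t₀, ht₀, ha⟩

lemma tendsto_fB (R : GRay X) (z : X) :
    Tendsto (fun t => t - dist z (R.toFun t)) atTop (𝓝 (Bfn R z)) := by
  rw [Metric.tendsto_atTop]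
  intro η hη
  obtain ⟨t₀, ht₀, hnear⟩ := Bfn_exists_near R z (half_pos hη)
  refine ⟨t₀, fun t ht => ?_⟩
  have h1 : t₀ - dist z (R.toFun t₀) ≤ t - dist z (R.toFun t) := fB_mono R z ht₀ ht
  have h2 : t - dist z (R.toFun t) ≤ Bfn R z := le_Bfn R z (ht₀.trans ht)
  rw [Real.dist_eq, abs_of_nonpos (by linarith)]
  linarith

lemma busemann_eq_Bfn (p : GromovBdry X) (a b : X) :
    busemann p a b = Bfn (Quotient.out p) b - Bfn (Quotient.out p) a := by
  have h : Tendsto (fun t => dist a ((Quotient.out p).toFun t) - dist b ((Quotient.out p).toFun t))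
      atTop (𝓝 (Bfn (Quotient.out p) b - Bfn (Quotient.out p) a)) := by
    have := (tendsto_fB (Quotient.out p) b).sub (tendsto_fB (Quotient.out p) a)
    convert this using 2 with t
    ring
  exact h.limsup_eq

lemma Bfn_lip (R : GRay X) (z z' : X) : Bfn R z ≤ Bfn R z' + dist z z' := by
  refine Bfn_le R z fun t ht => ?_
  have h := dist_triangle z' z (R.toFun t)
  have h2 := le_Bfn R z' ht
  have h3 : dist z' z = dist z z' := dist_comm _ _
  linarith

end Bfn
section NonAsymp
variable {X : Type*} [MetricSpace X]

lemma gp_le_right (w a b : X) : gromovProd w a b ≤ dist b w := by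
  rw [gp_comm]; exact gp_le_left w b a

lemma nonasymp_prod_bdd {δ : ℝ} (hδ : 0 ≤ δ) (hhyp : GromovHyperbolic X δ) (w : X)
    (ra rb : GRay X) (hne : Quotient.mk (raySetoid X) ra ≠ Quotient.mk (raySetoid X) rb) :
    ∃ M : ℝ, 0 ≤ M ∧ ∀ s t : ℝ, 0 ≤ s → 0 ≤ t →
      gromovProd w (ra.toFun s) (rb.toFun t) ≤ M := by
  set da := dist (ra.toFun 0) w with hda
  set db := dist (rb.toFun 0) w with hdb
  have hda0 : 0 ≤ da := dist_nonneg
  have hdb0 : 0 ≤ db := dist_nonneg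
  -- diagonal bound
  have hdiag : ∃ M : ℝ, ∀ s : ℝ, 0 ≤ s → gromovProd w (ra.toFun s) (rb.toFun s) ≤ M := by
    by_contra hcon
    push_neg at hcon
    apply hne
    apply Quotient.sound
    refine ⟨3 * (da + db) + 4 * δ, fun t ht => ?_⟩
    -- show the diagonal product is ≥ t - (da+db) - 2δ
    obtain ⟨s, hs0, hfs⟩ := hcon (t + (da + db))
    have hs0' : 0 ≤ s := hs0
    have hsge : t ≤ s := by
      have h1 : gromovProd w (ra.toFun s) (rb.toFun s) ≤ s + da :=
        (gp_le_left _ _ _).trans (ray_dist_le ra w hs0')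
      linarith
    have key : t - (da + db) - 2 * δ ≤ gromovProd w (ra.toFun t) (rb.toFun t) := by
      have h1 := hhyp (ra.toFun t) (ra.toFun s) (rb.toFun t) w
      have h2 := hhyp (ra.toFun s) (rb.toFun s) (rb.toFun t) w
      have h3 := gp_ray_self ra w ht hs0'
      have h4 := gp_ray_self rb w hs0' ht
      rw [min_eq_left hsge] at h3
      rw [min_eq_right hsge] at h4
      have h5 : t - (da + db) - δ ≤ gromovProd w (ra.toFun s) (rb.toFun t) := by
        rcases le_total (gromovProd w (ra.toFun s) (rb.toFun s))
          (gromovProd w (rb.toFun s) (rb.toFun t)) with hm | hm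
        · rw [min_eq_left hm] at h2; linarith
        · rw [min_eq_right hm] at h2; linarith
      rcases le_total (gromovProd w (ra.toFun t) (ra.toFun s))
        (gromovProd w (ra.toFun s) (rb.toFun t)) with hm | hm
      · rw [min_eq_left hm] at h1; linarith
      · rw [min_eq_right hm] at h1; linarith
    have hdd : dist (ra.toFun t) (rb.toFun t)
        = dist (ra.toFun t) w + dist (rb.toFun t) w - 2 * gromovProd w (ra.toFun t) (rb.toFun t) := by
      rw [gp_def]; ring
    have h6 := ray_dist_le ra w ht
    have h7 := ray_dist_le rb w ht
    rw [hdd]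
    linarith
  obtain ⟨M, hM⟩ := hdiag
  refine ⟨max (M + δ + 2 * (da + db)) 0, le_max_right _ _, fun s t hs ht => ?_⟩
  have h1 := hhyp (ra.toFun s) (rb.toFun t) (rb.toFun s) w
  have h2 := gp_ray_self rb w ht hs
  rcases le_or_gt (min s t) (M + δ + db) with hc | hc
  · -- small times: product small anyway
    have h3 : gromovProd w (ra.toFun s) (rb.toFun t) ≤ min s t + da + db := by
      rcases min_cases s t with ⟨hmin, hle⟩ | ⟨hmin, hle⟩
      · have := (gp_le_left w (ra.toFun s) (rb.toFun t)).trans (ray_dist_le ra w hs)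
        rw [hmin]; linarith
      · have := (gp_le_right w (ra.toFun s) (rb.toFun t)).trans (ray_dist_le rb w ht)
        rw [hmin]; linarith
    refine le_max_of_le_left ?_
    linarith
  · -- big times: use hyperbolicity
    have h4 : M + δ < gromovProd w (rb.toFun t) (rb.toFun s) := by
      have hmc : min s t = min t s := min_comm s t
      have hdb' : db = dist (rb.toFun 0) w := hdb
      linarith
    have h5 := hM s hs
    rcases le_total (gromovProd w (ra.toFun s) (rb.toFun t))
      (gromovProd w (rb.toFun t) (rb.toFun s)) with hm | hm
    · rw [min_eq_left hm] at h1
      refine le_max_of_le_left ?_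
      linarith
    · rw [min_eq_right hm] at h1
      refine le_max_of_le_left ?_
      linarith

end NonAsymp
section Quot
variable {X : Type*} [MetricSpace X]

example (g : X ≃ᵢ X) : g⁻¹ = g.symm := rfl
example (g h : X ≃ᵢ X) (x : X) : (g * h) x = g (h x) := rfl

lemma bdryMap_mk (g : X ≃ᵢ X) (r : GRay X) :
    bdryMap g (Quotient.mk (raySetoid X) r) = Quotient.mk (raySetoid X) (GRay.comp g r) := rfl

lemma bdryMap_symm_apply (g : X ≃ᵢ X) (ξ : GromovBdry X) :
    bdryMap g.symm (bdryMap g ξ) = ξ := by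
  induction ξ using Quotient.ind with
  | _ r =>
    rw [bdryMap_mk, bdryMap_mk]
    apply Quotient.sound
    refine ⟨0, fun t ht => ?_⟩
    simp [GRay.comp]

lemma bdryMap_inj (g : X ≃ᵢ X) {ξ η : GromovBdry X} (h : bdryMap g ξ = bdryMap g η) : ξ = η := by
  have := congrArg (bdryMap g.symm) h
  rwa [bdryMap_symm_apply, bdryMap_symm_apply] at this

end Quot

section BProd
open Filter
variable {X : Type*} [MetricSpace X]

lemma liminf_gp_nonneg (w : X) (f f' : ℝ → X) :
    0 ≤ Filter.liminf (fun t => gromovProd w (f t) (f' t)) Filter.atTop :=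
  liminf_nonneg fun t => gp_nonneg w (f t) (f' t)

lemma bProd_bddBelow (w : X) (ξ η : GromovBdry X) :
    BddBelow {a | ∃ r r' : GRay X, Quotient.mk (raySetoid X) r = ξ ∧
      Quotient.mk (raySetoid X) r' = η ∧
      a = Filter.liminf (fun t => gromovProd w (r.toFun t) (r'.toFun t)) Filter.atTop} := by
  refine ⟨0, ?_⟩
  rintro a ⟨r, r', -, -, rfl⟩
  exact liminf_gp_nonneg w _ _

lemma bProd_le_liminf (w : X) (ξ η : GromovBdry X) (r r' : GRay X)
    (h1 : Quotient.mk (raySetoid X) r = ξ) (h2 : Quotient.mk (raySetoid X) r' = η) :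
    bProd w ξ η ≤ Filter.liminf (fun t => gromovProd w (r.toFun t) (r'.toFun t)) Filter.atTop :=
  csInf_le (bProd_bddBelow w ξ η) ⟨r, r', h1, h2, rfl⟩

lemma le_bProd (w : X) (ξ η : GromovBdry X) {c : ℝ}
    (h : ∀ r r' : GRay X, Quotient.mk (raySetoid X) r = ξ → Quotient.mk (raySetoid X) r' = η →
      c ≤ Filter.liminf (fun t => gromovProd w (r.toFun t) (r'.toFun t)) Filter.atTop) :
    c ≤ bProd w ξ η := by
  refine le_csInf ⟨_, Quotient.out ξ, Quotient.out η, Quotient.out_eq ξ, Quotient.out_eq η, rfl⟩ ?_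
  rintro a ⟨r, r', h1, h2, rfl⟩
  exact h r r' h1 h2

lemma bProd_nonneg (w : X) (ξ η : GromovBdry X) : 0 ≤ bProd w ξ η :=
  le_bProd w ξ η fun r r' _ _ => liminf_gp_nonneg w _ _

end BProd
section KeyLemmas
open Filter
variable {X : Type*} [MetricSpace X]

lemma min_drop {A B c : ℝ} (h : min A B ≤ c) (hA : c < A) : B ≤ c := by
  rcases min_cases A B with ⟨he, h2⟩ | ⟨he, h2⟩ <;> linarith

lemma min_drop' {A B c : ℝ} (h : min A B ≤ c) (hB : c < B) : A ≤ c := by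
  rcases min_cases A B with ⟨he, h2⟩ | ⟨he, h2⟩ <;> linarith

/-- Key claim: the Gromov product of `u = g⁻¹ w` and points on the ray `rx`, seen from the
basepoint `rx 0`, is uniformly bounded, provided the Busemann level of `u` is at least that
of `w` minus `C₀`. -/
lemma key_K1 {δ : ℝ} (hδ : 0 ≤ δ) (hhyp : GromovHyperbolic X δ)
    (R rx : GRay X) (w u : X) (C₀ Mx t₀ : ℝ) (ht₀0 : 0 ≤ t₀)
    (hMx : ∀ t, 0 ≤ t → Bfn R (rx.toFun t) ≤ Mx - t)
    (happ : Bfn R (rx.toFun 0) - 1 ≤ t₀ - dist (rx.toFun 0) (R.toFun t₀))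
    (hu : Bfn R w - C₀ ≤ Bfn R u) :
    ∀ s, 0 ≤ s → gromovProd (rx.toFun 0) u (rx.toFun s) ≤
      max (Bfn R (rx.toFun 0) - Bfn R w + C₀ + 2 * ((Mx - Bfn R (rx.toFun 0) + 1)/2 + δ))
        ((Mx - Bfn R (rx.toFun 0) + 1)/2 + δ) := by
  set ox := rx.toFun 0 with hox
  set mx := Bfn R ox with hmx
  set K0 := (Mx - mx + 1)/2 with hK0
  intro s hs
  -- `gp ox (R t) (rx s) ≤ K0` for `t ≥ t₀`
  have hprod : ∀ t, t₀ ≤ t → gromovProd ox (R.toFun t) (rx.toFun s) ≤ K0 := by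
    intro t ht
    have ht0 : 0 ≤ t := ht₀0.trans ht
    have h1 : mx - 1 ≤ t - dist ox (R.toFun t) :=
      happ.trans (fB_mono R ox ht₀0 ht)
    have h2 : t - dist (rx.toFun s) (R.toFun t) ≤ Mx - s :=
      (le_Bfn R (rx.toFun s) ht0).trans (hMx s hs)
    have h3 : dist (rx.toFun s) ox = s := by
      rw [hox, rx.isRay hs le_rfl, abs_of_nonneg (by linarith)]; ring
    have c1 : dist (R.toFun t) ox = dist ox (R.toFun t) := dist_comm _ _
    have c2 : dist (R.toFun t) (rx.toFun s) = dist (rx.toFun s) (R.toFun t) := dist_comm _ _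
    rw [gp_def, c1, c2, h3]
    linarith
  by_cases hcase : gromovProd ox u (rx.toFun s) ≤ K0 + δ
  · exact hcase.trans (le_max_right _ _)
  push_neg at hcase
  -- then `gp ox (R t) u ≤ K0 + δ` for all `t ≥ t₀`
  have hRu : ∀ t, t₀ ≤ t → gromovProd ox (R.toFun t) u ≤ K0 + δ := by
    intro t ht
    have hh := hhyp (R.toFun t) u (rx.toFun s) ox
    have := hprod t ht
    by_contra hcon
    push_neg at hcon
    have : K0 + δ < min (gromovProd ox (R.toFun t) u) (gromovProd ox u (rx.toFun s)) :=
      lt_min hcon hcase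
    linarith
  -- hence `Bfn R u ≤ mx - dist u ox + 2(K0+δ)`
  have hBu : Bfn R u ≤ mx - dist u ox + 2 * (K0 + δ) := by
    refine Bfn_le R u fun T hT => ?_
    have htt : T ≤ max T t₀ := le_max_left _ _
    have ht0' : 0 ≤ max T t₀ := le_trans hT htt
    have h4 : T - dist u (R.toFun T) ≤ max T t₀ - dist u (R.toFun (max T t₀)) :=
      fB_mono R u hT htt
    set t := max T t₀ with hts
    have h5 : gromovProd ox (R.toFun t) u ≤ K0 + δ := hRu t (le_max_right _ _)
    have h6 : t - dist ox (R.toFun t) ≤ mx := le_Bfn R ox ht0'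
    have c1 : dist (R.toFun t) ox = dist ox (R.toFun t) := dist_comm _ _
    have c2 : dist (R.toFun t) u = dist u (R.toFun t) := dist_comm _ _
    rw [gp_def, c1, c2] at h5
    linarith
  -- so `dist u ox` is bounded, and the product is at most that distance
  have hfin : dist u ox ≤ mx - Bfn R w + C₀ + 2 * (K0 + δ) := by linarith
  exact le_max_of_le_left ((gp_le_left ox u (rx.toFun s)).trans hfin)

/-- The liminf of Gromov products along any pair of rays asymptotic to `rA`, `rB` is bounded
below in terms of a uniform lower bound along `rA`, `rB` themselves. -/
lemma liminf_pair_ge {δ : ℝ} (hδ : 0 ≤ δ) (hhyp : GromovHyperbolic X δ) (w : X)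
    (rA rB r₁ r₂ : GRay X) (h₁ : GRay.asymp r₁ rA) (h₂ : GRay.asymp r₂ rB)
    {L Z : ℝ} (hL : ∀ s, 0 ≤ s → L ≤ gromovProd w (rA.toFun s) (rB.toFun s))
    (hZ : ∀ s, 0 ≤ s → gromovProd w (rA.toFun s) (rB.toFun s) ≤ Z) :
    L - 2*δ ≤ Filter.liminf (fun t => gromovProd w (r₁.toFun t) (r₂.toFun t)) Filter.atTop := by
  obtain ⟨C₁, hC₁⟩ := h₁
  obtain ⟨C₂, hC₂⟩ := h₂
  have hC₁0 : 0 ≤ C₁ := le_trans dist_nonneg (hC₁ 0 le_rfl)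
  have hC₂0 : 0 ≤ C₂ := le_trans dist_nonneg (hC₂ 0 le_rfl)
  set d1 := dist (r₁.toFun 0) w with hd1
  set d2 := dist (r₂.toFun 0) w with hd2
  have hd10 : 0 ≤ d1 := dist_nonneg
  have hd20 : 0 ≤ d2 := dist_nonneg
  -- generic comparison: `gp w (r₁ t) (rA s) ≥ min t s - d1 - C₁`
  have hcomp1 : ∀ s t : ℝ, 0 ≤ s → 0 ≤ t →
      min t s - d1 - C₁ ≤ gromovProd w (r₁.toFun t) (rA.toFun s) := by
    intro s t hs ht
    have h := gp_lip_right w (r₁.toFun t) (r₁.toFun s) (rA.toFun s)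
    have h2 := gp_ray_self r₁ w ht hs
    have h3 := hC₁ s hs
    linarith
  have hcomp2 : ∀ s t : ℝ, 0 ≤ s → 0 ≤ t →
      min t s - d2 - C₂ ≤ gromovProd w (r₂.toFun t) (rB.toFun s) := by
    intro s t hs ht
    have h := gp_lip_right w (r₂.toFun t) (r₂.toFun s) (rB.toFun s)
    have h2 := gp_ray_self r₂ w ht hs
    have h3 := hC₂ s hs
    linarith
  -- eventual upper bound
  have hub : ∀ᶠ t in atTop, gromovProd w (r₁.toFun t) (r₂.toFun t) ≤ Z + 2*δ := by
    set s₁ := max (max (Z + 2*δ + 1 + d1 + C₁) (Z + 2*δ + 1 + d2 + C₂)) 0 with hs₁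
    have hs₁0 : 0 ≤ s₁ := le_max_right _ _
    rw [eventually_atTop]
    refine ⟨s₁, fun t ht => ?_⟩
    have ht0 : 0 ≤ t := hs₁0.trans ht
    have hA := hhyp (rA.toFun s₁) (r₁.toFun t) (rB.toFun s₁) w
    have hB := hhyp (r₁.toFun t) (r₂.toFun t) (rB.toFun s₁) w
    have m1 : Z + 2*δ + 1 ≤ gromovProd w (rA.toFun s₁) (r₁.toFun t) := by
      have := hcomp1 s₁ t hs₁0 ht0
      have hc : gromovProd w (rA.toFun s₁) (r₁.toFun t)
          = gromovProd w (r₁.toFun t) (rA.toFun s₁) := gp_comm _ _ _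
      have hmin : min t s₁ = s₁ := min_eq_right ht
      have h1 : Z + 2*δ + 1 + d1 + C₁ ≤ s₁ := le_trans (le_max_left _ _) (le_max_left _ _)
      linarith
    have m2 : Z + 2*δ + 1 ≤ gromovProd w (r₂.toFun t) (rB.toFun s₁) := by
      have := hcomp2 s₁ t hs₁0 ht0
      have hmin : min t s₁ = s₁ := min_eq_right ht
      have h1 : Z + 2*δ + 1 + d2 + C₂ ≤ s₁ := le_trans (le_max_right _ _) (le_max_left _ _)
      linarith
    have hZ1 : gromovProd w (rA.toFun s₁) (rB.toFun s₁) ≤ Z := hZ s₁ hs₁0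
    have q1 : gromovProd w (r₁.toFun t) (rB.toFun s₁) ≤ Z + δ := by
      refine min_drop (by linarith : min (gromovProd w (rA.toFun s₁) (r₁.toFun t))
        (gromovProd w (r₁.toFun t) (rB.toFun s₁)) ≤ Z + δ) (by linarith)
    refine min_drop' (c := Z + 2*δ)
      (by linarith : min (gromovProd w (r₁.toFun t) (r₂.toFun t))
        (gromovProd w (r₂.toFun t) (rB.toFun s₁)) ≤ Z + 2*δ) (by linarith)
  -- eventual lower bound
  have hlb : ∀ᶠ t in atTop, L - 2*δ ≤ gromovProd w (r₁.toFun t) (r₂.toFun t) := by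
    set s₂ := max (max (L + d1 + C₁) (L + d2 + C₂)) 0 with hs₂
    have hs₂0 : 0 ≤ s₂ := le_max_right _ _
    rw [eventually_atTop]
    refine ⟨s₂, fun t ht => ?_⟩
    have ht0 : 0 ≤ t := hs₂0.trans ht
    have hA := hhyp (r₁.toFun t) (rA.toFun s₂) (r₂.toFun t) w
    have hB := hhyp (rA.toFun s₂) (rB.toFun s₂) (r₂.toFun t) w
    have hmin : min t s₂ = s₂ := min_eq_right ht
    have m1 : L ≤ gromovProd w (r₁.toFun t) (rA.toFun s₂) := by
      have := hcomp1 s₂ t hs₂0 ht0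
      have h1 : L + d1 + C₁ ≤ s₂ := le_trans (le_max_left _ _) (le_max_left _ _)
      linarith
    have m2 : L ≤ gromovProd w (rB.toFun s₂) (r₂.toFun t) := by
      have := hcomp2 s₂ t hs₂0 ht0
      have hc : gromovProd w (rB.toFun s₂) (r₂.toFun t)
          = gromovProd w (r₂.toFun t) (rB.toFun s₂) := gp_comm _ _ _
      have h1 : L + d2 + C₂ ≤ s₂ := le_trans (le_max_right _ _) (le_max_left _ _)
      linarith
    have hL1 : L ≤ gromovProd w (rA.toFun s₂) (rB.toFun s₂) := hL s₂ hs₂0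
    have q1 : L - δ ≤ gromovProd w (rA.toFun s₂) (r₂.toFun t) := by
      have := le_min hL1 m2
      linarith
    have q2 : L - δ ≤ min (gromovProd w (r₁.toFun t) (rA.toFun s₂))
        (gromovProd w (rA.toFun s₂) (r₂.toFun t)) := le_min (by linarith) q1
    linarith
  exact liminf_ge_of_ev hlb hub

end KeyLemmas
lemma neg_mul_le_neg_mul {ε a b : ℝ} (hε : 0 ≤ ε) (h : b ≤ a) : -ε * a ≤ -ε * b := by
  nlinarith

lemma harg_helper {ε A B C D : ℝ} (hε : 0 ≤ ε) (h : B + C - A ≤ D) :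
    -ε * A ≤ ε * D + -ε * B + -ε * C := by nlinarith
/-- **Lemma.** Let `Υ` be a proper geodesic `δ`-hyperbolic space, `P` a parabolic group of
isometries of `Υ` fixing the parabolic point `p ∈ ∂Υ`, `ρ` a visual metric on `∂Υ` with
parameter `ε` based at `w`, and `x, y ∈ ∂Υ \ {p}`.  Then there is `C > 0` such that for all
`g ∈ P`: `ρ(gx, gy) ≤ C · ρ(p, gx) · ρ(p, gy)`. -/
theorem parabolic_contraction
    {X : Type u} [MetricSpace X] [ProperSpace X]
    (δ : ℝ) (hδ : 0 < δ) (hgeo : GeodesicSpace X) (hhyp : GromovHyperbolic X δ)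
    (P : Subgroup (X ≃ᵢ X)) (p : GromovBdry X)
    -- `P` fixes the parabolic point `p` ...
    (hfix : ∀ g ∈ P, bdryMap g p = p)
    -- ... and quasi-preserves horoballs based at `p`
    (hpar : ∃ C₀ : ℝ, 0 ≤ C₀ ∧ ∀ (x : X), ∀ g ∈ P, |busemann p x (g x)| ≤ C₀)
    -- a visual metric `ρ` on `∂Υ` with parameter `ε` based at `w`
    (w : X) (ε : ℝ) (hε : 0 < ε) (ρ : GromovBdry X → GromovBdry X → ℝ)
    (hρ0 : ∀ ξ, ρ ξ ξ = 0)
    (hρ : ∃ κ : ℝ, 0 < κ ∧ ∀ ξ η : GromovBdry X, ξ ≠ η →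
      κ⁻¹ * Real.exp (-ε * bProd w ξ η) ≤ ρ ξ η ∧
      ρ ξ η ≤ κ * Real.exp (-ε * bProd w ξ η))
    (x y : GromovBdry X) (hx : x ≠ p) (hy : y ≠ p) :
    ∃ C : ℝ, 0 < C ∧ ∀ g ∈ P,
      ρ (bdryMap g x) (bdryMap g y) ≤ C * ρ p (bdryMap g x) * ρ p (bdryMap g y) := by
  obtain ⟨C₀, hC₀, hparb⟩ := hpar
  obtain ⟨κ, hκ, hρκ⟩ := hρ
  have hδ0 : (0:ℝ) ≤ δ := le_of_lt hδ
  have hgne : ∀ g ∈ P, ∀ ξ : GromovBdry X, ξ ≠ p → p ≠ bdryMap g ξ := by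
    intro g hg ξ hξ h
    apply hξ
    have h2 : bdryMap g ξ = bdryMap g p := by rw [← h, hfix g hg]
    exact bdryMap_inj g h2
  by_cases hxy : x = y
  · subst hxy
    refine ⟨1, one_pos, fun g hg => ?_⟩
    rw [hρ0]
    have hne := hgne g hg x hx
    have hlow := (hρκ p (bdryMap g x) hne).1
    have hpos : 0 < ρ p (bdryMap g x) := lt_of_lt_of_le (by positivity) hlow
    nlinarith [hpos]
  -- main case
  set R := Quotient.out p with hR
  set rx := Quotient.out x with hrx
  set ry := Quotient.out y with hry
  have hRp : Quotient.mk (raySetoid X) R = p := Quotient.out_eq p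
  have hxq : Quotient.mk (raySetoid X) rx = x := Quotient.out_eq x
  have hyq : Quotient.mk (raySetoid X) ry = y := Quotient.out_eq y
  have hBpar : ∀ z : X, ∀ g ∈ P, |Bfn R (g z) - Bfn R z| ≤ C₀ := by
    intro z g hg
    have h := hparb z g hg
    rwa [busemann_eq_Bfn] at h
  -- uniform constants (independent of `g`)
  obtain ⟨Mx', hMx'0, hMx'⟩ := nonasymp_prod_bdd hδ0 hhyp w rx R (by rw [hxq, hRp]; exact hx)
  obtain ⟨My', hMy'0, hMy'⟩ := nonasymp_prod_bdd hδ0 hhyp w ry R (by rw [hyq, hRp]; exact hy)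
  obtain ⟨Mxy, hMxy0, hMxy⟩ := nonasymp_prod_bdd hδ0 hhyp w rx ry (by rw [hxq, hyq]; exact hxy)
  set dx0 := dist (rx.toFun 0) w with hdx0
  set dy0 := dist (ry.toFun 0) w with hdy0
  set d0 := dist (R.toFun 0) w with hd0
  set MX := dx0 + d0 + 2 * Mx' with hMXdef
  set MY := dy0 + d0 + 2 * My' with hMYdef
  have hMX : ∀ t, 0 ≤ t → Bfn R (rx.toFun t) ≤ MX - t := by
    intro t ht
    refine Bfn_le R _ fun T hT => ?_
    have hgp := hMx' t T ht hT
    have h1 := ray_dist_ge rx w ht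
    have h2 := ray_dist_ge R w hT
    rw [gp_def] at hgp
    linarith
  have hMY : ∀ t, 0 ≤ t → Bfn R (ry.toFun t) ≤ MY - t := by
    intro t ht
    refine Bfn_le R _ fun T hT => ?_
    have hgp := hMy' t T ht hT
    have h1 := ray_dist_ge ry w ht
    have h2 := ray_dist_ge R w hT
    rw [gp_def] at hgp
    linarith
  obtain ⟨t0x, ht0x0, ht0x⟩ := Bfn_exists_near R (rx.toFun 0) one_pos
  obtain ⟨t0y, ht0y0, ht0y⟩ := Bfn_exists_near R (ry.toFun 0) one_pos
  obtain ⟨t1, ht10, ht1⟩ := Bfn_exists_near R w one_pos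
  set cKx := max (Bfn R (rx.toFun 0) - Bfn R w + C₀ + 2 * ((MX - Bfn R (rx.toFun 0) + 1)/2 + δ))
      ((MX - Bfn R (rx.toFun 0) + 1)/2 + δ) with hcKx
  set cKy := max (Bfn R (ry.toFun 0) - Bfn R w + C₀ + 2 * ((MY - Bfn R (ry.toFun 0) + 1)/2 + δ))
      ((MY - Bfn R (ry.toFun 0) + 1)/2 + δ) with hcKy
  set cx := (MX + C₀ - Bfn R w + 1)/2 with hcx
  set cy := (MY + C₀ - Bfn R w + 1)/2 with hcy
  set Θ := max cx 0 + max cy 0 + (cKx + cKy + (dx0 + dy0)/2) + 2*δ with hΘ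
  refine ⟨κ^3 * Real.exp (ε * Θ), by positivity, fun g hg => ?_⟩
  -- per-`g` data
  have hginv : g⁻¹ ∈ P := inv_mem hg
  set gu := g.symm w with hgu
  have hBu : Bfn R w - C₀ ≤ Bfn R gu := by
    have h := hBpar w g⁻¹ hginv
    have hguw : (g⁻¹ : X ≃ᵢ X) w = gu := rfl
    rw [hguw] at h
    have habs := (abs_le.mp h).1
    linarith [habs]
  have hgdist : ∀ a : X, dist (g a) w = dist a gu := by
    intro a
    conv_lhs => rw [← g.apply_symm_apply w]
    rw [g.isometry.dist_eq]
  have hKx : ∀ s, 0 ≤ s → gromovProd (rx.toFun 0) gu (rx.toFun s) ≤ cKx :=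
    key_K1 hδ0 hhyp R rx w gu C₀ MX t0x ht0x0 hMX (le_of_lt ht0x) hBu
  have hKy : ∀ s, 0 ≤ s → gromovProd (ry.toFun 0) gu (ry.toFun s) ≤ cKy :=
    key_K1 hδ0 hhyp R ry w gu C₀ MY t0y ht0y0 hMY (le_of_lt ht0y) hBu
  set Dx := dist gu (rx.toFun 0) with hDx
  set Dy := dist gu (ry.toFun 0) with hDy
  have hDx0 : 0 ≤ Dx := dist_nonneg
  have hDy0 : 0 ≤ Dy := dist_nonneg
  -- distance lower bounds
  have hdistx : ∀ s, 0 ≤ s → Dx + s - 2 * cKx ≤ dist (rx.toFun s) gu := by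
    intro s hs
    have h := hKx s hs
    have h3 : dist (rx.toFun s) (rx.toFun 0) = s := by
      rw [rx.isRay hs le_rfl, abs_of_nonneg (by linarith)]; ring
    have c1 : dist gu (rx.toFun s) = dist (rx.toFun s) gu := dist_comm _ _
    rw [gp_def, c1, h3] at h
    linarith
  have hdisty : ∀ s, 0 ≤ s → Dy + s - 2 * cKy ≤ dist (ry.toFun s) gu := by
    intro s hs
    have h := hKy s hs
    have h3 : dist (ry.toFun s) (ry.toFun 0) = s := by
      rw [ry.isRay hs le_rfl, abs_of_nonneg (by linarith)]; ring
    have c1 : dist gu (ry.toFun s) = dist (ry.toFun s) gu := dist_comm _ _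
    rw [gp_def, c1, h3] at h
    linarith
  set Lg := (Dx + Dy)/2 - (cKx + cKy + (dx0 + dy0)/2) with hLgdef
  -- lower bound along the translated canonical rays
  have hLg : ∀ s, 0 ≤ s →
      Lg ≤ gromovProd w ((GRay.comp g rx).toFun s) ((GRay.comp g ry).toFun s) := by
    intro s hs
    have e1 : (GRay.comp g rx).toFun s = g (rx.toFun s) := rfl
    have e2 : (GRay.comp g ry).toFun s = g (ry.toFun s) := rfl
    rw [e1, e2, gp_def, hgdist, hgdist, g.isometry.dist_eq]
    have h1 := hdistx s hs
    have h2 := hdisty s hs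
    have h3 : dist (rx.toFun s) (ry.toFun s) ≤ dist (rx.toFun s) w + dist (ry.toFun s) w := by
      have := dist_triangle (rx.toFun s) w (ry.toFun s)
      have hc : dist w (ry.toFun s) = dist (ry.toFun s) w := dist_comm _ _
      linarith
    have h4 := ray_dist_le rx w hs
    have h5 := ray_dist_le ry w hs
    linarith
  -- upper bound along the translated canonical rays
  have hZg : ∀ s, 0 ≤ s →
      gromovProd w ((GRay.comp g rx).toFun s) ((GRay.comp g ry).toFun s) ≤ Mxy + dist gu w := by
    intro s hs
    have e1 : (GRay.comp g rx).toFun s = g (rx.toFun s) := rfl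
    have e2 : (GRay.comp g ry).toFun s = g (ry.toFun s) := rfl
    have heq : gromovProd w ((GRay.comp g rx).toFun s) ((GRay.comp g ry).toFun s)
        = gromovProd gu (rx.toFun s) (ry.toFun s) := by
      rw [e1, e2, gp_def, gp_def, hgdist, hgdist, g.isometry.dist_eq]
    rw [heq]
    exact (gp_base gu w _ _).trans (by linarith [hMxy s s hs hs])
  have hgx : Quotient.mk (raySetoid X) (GRay.comp g rx) = bdryMap g x := by
    rw [← hxq]; exact (bdryMap_mk g rx).symm
  have hgy : Quotient.mk (raySetoid X) (GRay.comp g ry) = bdryMap g y := by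
    rw [← hyq]; exact (bdryMap_mk g ry).symm
  -- lower bound for `bProd w (gx) (gy)`
  have hbplow : Lg - 2*δ ≤ bProd w (bdryMap g x) (bdryMap g y) := by
    refine le_bProd w _ _ fun r₁ r₂ h1 h2 => ?_
    have a1 : GRay.asymp r₁ (GRay.comp g rx) := Quotient.exact (h1.trans hgx.symm)
    have a2 : GRay.asymp r₂ (GRay.comp g ry) := Quotient.exact (h2.trans hgy.symm)
    exact liminf_pair_ge hδ0 hhyp w (GRay.comp g rx) (GRay.comp g ry) r₁ r₂ a1 a2 hLg hZg
  -- upper bounds for `bProd w p (gx)`, `bProd w p (gy)`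
  have hbpux : bProd w p (bdryMap g x) ≤ max (Dx/2 + cx) 0 := by
    refine (bProd_le_liminf w p _ R (GRay.comp g rx) hRp hgx).trans (liminf_le_of_ev ?_)
    rw [Filter.eventually_atTop]
    refine ⟨max t1 0, fun t ht => ?_⟩
    have ht0 : 0 ≤ t := le_trans (le_max_right _ _) ht
    have ht1' : t1 ≤ t := le_trans (le_max_left _ _) ht
    have e1 : (GRay.comp g rx).toFun t = g (rx.toFun t) := rfl
    rw [e1, gp_def]
    have h1 : Bfn R w - 1 ≤ t - dist w (R.toFun t) := (le_of_lt ht1).trans (fB_mono R w ht10 ht1')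
    have h2 : t - dist (g (rx.toFun t)) (R.toFun t) ≤ Bfn R (g (rx.toFun t)) :=
      le_Bfn R _ ht0
    have h3 : Bfn R (g (rx.toFun t)) ≤ Bfn R (rx.toFun t) + C₀ := by
      have := (abs_le.mp (hBpar (rx.toFun t) g hg)).2
      linarith
    have h4 : Bfn R (rx.toFun t) ≤ MX - t := hMX t ht0
    have h5 : dist (g (rx.toFun t)) w ≤ t + Dx := by
      rw [hgdist]
      have := dist_triangle (rx.toFun t) (rx.toFun 0) gu
      have hc : dist (rx.toFun t) (rx.toFun 0) = t := by
        rw [rx.isRay ht0 le_rfl, abs_of_nonneg (by linarith)]; ring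
      have hc2 : dist (rx.toFun 0) gu = Dx := dist_comm _ _
      linarith
    have c1 : dist (R.toFun t) w = dist w (R.toFun t) := dist_comm _ _
    have c2 : dist (R.toFun t) (g (rx.toFun t)) = dist (g (rx.toFun t)) (R.toFun t) :=
      dist_comm _ _
    rw [c1, c2, hcx]
    linarith
  have hbpuy : bProd w p (bdryMap g y) ≤ max (Dy/2 + cy) 0 := by
    refine (bProd_le_liminf w p _ R (GRay.comp g ry) hRp hgy).trans (liminf_le_of_ev ?_)
    rw [Filter.eventually_atTop]
    refine ⟨max t1 0, fun t ht => ?_⟩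
    have ht0 : 0 ≤ t := le_trans (le_max_right _ _) ht
    have ht1' : t1 ≤ t := le_trans (le_max_left _ _) ht
    have e1 : (GRay.comp g ry).toFun t = g (ry.toFun t) := rfl
    rw [e1, gp_def]
    have h1 : Bfn R w - 1 ≤ t - dist w (R.toFun t) := (le_of_lt ht1).trans (fB_mono R w ht10 ht1')
    have h2 : t - dist (g (ry.toFun t)) (R.toFun t) ≤ Bfn R (g (ry.toFun t)) :=
      le_Bfn R _ ht0
    have h3 : Bfn R (g (ry.toFun t)) ≤ Bfn R (ry.toFun t) + C₀ := by
      have := (abs_le.mp (hBpar (ry.toFun t) g hg)).2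
      linarith
    have h4 : Bfn R (ry.toFun t) ≤ MY - t := hMY t ht0
    have h5 : dist (g (ry.toFun t)) w ≤ t + Dy := by
      rw [hgdist]
      have := dist_triangle (ry.toFun t) (ry.toFun 0) gu
      have hc : dist (ry.toFun t) (ry.toFun 0) = t := by
        rw [ry.isRay ht0 le_rfl, abs_of_nonneg (by linarith)]; ring
      have hc2 : dist (ry.toFun 0) gu = Dy := dist_comm _ _
      linarith
    have c1 : dist (R.toFun t) w = dist w (R.toFun t) := dist_comm _ _
    have c2 : dist (R.toFun t) (g (ry.toFun t)) = dist (g (ry.toFun t)) (R.toFun t) :=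
      dist_comm _ _
    rw [c1, c2, hcy]
    linarith
  -- put everything together
  have hneq1 : p ≠ bdryMap g x := hgne g hg x hx
  have hneq2 : p ≠ bdryMap g y := hgne g hg y hy
  have hneq3 : bdryMap g x ≠ bdryMap g y := fun h => hxy (bdryMap_inj g h)
  have e1 : κ⁻¹ * Real.exp (-ε * max (Dx/2 + cx) 0) ≤ ρ p (bdryMap g x) :=
    le_trans (mul_le_mul_of_nonneg_left
      (Real.exp_le_exp.mpr (neg_mul_le_neg_mul hε.le hbpux))
      (inv_nonneg.mpr hκ.le)) (hρκ p (bdryMap g x) hneq1).1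
  have e2 : κ⁻¹ * Real.exp (-ε * max (Dy/2 + cy) 0) ≤ ρ p (bdryMap g y) :=
    le_trans (mul_le_mul_of_nonneg_left
      (Real.exp_le_exp.mpr (neg_mul_le_neg_mul hε.le hbpuy))
      (inv_nonneg.mpr hκ.le)) (hρκ p (bdryMap g y) hneq2).1
  have e3 : ρ (bdryMap g x) (bdryMap g y) ≤ κ * Real.exp (-ε * (Lg - 2*δ)) :=
    le_trans (hρκ (bdryMap g x) (bdryMap g y) hneq3).2
      (mul_le_mul_of_nonneg_left
        (Real.exp_le_exp.mpr (neg_mul_le_neg_mul hε.le hbplow)) hκ.le)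
  -- arithmetic of the constants
  have hmaxx : max (Dx/2 + cx) 0 ≤ Dx/2 + max cx 0 := by
    refine max_le (by linarith [le_max_left cx (0:ℝ)]) ?_
    have := le_max_right cx (0:ℝ)
    linarith
  have hmaxy : max (Dy/2 + cy) 0 ≤ Dy/2 + max cy 0 := by
    refine max_le (by linarith [le_max_left cy (0:ℝ)]) ?_
    have := le_max_right cy (0:ℝ)
    linarith
  have harg : -ε * (Lg - 2*δ) ≤ ε * Θ + (-ε * max (Dx/2 + cx) 0) + (-ε * max (Dy/2 + cy) 0) := by
    have h5 : max (Dx/2 + cx) 0 + max (Dy/2 + cy) 0 - (Lg - 2*δ) ≤ Θ := by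
      rw [hΘ, hLgdef]
      linarith
    exact harg_helper hε.le h5
  have e4 : κ * Real.exp (-ε * (Lg - 2*δ)) ≤
      (κ^3 * Real.exp (ε * Θ)) * (κ⁻¹ * Real.exp (-ε * max (Dx/2 + cx) 0)) *
        (κ⁻¹ * Real.exp (-ε * max (Dy/2 + cy) 0)) := by
    have hexp := Real.exp_le_exp.mpr harg
    have hrw : (κ^3 * Real.exp (ε * Θ)) * (κ⁻¹ * Real.exp (-ε * max (Dx/2 + cx) 0)) *
        (κ⁻¹ * Real.exp (-ε * max (Dy/2 + cy) 0)) =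
        κ * Real.exp (ε * Θ + (-ε * max (Dx/2 + cx) 0) + (-ε * max (Dy/2 + cy) 0)) := by
      rw [Real.exp_add, Real.exp_add]
      field_simp
    rw [hrw]
    exact mul_le_mul_of_nonneg_left hexp hκ.le
  have hposx : 0 < κ⁻¹ * Real.exp (-ε * max (Dx/2 + cx) 0) := by positivity
  have hposy : 0 < κ⁻¹ * Real.exp (-ε * max (Dy/2 + cy) 0) := by positivity
  have hC : (0:ℝ) < κ^3 * Real.exp (ε * Θ) := by positivity
  have e5 : (κ^3 * Real.exp (ε * Θ)) * (κ⁻¹ * Real.exp (-ε * max (Dx/2 + cx) 0)) *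
        (κ⁻¹ * Real.exp (-ε * max (Dy/2 + cy) 0)) ≤
      κ^3 * Real.exp (ε * Θ) * ρ p (bdryMap g x) * ρ p (bdryMap g y) := by
    have s1 : (κ^3 * Real.exp (ε * Θ)) * (κ⁻¹ * Real.exp (-ε * max (Dx/2 + cx) 0)) ≤
        κ^3 * Real.exp (ε * Θ) * ρ p (bdryMap g x) :=
      mul_le_mul_of_nonneg_left e1 hC.le
    refine le_trans (mul_le_mul_of_nonneg_right s1 hposy.le) ?_
    refine mul_le_mul_of_nonneg_left e2 ?_
    have : 0 < ρ p (bdryMap g x) := lt_of_lt_of_le hposx e1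
    positivity
  linarith [e3, e4, e5]
end Prelim
end

section
/- Let M be a compact metric space and suppose there exists L ≥ 1 such that any two points p, q ∈ M can be joined by a finite chain of points p = p₁, …, pₙ = q with diam({p₁,…,pₙ}) ≤ L·d(p,q) and d(pᵢ, pᵢ₊₁) ≤ d(p,q)/2 for each i. Then M is 5L-linearly connected. -/
open Metric List

set_option linter.unusedSectionVars false


/-- A metric space is `L`-linearly connected if every pair of points `{x, y}` is contained in a
connected subset of diameter at most `L * d(x,y)`. -/
def LinearlyConnectedConst (M : Type*) [MetricSpace M] (L : ℝ) : Prop :=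
  ∀ x y : M, ∃ J : Set M, x ∈ J ∧ y ∈ J ∧ IsConnected J ∧
    EMetric.diam J ≤ ENNReal.ofReal (L * dist x y)

section Aux
variable {M : Type*} [MetricSpace M]

/-- Propagation of a property along a chain. -/
lemma chain_prop_aux {α : Type*} {R : α → α → Prop} {P : α → Prop} :
    ∀ (t : List α) (a : α), List.Chain R a t →
      (∀ p ∈ a :: t, ∀ q ∈ a :: t, R p q → (P p ↔ P q)) →
      ∀ p ∈ a :: t, (P p ↔ P a)
  | [], a, _, _, p, hp => by
      simp only [mem_singleton] at hp; subst hp; rfl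
  | b :: t, a, hch, hpres, p, hp => by
      simp only [List.Chain] at hch
      rw [List.chain_cons] at hch
      rcases List.mem_cons.1 hp with rfl | hp'
      · rfl
      · have IH := chain_prop_aux t b hch.2
          (fun p hp q hq hR => hpres p (by simp [List.mem_cons] at hp ⊢; tauto)
            q (by simp [List.mem_cons] at hq ⊢; tauto) hR) p hp'
        exact IH.trans ((hpres a (by simp) b (by simp) hch.1).symm)

/-- Refine a chain by replacing each consecutive pair by a sub-chain. -/
def refineList (g : M → M → List M) : List M → List M
  | [] => []
  | [a] => [a]
  | a :: b :: t => g a b ++ refineList g (b :: t)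

variable {g : M → M → List M} {L : ℝ}

lemma refineList_ne_nil (hg : ∀ p q, (g p q).head? = some p) :
    ∀ l : List M, l ≠ [] → refineList g l ≠ []
  | [], h => absurd rfl h
  | [a], _ => by simp [refineList]
  | a :: b :: t, _ => by
      simp only [refineList, ne_eq, List.append_eq_nil_iff]
      intro ⟨h1, _⟩
      have := hg a b; rw [h1] at this; simp at this

lemma refineList_head? (hg : ∀ p q, (g p q).head? = some p) :
    ∀ l : List M, (refineList g l).head? = l.head?
  | [] => rfl
  | [a] => rfl
  | a :: b :: t => by
      have h1 : (g a b).head? = some a := hg a b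
      simp [refineList, List.head?_append, h1]

lemma refineList_getLast? (hg : ∀ p q, (g p q).head? = some p) :
    ∀ l : List M, (refineList g l).getLast? = l.getLast?
  | [] => rfl
  | [a] => rfl
  | a :: b :: t => by
      have h2 := refineList_getLast? hg (b :: t)
      have hne : refineList g (b :: t) ≠ [] := refineList_ne_nil hg _ (by simp)
      rw [refineList, List.getLast?_append, h2]
      cases h : (b :: t : List M).getLast? with
      | none => simp at h
      | some c => simp [Option.or, h.symm]
      
lemma refineList_mem (hg : ∀ p q, (g p q).head? = some p) :
    ∀ l : List M, ∀ r ∈ l, r ∈ refineList g l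
  | [c], r, hr => by simpa [refineList] using hr
  | a :: b :: t, r, hr => by
      rcases List.mem_cons.1 hr with rfl | hr'
      · refine List.mem_append.2 (Or.inl (List.mem_of_mem_head? ?_))
        rw [hg r b]; rfl
      · exact List.mem_append.2 (Or.inr (refineList_mem hg (b :: t) r hr'))

end Aux

section Aux2

variable {M : Type*} [MetricSpace M] {g : M → M → List M} {L : ℝ}

lemma refineList_chain' (hg : ∀ p q, (g p q).head? = some p)
    (hg2 : ∀ p q, (g p q).getLast? = some q)
    (hg3 : ∀ p q, List.Chain' (fun u v => dist u v ≤ dist p q / 2) (g p q))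
    {e : ℝ} (he : 0 ≤ e) :
    ∀ l : List M, List.Chain' (fun u v => dist u v ≤ e) l →
      List.Chain' (fun u v => dist u v ≤ e / 2) (refineList g l)
  | [], _ => by simp [refineList]; exact List.IsChain.nil
  | [a], _ => by simp [refineList]; exact List.IsChain.singleton _
  | a :: b :: t, hch => by
      simp only [List.Chain'] at hch
      rw [List.isChain_cons_cons] at hch
      have hab : dist a b ≤ e := hch.1
      have c1 : List.Chain' (fun u v => dist u v ≤ e / 2) (g a b) :=
        (hg3 a b).imp fun {u v} h => h.trans (by linarith)
      have c2 := refineList_chain' hg hg2 hg3 he (b :: t) hch.2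
      refine c1.append c2 ?_
      intro u hu v hv
      rw [hg2 a b] at hu
      rw [refineList_head? hg] at hv
      simp only [Option.mem_def, Option.some.injEq] at hu hv
      subst hu
      have : v = b := by simpa using hv.symm
      subst this
      simp; linarith

lemma refineList_prox (hg : ∀ p q, (g p q).head? = some p)
    (hg4 : ∀ p q, ∀ r ∈ g p q, dist r p ≤ L * dist p q)
    (hLpos : 0 ≤ L) {e : ℝ} (he : 0 ≤ e) :
    ∀ l : List M, List.Chain' (fun u v => dist u v ≤ e) l →
      ∀ r ∈ refineList g l, ∃ s ∈ l, dist r s ≤ L * e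
  | [], _, r, hr => by simp [refineList] at hr
  | [a], _, r, hr => by
      simp [refineList] at hr
      exact ⟨a, by simp, by simp [hr, mul_nonneg hLpos he]⟩
  | a :: b :: t, hch, r, hr => by
      simp only [List.Chain'] at hch
      rw [List.isChain_cons_cons] at hch
      rcases List.mem_append.1 hr with h | h
      · exact ⟨a, by simp, (hg4 a b r h).trans
          (mul_le_mul_of_nonneg_left hch.1 hLpos)⟩
      · obtain ⟨s, hs, hds⟩ := refineList_prox hg hg4 hLpos he (b :: t) hch.2 r h
        exact ⟨s, List.mem_cons_of_mem a hs, hds⟩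

end Aux2
lemma key {M : Type*} [MetricSpace M] [CompactSpace M] {L : ℝ} (hL : 1 ≤ L)
    (g : M → M → List M)
    (hg : ∀ p q, (g p q).head? = some p)
    (hg2 : ∀ p q, (g p q).getLast? = some q)
    (hg3 : ∀ p q, List.Chain' (fun u v => dist u v ≤ dist p q / 2) (g p q))
    (hg4 : ∀ p q, ∀ r ∈ g p q, dist r p ≤ L * dist p q) :
    LinearlyConnectedConst M (5 * L) := by
  have hL0 : (0:ℝ) ≤ L := le_trans zero_le_one hL
  intro x y
  set d := dist x y with hd
  have hd0 : 0 ≤ d := dist_nonneg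
  let l : ℕ → List M := fun k => Nat.rec [x, y] (fun _ ih => refineList g ih) k
  have hl0 : l 0 = [x, y] := rfl
  have hlsucc : ∀ k, l (k+1) = refineList g (l k) := fun k => rfl
  have hhead : ∀ k, (l k).head? = some x := by
    intro k; induction k with
    | zero => rfl
    | succ k ih => rw [hlsucc, refineList_head? hg, ih]
  have hlast : ∀ k, (l k).getLast? = some y := by
    intro k; induction k with
    | zero => rfl
    | succ k ih => rw [hlsucc, refineList_getLast? hg, ih]
  have hmesh : ∀ k, List.Chain' (fun u v => dist u v ≤ d * (1/2 : ℝ)^k) (l k) := by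
    intro k; induction k with
    | zero => simp [hl0, List.Chain', List.isChain_cons_cons]; exact le_of_eq hd.symm
    | succ k ih =>
        rw [hlsucc]
        have h2 := refineList_chain' hg hg2 hg3 (by positivity) (l k) ih
        exact h2.imp fun {u v} h => h.trans_eq (by ring)
  have hmono' : ∀ k m, k ≤ m → ∀ r ∈ l k, r ∈ l m := by
    intro k m hkm
    induction m, hkm using Nat.le_induction with
    | base => exact fun r hr => hr
    | succ m hm ih =>
        intro r hr
        rw [hlsucc]
        exact refineList_mem hg (l m) r (ih r hr)
  have hprox : ∀ k, ∀ r ∈ l k, ∃ s, (s = x ∨ s = y) ∧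
      dist r s ≤ 2*L*d - 2*L*d*(1/2 : ℝ)^k := by
    intro k; induction k with
    | zero =>
        intro r hr
        rcases (by simpa [hl0] using hr : r = x ∨ r = y) with rfl | rfl
        · exact ⟨r, Or.inl rfl, by simp⟩
        · exact ⟨r, Or.inr rfl, by simp⟩
    | succ k ih =>
        intro r hr
        rw [hlsucc] at hr
        obtain ⟨s', hs', hds'⟩ :=
          refineList_prox hg hg4 hL0 (by positivity) (l k) (hmesh k) r hr
        obtain ⟨s, hsxy, hds⟩ := ih s' hs'
        refine ⟨s, hsxy, ?_⟩
        have htri := dist_triangle r s' s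
        have h2 : L * (d * (1/2 : ℝ)^k) + (2*L*d - 2*L*d*(1/2 : ℝ)^k)
            = 2*L*d - 2*L*d*(1/2 : ℝ)^(k+1) := by ring
        linarith
  set D : Set M := {p | ∃ k, p ∈ l k} with hDdef
  have hxD : x ∈ D := ⟨0, by simp [hl0]⟩
  have hyD : y ∈ D := ⟨0, by simp [hl0]⟩
  refine ⟨closure D, subset_closure hxD, subset_closure hyD,
    ⟨⟨x, subset_closure hxD⟩, ?_⟩, ?_⟩
  · -- IsPreconnected (closure D)
    rintro U V hU hV hcov ⟨u, huJ, huU⟩ ⟨v, hvJ, hvV⟩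
    by_contra hdisj
    rw [Set.not_nonempty_iff_eq_empty] at hdisj
    set J := closure D with hJ
    set A := J ∩ Vᶜ with hA
    set B := J ∩ Uᶜ with hB
    have hnotboth : ∀ p ∈ J, ¬(p ∈ U ∧ p ∈ V) := by
      intro p hp hpuv
      have : p ∈ J ∩ (U ∩ V) := ⟨hp, hpuv.1, hpuv.2⟩
      rw [hdisj] at this; exact this
    have hAB : ∀ p ∈ J, p ∈ A ∨ p ∈ B := by
      intro p hp
      rcases hcov hp with h | h
      · exact Or.inl ⟨hp, fun hv => hnotboth p hp ⟨h, hv⟩⟩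
      · exact Or.inr ⟨hp, fun hu => hnotboth p hp ⟨hu, h⟩⟩
    have hdisjAB : ∀ p, p ∈ A → p ∈ B → False := by
      intro p hpA hpB
      rcases hcov hpA.1 with h | h
      · exact hpB.2 h
      · exact hpA.2 h
    have hJcl : IsClosed J := isClosed_closure
    have hAcl : IsClosed A := hJcl.inter hV.isClosed_compl
    have hBcl : IsClosed B := hJcl.inter hU.isClosed_compl
    have huA : u ∈ A := ⟨huJ, fun hv => hnotboth u huJ ⟨huU, hv⟩⟩
    have hvB : v ∈ B := ⟨hvJ, fun hu => hnotboth v hvJ ⟨hu, hvV⟩⟩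
    -- points of D in A and in B
    obtain ⟨a, haU, haD⟩ : (U ∩ D).Nonempty := _root_.mem_closure_iff.1 huJ U hU huU
    obtain ⟨b, hbV, hbD⟩ : (V ∩ D).Nonempty := _root_.mem_closure_iff.1 hvJ V hV hvV
    have haJ : a ∈ J := subset_closure haD
    have hbJ : b ∈ J := subset_closure hbD
    have haA : a ∈ A := ⟨haJ, fun hv => hnotboth a haJ ⟨haU, hv⟩⟩
    have hbB : b ∈ B := ⟨hbJ, fun hu => hnotboth b hbJ ⟨hu, hbV⟩⟩
    -- separation
    obtain ⟨a₀, ha₀, hminon⟩ := (hAcl.isCompact).exists_isMinOn ⟨u, huA⟩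
      (continuous_infDist_pt B).continuousOn
    have ha₀B : a₀ ∉ B := fun h => hdisjAB a₀ ha₀ h
    have hδpos : 0 < infDist a₀ B := (hBcl.notMem_iff_infDist_pos ⟨v, hvB⟩).1 ha₀B
    set δ := infDist a₀ B with hδ
    have hsep : ∀ p ∈ A, ∀ q ∈ B, δ ≤ dist p q := by
      intro p hp q hq
      exact le_trans (isMinOn_iff.1 hminon p hp) (infDist_le_dist_of_mem hq)
    -- choose a fine level N
    obtain ⟨ka, haka⟩ := haD
    obtain ⟨kb, hbkb⟩ := hbD
    obtain ⟨n₀, hn₀⟩ := exists_pow_lt_of_lt_one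
      (div_pos hδpos (by linarith : (0:ℝ) < d + 1)) (by norm_num : (1/2 : ℝ) < 1)
    set N := max n₀ (max ka kb) with hN
    have haN : a ∈ l N := hmono' ka N (le_max_of_le_right (le_max_left _ _)) a haka
    have hbN : b ∈ l N := hmono' kb N (le_max_of_le_right (le_max_right _ _)) b hbkb
    have hmeshN : d * (1/2 : ℝ)^N < δ := by
      have h1 : (1/2 : ℝ)^N ≤ (1/2 : ℝ)^n₀ :=
        pow_le_pow_of_le_one (by norm_num) (by norm_num) (le_max_left _ _)
      have h2 : d * (1/2 : ℝ)^N ≤ (d+1) * (1/2 : ℝ)^n₀ := by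
        apply mul_le_mul (by linarith) h1 (by positivity) (by linarith)
      have h3 : (d+1) * (1/2 : ℝ)^n₀ < (d+1) * (δ / (d+1)) :=
        mul_lt_mul_of_pos_left hn₀ (by linarith)
      have h4 : (d+1) * (δ / (d+1)) = δ := by field_simp
      linarith
    -- chain propagation along l N
    have hpres : ∀ p ∈ l N, ∀ q ∈ l N, dist p q ≤ d * (1/2 : ℝ)^N → (p ∈ A ↔ q ∈ A) := by
      intro p hp q hq hpq
      have hpJ : p ∈ J := subset_closure ⟨N, hp⟩
      have hqJ : q ∈ J := subset_closure ⟨N, hq⟩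
      constructor
      · intro hpA
        rcases hAB q hqJ with h | h
        · exact h
        · exact absurd (lt_of_le_of_lt hpq hmeshN) (not_lt.2 (hsep p hpA q h))
      · intro hqA
        rcases hAB p hpJ with h | h
        · exact h
        · exact absurd (lt_of_le_of_lt (dist_comm p q ▸ hpq) hmeshN)
            (not_lt.2 (hsep q hqA p h))
    obtain ⟨t, hlt⟩ : ∃ t, l N = x :: t := by
      have hh := hhead N
      cases hln : l N with
      | nil => rw [hln] at hh; simp at hh
      | cons a' t =>
          rw [hln] at hh
          simp only [List.head?_cons, Option.some.injEq] at hh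
          exact ⟨t, by rw [hh]⟩
    have hch : List.Chain (fun u v => dist u v ≤ d * (1/2 : ℝ)^N) x t := by
      have h5 := hmesh N; rw [hlt] at h5; exact h5
    have hall := chain_prop_aux t x hch (by rw [← hlt]; exact hpres)
    have h6 : a ∈ A ↔ x ∈ A := hall a (hlt ▸ haN)
    have h7 : b ∈ A ↔ x ∈ A := hall b (hlt ▸ hbN)
    exact hdisjAB b ((h7.2 (h6.1 haA))) hbB
  · -- diameter bound
    have hdiamD : ∀ p ∈ D, ∀ q ∈ D, dist p q ≤ 5 * L * d := by
      intro p hp q hq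
      obtain ⟨kp, hpk⟩ := hp
      obtain ⟨kq, hqk⟩ := hq
      obtain ⟨sp, hsp, hdp⟩ := hprox kp p hpk
      obtain ⟨sq, hsq, hdq⟩ := hprox kq q hqk
      have e1 : (0:ℝ) ≤ 2*L*d*(1/2 : ℝ)^kp := by positivity
      have e2 : (0:ℝ) ≤ 2*L*d*(1/2 : ℝ)^kq := by positivity
      have hsps : dist sp sq ≤ d := by
        rcases hsp with rfl | rfl <;> rcases hsq with rfl | rfl
        · simp [hd0]
        · exact le_of_eq hd.symm
        · rw [dist_comm]
        · simp [hd0]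
      have htri := dist_triangle4 p sp sq q
      have hq' : dist sq q = dist q sq := dist_comm _ _
      have hLd : d ≤ L * d := by nlinarith
      linarith
    rw [EMetric.diam, EMetric.diam_closure]
    refine EMetric.diam_le fun p hp q hq => ?_
    rw [edist_dist]
    exact ENNReal.ofReal_le_ofReal (hdiamD p hp q hq)
/-- **Lemma (GMS 6.19).** If in a compact metric space `M` every pair of points `p, q` can be
joined by a chain `p = p₀, …, pₙ = q` of diameter at most `L·d(p,q)` with consecutive points
at distance at most `d(p,q)/2`, then `M` is `5L`-linearly connected. -/
theorem chain_condition_implies_linearly_connected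
    (M : Type*) [MetricSpace M] [CompactSpace M] (L : ℝ) (hL : 1 ≤ L)
    (hchain : ∀ p q : M, ∃ (n : ℕ) (c : ℕ → M), c 0 = p ∧ c n = q ∧
      EMetric.diam (c '' {i | i ≤ n}) ≤ ENNReal.ofReal (L * dist p q) ∧
      ∀ i < n, dist (c i) (c (i + 1)) ≤ dist p q / 2) :
    LinearlyConnectedConst M (5 * L) := by
  have hL0 : (0:ℝ) ≤ L := le_trans zero_le_one hL
  have hg : ∀ p q : M, ∃ lc : List M, lc.head? = some p ∧ lc.getLast? = some q ∧
      List.Chain' (fun u v => dist u v ≤ dist p q / 2) lc ∧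
      ∀ r ∈ lc, dist r p ≤ L * dist p q := by
    intro p q
    obtain ⟨n, c, hc0, hcn, hdiam, hstep⟩ := hchain p q
    refine ⟨(List.range (n+1)).map c, ?_, ?_, ?_, ?_⟩
    · rw [List.range_succ_eq_map]; simp [hc0]
    · rw [List.range_succ, List.map_append]
      simp [List.getLast?_concat, hcn]
    · simp only [List.Chain']
      rw [List.isChain_map, List.isChain_range_succ]
      exact hstep
    · intro r hr
      simp only [List.mem_map, List.mem_range] at hr
      obtain ⟨i, hi, rfl⟩ := hr
      have h1 : c i ∈ c '' {j | j ≤ n} := ⟨i, Nat.lt_succ_iff.1 hi, rfl⟩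
      have h2 : c 0 ∈ c '' {j | j ≤ n} := ⟨0, Nat.zero_le n, rfl⟩
      have h3 := (EMetric.edist_le_diam_of_mem h1 h2).trans hdiam
      rw [edist_le_ofReal (mul_nonneg hL0 dist_nonneg)] at h3
      rwa [hc0] at h3
  choose g hg1 hg2 hg3 hg4 using hg
  exact key hL g hg1 hg2 hg3 hg4
end

section
/- Let (Mᵢ, dᵢ) be a sequence of L-linearly connected metric spaces that weakly Gromov–Hausdorff converge to a compact metric space M (i.e., there are λ ≥ 1 and (λ, εᵢ)-quasi-isometries M → Mᵢ with εᵢ → 0). Then M is linearly connected; in particular M is connected and locally path-connected. -/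
open Metric

/-- `f : M → N` is a `(lam, ε)`-quasi-isometry: bi-Lipschitz up to additive error `ε` and with
`ε`-dense image. -/
def IsQuasiIsometry {M N : Type*} [MetricSpace M] [MetricSpace N]
    (lam ε : ℝ) (f : M → N) : Prop :=
  (∀ x y : M, lam⁻¹ * dist x y - ε ≤ dist (f x) (f y) ∧ dist (f x) (f y) ≤ lam * dist x y + ε) ∧
  ∀ z : N, ∃ x : M, dist z (f x) ≤ ε

namespace WGHAux

open scoped Classical
open Set Filter

theorem exists_chain_of_isPreconnected {X : Type*} [MetricSpace X] {J : Set X}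
    (hJ : IsPreconnected J) {a b : X} (ha : a ∈ J) (hb : b ∈ J) {δ : ℝ} (hδ : 0 < δ) :
    ∃ m : ℕ, 1 ≤ m ∧ ∃ w : ℕ → X, w 0 = a ∧ (∀ j, m ≤ j → w j = b) ∧
      (∀ j, dist (w j) (w (j + 1)) ≤ δ) ∧ (∀ j, w j ∈ J) := by
  set Reach : X → Prop := fun p => ∃ m : ℕ, 1 ≤ m ∧ ∃ w : ℕ → X, w 0 = a ∧
      (∀ j, m ≤ j → w j = p) ∧ (∀ j, dist (w j) (w (j + 1)) ≤ δ) ∧ (∀ j, w j ∈ J) with hReach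
  suffices hrb : Reach b by exact hrb
  have hext : ∀ p q, Reach p → q ∈ J → dist p q ≤ δ → Reach q := by
    rintro p q ⟨m, hm, w, hw0, hwt, hwg, hwJ⟩ hqJ hpq
    refine ⟨m + 1, by omega, fun j => if j ≤ m then w j else q, ?_, ?_, ?_, ?_⟩
    · simpa using hw0
    · intro j hj
      beta_reduce
      rw [if_neg (by omega)]
    · intro j
      beta_reduce
      rcases lt_trichotomy j m with h | h | h
      · rw [if_pos (by omega : j ≤ m), if_pos (by omega : j + 1 ≤ m)]; exact hwg j
      · subst h
        rw [if_pos le_rfl, if_neg (by omega), hwt j le_rfl]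
        exact hpq
      · rw [if_neg (by omega : ¬ j ≤ m), if_neg (by omega : ¬ j + 1 ≤ m)]
        simpa using hδ.le
    · intro j
      beta_reduce
      by_cases h : j ≤ m
      · rw [if_pos h]; exact hwJ j
      · rw [if_neg h]; exact hqJ
  have hbase : Reach a :=
    ⟨1, le_rfl, fun _ => a, rfl, fun _ _ => rfl, fun _ => by simpa using hδ.le,
      fun _ => ha⟩
  by_contra hnb
  have hu : IsOpen (⋃ p ∈ {p : X | Reach p}, ball p δ) :=
    isOpen_biUnion fun _ _ => isOpen_ball
  have hv : IsOpen (⋃ p ∈ {p : X | p ∈ J ∧ ¬ Reach p}, ball p δ) :=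
    isOpen_biUnion fun _ _ => isOpen_ball
  have hcover : J ⊆ (⋃ p ∈ {p : X | Reach p}, ball p δ) ∪
      (⋃ p ∈ {p : X | p ∈ J ∧ ¬ Reach p}, ball p δ) := by
    intro p hp
    by_cases h : Reach p
    · exact Or.inl (mem_biUnion h (mem_ball_self hδ))
    · exact Or.inr (mem_biUnion ⟨hp, h⟩ (mem_ball_self hδ))
  have h1 : (J ∩ ⋃ p ∈ {p : X | Reach p}, ball p δ).Nonempty :=
    ⟨a, ha, mem_biUnion hbase (mem_ball_self hδ)⟩
  have h2 : (J ∩ ⋃ p ∈ {p : X | p ∈ J ∧ ¬ Reach p}, ball p δ).Nonempty :=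
    ⟨b, hb, mem_biUnion ⟨hb, hnb⟩ (mem_ball_self hδ)⟩
  obtain ⟨c, hcJ, hcu, hcv⟩ := hJ _ _ hu hv hcover h1 h2
  obtain ⟨p, hp, hcp⟩ := by simpa using hcu
  obtain ⟨q, ⟨hqJ, hqn⟩, hcq⟩ := by simpa using hcv
  have hrc : Reach c := hext p c hp hcJ (by rw [dist_comm]; exact hcp.le)
  exact hqn (hext c q hrc hqJ hcq.le)

theorem exists_connected_of_chains {M : Type*} [MetricSpace M] [CompactSpace M] {C : ℝ}
    (hC : 1 ≤ C)
    (hch : ∀ x y : M, ∀ δ : ℝ, 0 < δ → ∃ m : ℕ, ∃ w : ℕ → M, w 0 = x ∧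
      (∀ j, m ≤ j → w j = y) ∧ (∀ j, dist (w j) (w (j + 1)) ≤ δ) ∧
      (∀ j, dist x (w j) ≤ C * dist x y))
    (x y : M) :
    ∃ J : Set M, x ∈ J ∧ y ∈ J ∧ IsConnected J ∧ J ⊆ closedBall x (C * dist x y) := by
  set R := C * dist x y with hR
  have hR0 : 0 ≤ R := mul_nonneg (by linarith) dist_nonneg
  set K := closedBall x R with hK
  have hxK : x ∈ K := mem_closedBall_self hR0
  have hyK : y ∈ K := by
    rw [hK, mem_closedBall, dist_comm]
    nlinarith [dist_nonneg (x := x) (y := y)]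
  haveI : CompactSpace K := isCompact_iff_compactSpace.mp (isClosed_closedBall.isCompact)
  suffices hy : y ∈ connectedComponentIn K x by
    exact ⟨connectedComponentIn K x, mem_connectedComponentIn hxK, hy,
      isConnected_connectedComponentIn_iff.mpr hxK, connectedComponentIn_subset K x⟩
  by_contra hny
  rw [connectedComponentIn_eq_image hxK] at hny
  have hyK' : (⟨y, hyK⟩ : K) ∉ connectedComponent (⟨x, hxK⟩ : K) := fun h =>
    hny ⟨_, h, rfl⟩
  rw [connectedComponent_eq_iInter_isClopen] at hyK'
  simp only [mem_iInter, not_forall] at hyK'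
  obtain ⟨⟨Z, hZcl, hxZ⟩, hyZ⟩ := hyK'
  set A : Set M := Subtype.val '' Z with hA
  set B : Set M := Subtype.val '' Zᶜ with hB
  have hAc : IsCompact A := (hZcl.isClosed.isCompact).image continuous_subtype_val
  have hBc : IsCompact B := (hZcl.compl.isClosed.isCompact).image continuous_subtype_val
  have hdisj : Disjoint A B :=
    Set.disjoint_image_of_injective Subtype.val_injective disjoint_compl_right
  obtain ⟨η, hη, hsep⟩ := hdisj.exists_thickenings hAc hBc.isClosed
  have hfar : ∀ p ∈ A, ∀ q ∈ B, η ≤ dist p q := by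
    intro p hp q hq
    by_contra h
    push_neg at h
    exact (Set.disjoint_left.mp hsep)
      ((Metric.mem_thickening_iff).mpr ⟨p, hp, by rwa [dist_comm]⟩)
      (self_subset_thickening hη B hq)
  obtain ⟨m, w, hw0, hwt, hwg, hws⟩ := hch x y (η / 2) (half_pos hη)
  have hwK : ∀ j, w j ∈ K := fun j => by
    rw [hK, mem_closedBall, dist_comm]; exact hws j
  have hABK : ∀ p, (hp : p ∈ K) → p ∈ A ∨ p ∈ B := by
    intro p hp
    rcases em ((⟨p, hp⟩ : K) ∈ Z) with h | h
    · exact Or.inl ⟨_, h, rfl⟩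
    · exact Or.inr ⟨_, h, rfl⟩
  have hxA : x ∈ A := ⟨⟨x, hxK⟩, hxZ, rfl⟩
  have hyB : y ∈ B := ⟨⟨y, hyK⟩, hyZ, rfl⟩
  have hex : ∃ j, w j ∈ B := ⟨m, by rw [hwt m le_rfl]; exact hyB⟩
  have hj0 : Nat.find hex ≠ 0 := by
    intro h
    have := Nat.find_spec hex
    rw [h, hw0] at this
    exact hdisj.ne_of_mem hxA this rfl
  obtain ⟨j, hj⟩ := Nat.exists_eq_succ_of_ne_zero hj0
  have hjB : w (j + 1) ∈ B := by
    have h := Nat.find_spec hex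
    rw [hj] at h
    exact h
  have hjA : w j ∈ A := by
    rcases hABK _ (hwK j) with h | h
    · exact h
    · exact absurd h (Nat.find_min hex (by omega))
  have := hfar _ hjA _ hjB
  have := hwg j
  linarith

theorem refine_step {M : Type*} [MetricSpace M] {C : ℝ} (hC : 1 ≤ C)
    (hch : ∀ a b : M, ∀ δ : ℝ, 0 < δ → ∃ m : ℕ, ∃ w : ℕ → M, w 0 = a ∧
      (∀ j, m ≤ j → w j = b) ∧ (∀ j, dist (w j) (w (j + 1)) ≤ δ) ∧
      (∀ j, dist a (w j) ≤ C * dist a b))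
    (x y : M) {δ δ' B : ℝ} (hδ : 0 ≤ δ) (hδ' : 0 < δ')
    {N : ℕ} (hN : 1 ≤ N) {g : ℕ → M}
    (hg0 : g 0 = x) (hgt : ∀ j, N ≤ j → g j = y) (hgap : ∀ j, dist (g j) (g (j + 1)) ≤ δ)
    (hsp : ∀ j, dist x (g j) ≤ B) :
    ∃ N' : ℕ, 1 ≤ N' ∧ ∃ g' : ℕ → M, g' 0 = x ∧ (∀ j, N' ≤ j → g' j = y) ∧
      (∀ j, dist (g' j) (g' (j + 1)) ≤ δ') ∧ (∀ j, dist x (g' j) ≤ B + C * δ) ∧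
      (∀ t : ℝ, dist (g' ⌊t * N'⌋₊) (g ⌊t * N⌋₊) ≤ C * δ) := by
  have hC0 : (0 : ℝ) ≤ C := le_trans zero_le_one hC
  choose mk w hw0 hwt hwgap hwsp using fun k => hch (g k) (g (k + 1)) δ' hδ'
  set m : ℕ := max 1 ((Finset.range N).sup mk) with hm
  have hm1 : 1 ≤ m := le_max_left _ _
  have hm0 : 0 < m := hm1
  have hmk : ∀ k, k < N → mk k ≤ m := fun k hk =>
    le_trans (Finset.le_sup (Finset.mem_range.mpr hk)) (le_max_right _ _)
  have hconst : ∀ k, N ≤ k → ∀ r, w k r = y := by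
    intro k hk r
    have h1 : g k = y := hgt k hk
    have h2 : g (k + 1) = y := hgt _ (by omega)
    have h3 := hwsp k r
    rw [h1, h2] at h3
    simp only [dist_self, mul_zero] at h3
    exact (dist_le_zero.mp h3).symm
  have hend : ∀ k, w k m = g (k + 1) := by
    intro k
    by_cases hk : k < N
    · exact hwt k m (hmk k hk)
    · rw [hconst k (by omega) m, hgt (k + 1) (by omega)]
  refine ⟨N * m, Nat.one_le_iff_ne_zero.mpr (by positivity), fun i => w (i / m) (i % m),
    ?_, ?_, ?_, ?_, ?_⟩
  · show w (0 / m) (0 % m) = x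
    rw [Nat.zero_div, Nat.zero_mod, hw0 0, hg0]
  · intro j hj
    show w (j / m) (j % m) = y
    exact hconst _ ((Nat.le_div_iff_mul_le hm0).mpr hj) _
  · intro i
    show dist (w (i / m) (i % m)) (w ((i + 1) / m) ((i + 1) % m)) ≤ δ'
    set k := i / m with hk
    set r := i % m with hr'
    have hid : m * k + r = i := Nat.div_add_mod i m
    have hr : r < m := Nat.mod_lt _ hm0
    by_cases h : r + 1 < m
    · have h1 : i + 1 = m * k + (r + 1) := by rw [← hid, Nat.add_assoc]
      have hdiv : (i + 1) / m = k := by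
        rw [h1, Nat.mul_add_div hm0, Nat.div_eq_of_lt h, Nat.add_zero]
      have hmod : (i + 1) % m = r + 1 := by
        rw [h1, Nat.mul_add_mod, Nat.mod_eq_of_lt h]
      rw [hdiv, hmod]
      exact hwgap k r
    · have hr1 : r + 1 = m := by omega
      have h1 : i + 1 = m * (k + 1) := by
        rw [Nat.mul_add, Nat.mul_one, ← hid, Nat.add_assoc, hr1]
      have hdiv : (i + 1) / m = k + 1 := by
        rw [h1, Nat.mul_div_cancel_left _ hm0]
      have hmod : (i + 1) % m = 0 := by
        rw [h1, Nat.mul_mod_right]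
      rw [hdiv, hmod, hw0 (k + 1), ← hend k, ← hr1]
      exact hwgap k r
  · intro i
    calc dist x (w (i / m) (i % m))
        ≤ dist x (g (i / m)) + dist (g (i / m)) (w (i / m) (i % m)) := dist_triangle _ _ _
      _ ≤ B + C * δ := add_le_add (hsp _)
          (le_trans (hwsp _ _) (mul_le_mul_of_nonneg_left (hgap _) hC0))
  · intro t
    have hwb : ∀ k r, dist (w k r) (g k) ≤ C * δ := fun k r => by
      rw [dist_comm]
      exact le_trans (hwsp _ _) (mul_le_mul_of_nonneg_left (hgap _) hC0)
    by_cases ht : 0 ≤ t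
    · have h2 : t * ((N * m : ℕ) : ℝ) / (m : ℝ) = t * N := by
        push_cast
        field_simp
      have key : ⌊t * ((N * m : ℕ) : ℝ)⌋₊ / m = ⌊t * N⌋₊ := by
        rw [← Nat.floor_div_natCast, h2]
      show dist (w _ _) (g ⌊t * (N : ℝ)⌋₊) ≤ C * δ
      rw [← key]
      exact hwb _ _
    · push_neg at ht
      have e1 : ⌊t * ((N * m : ℕ) : ℝ)⌋₊ = 0 :=
        Nat.floor_of_nonpos (mul_nonpos_of_nonpos_of_nonneg ht.le (Nat.cast_nonneg _))
      have e2 : ⌊t * (N : ℝ)⌋₊ = 0 :=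
        Nat.floor_of_nonpos (mul_nonpos_of_nonpos_of_nonneg ht.le (Nat.cast_nonneg _))
      show dist (w _ _) _ ≤ C * δ
      rw [e1, e2, Nat.zero_div, Nat.zero_mod, hw0 0]
      simpa using mul_nonneg hC0 hδ

theorem joinedIn_closedBall_of_chains {M : Type*} [MetricSpace M] [CompactSpace M] {C : ℝ}
    (hC : 1 ≤ C)
    (hch : ∀ a b : M, ∀ δ : ℝ, 0 < δ → ∃ m : ℕ, ∃ w : ℕ → M, w 0 = a ∧
      (∀ j, m ≤ j → w j = b) ∧ (∀ j, dist (w j) (w (j + 1)) ≤ δ) ∧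
      (∀ j, dist a (w j) ≤ C * dist a b))
    (x y : M) : JoinedIn (closedBall x (3 * C * dist x y)) x y := by
  by_cases hxy : x = y
  · subst hxy
    exact JoinedIn.refl (by simp [mul_nonneg, le_trans zero_le_one hC])
  have hd : 0 < dist x y := dist_pos.mpr hxy
  set d := dist x y with hdd
  have hC0 : (0 : ℝ) ≤ C := le_trans zero_le_one hC
  -- the invariant at level n
  set P : ℕ → ℕ × (ℕ → M) → Prop := fun n l =>
    1 ≤ l.1 ∧ l.2 0 = x ∧ (∀ j, l.1 ≤ j → l.2 j = y) ∧
    (∀ j, dist (l.2 j) (l.2 (j + 1)) ≤ d * (1 / 2) ^ n) ∧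
    (∀ j, dist x (l.2 j) ≤ C * d * (3 - 2 * (1 / 2) ^ n)) with hP
  have base : P 0 (1, fun j => if j = 0 then x else y) := by
    refine ⟨le_rfl, by simp, fun j hj => by simp [Nat.one_le_iff_ne_zero.mp hj], ?_, ?_⟩
    · intro j
      rcases Nat.eq_zero_or_pos j with h | h
      · subst h; simp; exact le_rfl
      · have h1 : j ≠ 0 := by omega
        have h2 : j + 1 ≠ 0 := by omega
        simp [h1, h2]
        positivity
    · intro j
      rcases Nat.eq_zero_or_pos j with h | h
      · subst h; simp; positivity
      · have h1 : j ≠ 0 := by omega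
        simp only [h1, if_neg, pow_zero, if_false]
        norm_num
        nlinarith
  have step : ∀ n (l : ℕ × (ℕ → M)), P n l → ∃ l' : ℕ × (ℕ → M), P (n + 1) l' ∧
      ∀ t : ℝ, dist (l'.2 ⌊t * l'.1⌋₊) (l.2 ⌊t * l.1⌋₊) ≤ C * (d * (1 / 2) ^ n) := by
    rintro n ⟨N, g⟩ ⟨hN, hg0, hgt, hgap, hsp⟩
    obtain ⟨N', hN', g', h0', ht', hgap', hsp', hcl'⟩ :=
      refine_step hC hch x y (by positivity) (by positivity :
        (0:ℝ) < d * (1 / 2) ^ (n + 1)) hN hg0 hgt hgap hsp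
    refine ⟨(N', g'), ⟨hN', h0', ht', hgap', fun j => ?_⟩, hcl'⟩
    have := hsp' j
    have heq : C * d * (3 - 2 * (1 / 2) ^ n) + C * (d * (1 / 2) ^ n)
        = C * d * (3 - 2 * (1 / 2) ^ (n + 1)) := by ring
    linarith
  -- build the sequence of levels
  let seq : ∀ n : ℕ, {l : ℕ × (ℕ → M) // P n l} := fun n =>
    Nat.rec ⟨(1, fun j => if j = 0 then x else y), base⟩
      (fun n p => ⟨(step n p.1 p.2).choose, (step n p.1 p.2).choose_spec.1⟩) n
  set F : ℕ → ℝ → M := fun n t => (seq n).1.2 ⌊t * (seq n).1.1⌋₊ with hF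
  have hclose : ∀ n t, dist (F (n + 1) t) (F n t) ≤ C * (d * (1 / 2) ^ n) := by
    intro n t
    exact (step n (seq n).1 (seq n).2).choose_spec.2 t
  have hN1 : ∀ n, 1 ≤ (seq n).1.1 := fun n => (seq n).2.1
  have hF0 : ∀ n, F n 0 = x := by
    intro n
    have : (0 : ℝ) * (seq n).1.1 = 0 := zero_mul _
    rw [hF]
    simp only [this, Nat.floor_zero]
    exact (seq n).2.2.1
  have hF1 : ∀ n, F n 1 = y := by
    intro n
    rw [hF]
    simp only [one_mul, Nat.floor_natCast]
    exact (seq n).2.2.2.1 _ le_rfl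
  have hFsp : ∀ n t, dist x (F n t) ≤ 3 * (C * d) := by
    intro n t
    have h1 := (seq n).2.2.2.2.2 ⌊t * (seq n).1.1⌋₊
    have h2 : (0:ℝ) ≤ (1 / 2 : ℝ) ^ n := by positivity
    nlinarith [mul_nonneg hC0 hd.le]
  have hFmod : ∀ n (t t' : ℝ), |t - t'| ≤ 1 / ((seq n).1.1 : ℝ) →
      dist (F n t) (F n t') ≤ d * (1 / 2) ^ n := by
    intro n t t' htt
    have hNpos : (0 : ℝ) < ((seq n).1.1 : ℝ) := by
      exact_mod_cast Nat.lt_of_lt_of_le Nat.zero_lt_one (hN1 n)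
    set a := t * ((seq n).1.1 : ℝ)
    set b := t' * ((seq n).1.1 : ℝ)
    have hab : |a - b| ≤ 1 := by
      have : a - b = (t - t') * ((seq n).1.1 : ℝ) := by ring
      rw [this, abs_mul, abs_of_pos hNpos]
      calc |t - t'| * ((seq n).1.1 : ℝ) ≤ (1 / ((seq n).1.1 : ℝ)) * ((seq n).1.1 : ℝ) :=
            mul_le_mul_of_nonneg_right htt hNpos.le
        _ = 1 := by field_simp
    have hfl : ∀ u v : ℝ, v ≤ u + 1 → ⌊v⌋₊ ≤ ⌊u⌋₊ + 1 := by
      intro u v huv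
      by_cases hv : v < 1
      · have : ⌊v⌋₊ = 0 := Nat.floor_eq_zero.mpr hv
        omega
      · push_neg at hv
        have hu : (0:ℝ) ≤ u := by linarith
        calc ⌊v⌋₊ ≤ ⌊u + 1⌋₊ := Nat.floor_le_floor huv
          _ = ⌊u⌋₊ + 1 := Nat.floor_add_one hu
    have h1 : ⌊a⌋₊ ≤ ⌊b⌋₊ + 1 := hfl b a (by cases abs_le.mp hab; linarith)
    have h2 : ⌊b⌋₊ ≤ ⌊a⌋₊ + 1 := hfl a b (by cases abs_le.mp hab; linarith)
    have hgap := (seq n).2.2.2.2.1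
    have hcases : ⌊b⌋₊ = ⌊a⌋₊ ∨ ⌊b⌋₊ = ⌊a⌋₊ + 1 ∨ ⌊a⌋₊ = ⌊b⌋₊ + 1 := by omega
    show dist ((seq n).1.2 ⌊a⌋₊) ((seq n).1.2 ⌊b⌋₊) ≤ d * (1 / 2) ^ n
    rcases hcases with h | h | h
    · rw [h]
      simpa using by positivity
    · rw [h]
      exact hgap _
    · rw [h, dist_comm]
      exact hgap _
  -- limit
  have hcauchy : ∀ t : ℝ, CauchySeq (fun n => F n t) := by
    intro t
    apply cauchySeq_of_le_geometric (1 / 2) (C * d) (by norm_num)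
    intro n
    rw [dist_comm]
    calc dist (F (n + 1) t) (F n t) ≤ C * (d * (1 / 2) ^ n) := hclose n t
      _ = C * d * (1 / 2) ^ n := by ring
  have hlim := fun t : ℝ => cauchySeq_tendsto_of_complete (hcauchy t)
  choose γ hγ using hlim
  have hdl : ∀ n t, dist (F n t) (γ t) ≤ 2 * (C * d) * (1 / 2) ^ n := by
    intro n t
    have := dist_le_of_le_geometric_of_tendsto (1 / 2) (C * d) (by norm_num)
      (fun k => by rw [dist_comm]
                   calc dist (F (k + 1) t) (F k t) ≤ C * (d * (1 / 2) ^ k) := hclose k t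
                     _ = C * d * (1 / 2) ^ k := by ring) (hγ t) n
    calc dist (F n t) (γ t) ≤ C * d * (1 / 2) ^ n / (1 - 1 / 2) := this
      _ = 2 * (C * d) * (1 / 2) ^ n := by ring
  have hγ0 : γ 0 = x := by
    have he : (fun n => F n 0) = fun _ => x := funext hF0
    have := hγ 0
    rw [he] at this
    exact (tendsto_nhds_unique this tendsto_const_nhds).symm ▸ rfl
  have hγ1 : γ 1 = y := by
    have he : (fun n => F n 1) = fun _ => y := funext hF1
    have := hγ 1
    rw [he] at this
    exact tendsto_nhds_unique this tendsto_const_nhds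
  have hγsp : ∀ t, dist x (γ t) ≤ 3 * (C * d) := by
    intro t
    refine le_of_tendsto (tendsto_const_nhds.dist (hγ t)) (Eventually.of_forall fun n => ?_)
    exact hFsp n t
  have hcont : Continuous γ := by
    rw [Metric.continuous_iff]
    intro t ε hε
    have hD : (0:ℝ) < 4 * (C * d) + d := by nlinarith
    obtain ⟨n, hn⟩ := exists_pow_lt_of_lt_one (div_pos hε hD) (by norm_num : (1:ℝ)/2 < 1)
    have hNpos : (0 : ℝ) < ((seq n).1.1 : ℝ) := by
      exact_mod_cast Nat.lt_of_lt_of_le Nat.zero_lt_one (hN1 n)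
    refine ⟨1 / ((seq n).1.1 : ℝ), by positivity, fun t' htt' => ?_⟩
    have hmod : dist (F n t') (F n t) ≤ d * (1 / 2) ^ n := by
      apply hFmod
      rw [Real.dist_eq] at htt'
      exact htt'.le
    calc dist (γ t') (γ t)
        ≤ dist (γ t') (F n t') + dist (F n t') (F n t) + dist (F n t) (γ t) :=
          dist_triangle4 _ _ _ _
      _ ≤ 2 * (C * d) * (1 / 2) ^ n + d * (1 / 2) ^ n + 2 * (C * d) * (1 / 2) ^ n := by
          have := hdl n t'
          have := hdl n t
          rw [dist_comm (γ t') (F n t')]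
          linarith
      _ = (4 * (C * d) + d) * (1 / 2) ^ n := by ring
      _ < ε := by
          rw [div_eq_mul_inv] at hn
          calc (4 * (C * d) + d) * (1 / 2) ^ n < (4 * (C * d) + d) * (ε * (4 * (C * d) + d)⁻¹) :=
                mul_lt_mul_of_pos_left hn hD
            _ = ε := by field_simp
  refine ⟨⟨⟨fun s => γ s, hcont.comp continuous_subtype_val⟩, ?_, ?_⟩, fun s => ?_⟩
  · show γ ((0 : unitInterval) : ℝ) = x
    rw [Set.Icc.coe_zero, hγ0]
  · show γ ((1 : unitInterval) : ℝ) = y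
    rw [Set.Icc.coe_one, hγ1]
  · show γ (s : ℝ) ∈ closedBall x (3 * C * d)
    rw [mem_closedBall, dist_comm]
    calc dist x (γ s) ≤ 3 * (C * d) := hγsp _
      _ = 3 * C * d := by ring

theorem chains_of_hyp
    (Mi : ℕ → Type*) [∀ i, MetricSpace (Mi i)] [∀ i, Nonempty (Mi i)]
    (L : ℝ) (hlin : ∀ i, LinearlyConnectedConst (Mi i) L)
    (M : Type*) [MetricSpace M] [Nonempty M]
    (lam : ℝ) (hlam : 1 ≤ lam) (ε : ℕ → ℝ)
    (hqi : ∀ i, ∃ f : M → Mi i, IsQuasiIsometry lam (ε i) f)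
    (hε : Filter.Tendsto ε Filter.atTop (nhds 0)) :
    ∀ a b : M, ∀ δ : ℝ, 0 < δ → ∃ m : ℕ, ∃ w : ℕ → M, w 0 = a ∧
      (∀ j, m ≤ j → w j = b) ∧ (∀ j, dist (w j) (w (j + 1)) ≤ δ) ∧
      (∀ j, dist a (w j) ≤ (lam ^ 2 * max L 0 + 1) * dist a b) := by
  have hlampos : 0 < lam := lt_of_lt_of_le one_pos hlam
  have hεnn : ∀ i, 0 ≤ ε i := by
    intro i
    obtain ⟨f, hf⟩ := hqi i
    obtain ⟨x, hx⟩ := hf.2 (Classical.arbitrary (Mi i))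
    exact le_trans dist_nonneg hx
  set A := max L 0 with hA
  have hA0 : 0 ≤ A := le_max_right _ _
  intro a b δ hδ
  by_cases hab : a = b
  · subst hab
    exact ⟨0, fun _ => a, rfl, fun _ _ => rfl, by simp [hδ.le], by simp⟩
  have hd : 0 < dist a b := dist_pos.mpr hab
  set c := min (δ / (8 * lam)) (dist a b / (lam * (A + 2) + 1)) with hc
  have hcpos : 0 < c := lt_min (by positivity) (by positivity)
  obtain ⟨i, hi⟩ := (hε.eventually (gt_mem_nhds hcpos)).exists
  obtain ⟨f, hfqi, hfdense⟩ := hqi i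
  set e := ε i with he
  have he0 : 0 ≤ e := hεnn i
  have he8 : e ≤ δ / (8 * lam) := le_trans hi.le (min_le_left _ _)
  have heE : e ≤ dist a b / (lam * (A + 2) + 1) := le_trans hi.le (min_le_right _ _)
  obtain ⟨J, hJa, hJb, hJconn, hJdiam⟩ := hlin i (f a) (f b)
  have hδ' : 0 < δ / (8 * lam) := by positivity
  obtain ⟨m, hm1, w', hw'0, hw't, hw'gap, hw'mem⟩ :=
    exists_chain_of_isPreconnected hJconn.isPreconnected hJa hJb hδ'
  have hdiamJ : ∀ p ∈ J, ∀ q ∈ J, dist p q ≤ A * dist (f a) (f b) := by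
    intro p hp q hq
    have h1 : edist p q ≤ ENNReal.ofReal (A * dist (f a) (f b)) := by
      refine le_trans (EMetric.edist_le_diam_of_mem hp hq) (le_trans hJdiam ?_)
      exact ENNReal.ofReal_le_ofReal
        (mul_le_mul_of_nonneg_right (le_max_left L 0) dist_nonneg)
    rw [edist_dist] at h1
    exact (ENNReal.ofReal_le_ofReal_iff (by positivity)).mp h1
  choose u hu using fun j => hfdense (w' j)
  set w : ℕ → M := fun j => if j = 0 then a else if m ≤ j then b else u j with hw
  have hwnear : ∀ j, dist (w' j) (f (w j)) ≤ e := by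
    intro j
    by_cases h0 : j = 0
    · subst h0
      simp only [hw, if_pos]
      rw [hw'0, dist_self]
      exact he0
    by_cases hm : m ≤ j
    · simp only [hw, if_neg h0, if_pos hm]
      rw [hw't j hm, dist_self]
      exact he0
    · simp only [hw, if_neg h0, if_neg hm]
      exact hu j
  have hkey : ∀ p q : M, dist p q ≤ lam * (dist (f p) (f q) + e) := by
    intro p q
    have h1 := (hfqi p q).1
    calc dist p q = lam * (lam⁻¹ * dist p q) := by field_simp
      _ ≤ lam * (dist (f p) (f q) + e) :=
          mul_le_mul_of_nonneg_left (by linarith) hlampos.le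
  refine ⟨m, w, by simp [hw], ?_, ?_, ?_⟩
  · intro j hj
    have hj0 : j ≠ 0 := by omega
    simp only [hw, if_neg hj0, if_pos hj]
  · intro j
    have h1 : dist (f (w j)) (f (w (j + 1))) ≤ e + δ / (8 * lam) + e := by
      calc dist (f (w j)) (f (w (j + 1)))
          ≤ dist (f (w j)) (w' j) + dist (w' j) (w' (j + 1)) + dist (w' (j + 1)) (f (w (j + 1))) :=
            dist_triangle4 _ _ _ _
        _ ≤ e + δ / (8 * lam) + e := by
            have := hwnear j
            have := hwnear (j + 1)
            have := hw'gap j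
            rw [dist_comm (f (w j)) (w' j)]
            linarith
    calc dist (w j) (w (j + 1)) ≤ lam * (dist (f (w j)) (f (w (j + 1))) + e) := hkey _ _
      _ ≤ lam * (4 * (δ / (8 * lam))) := by
          apply mul_le_mul_of_nonneg_left _ hlampos.le
          linarith
      _ = δ / 2 := by field_simp; ring
      _ ≤ δ := by linarith
  · intro j
    have hfab : dist (f a) (f b) ≤ lam * dist a b + e := (hfqi a b).2
    have h1 : dist (f a) (f (w j)) ≤ A * dist (f a) (f b) + e := by
      calc dist (f a) (f (w j)) ≤ dist (f a) (w' j) + dist (w' j) (f (w j)) := dist_triangle _ _ _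
        _ ≤ A * dist (f a) (f b) + e := add_le_add (hdiamJ _ hJa _ (hw'mem j)) (hwnear j)
    have h2 : dist a (w j) ≤ lam * (A * (lam * dist a b + e) + e + e) := by
      calc dist a (w j) ≤ lam * (dist (f a) (f (w j)) + e) := hkey _ _
        _ ≤ lam * (A * (lam * dist a b + e) + e + e) := by
            apply mul_le_mul_of_nonneg_left _ hlampos.le
            have := mul_le_mul_of_nonneg_left hfab hA0
            linarith
    have h3 : lam * (A + 2) * e ≤ dist a b := by
      have hspos : 0 < lam * (A + 2) + 1 := by positivity
      have hs0 : 0 ≤ lam * (A + 2) := mul_nonneg hlampos.le (by linarith)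
      have h4 : lam * (A + 2) * (dist a b / (lam * (A + 2) + 1)) ≤ dist a b := by
        rw [← mul_div_assoc, div_le_iff₀ hspos]
        nlinarith
      calc lam * (A + 2) * e ≤ lam * (A + 2) * (dist a b / (lam * (A + 2) + 1)) :=
            mul_le_mul_of_nonneg_left heE hs0
        _ ≤ dist a b := h4
    calc dist a (w j) ≤ lam * (A * (lam * dist a b + e) + e + e) := h2
      _ = lam ^ 2 * A * dist a b + lam * (A + 2) * e := by ring
      _ ≤ lam ^ 2 * A * dist a b + dist a b := by linarith
      _ = (lam ^ 2 * A + 1) * dist a b := by ring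

end WGHAux

/-- **Lemma.** If the `L`-linearly connected metric spaces `Mᵢ` weakly Gromov–Hausdorff converge
to a compact metric space `M`, then `M` is linearly connected; in particular `M` is connected
and locally path-connected. -/
theorem weak_GH_limit_linearly_connected
    (Mi : ℕ → Type*) [∀ i, MetricSpace (Mi i)] [∀ i, Nonempty (Mi i)]
    (L : ℝ) (hlin : ∀ i, LinearlyConnectedConst (Mi i) L)
    (M : Type*) [MetricSpace M] [CompactSpace M]
    (lam : ℝ) (hlam : 1 ≤ lam) (ε : ℕ → ℝ)
    (hqi : ∀ i, ∃ f : M → Mi i, IsQuasiIsometry lam (ε i) f)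
    (hε : Filter.Tendsto ε Filter.atTop (nhds 0)) :
    (∃ L' : ℝ, LinearlyConnectedConst M L') ∧ ConnectedSpace M ∧ LocPathConnectedSpace M := by
  haveI hMne : Nonempty M := ⟨(((hqi 0).choose_spec).2 (Classical.arbitrary (Mi 0))).choose⟩
  set C := lam ^ 2 * max L 0 + 1 with hC
  have hC1 : 1 ≤ C := le_add_of_nonneg_left (mul_nonneg (by positivity) (le_max_right _ _))
  have hch := WGHAux.chains_of_hyp Mi L hlin M lam hlam ε hqi hε
  have hlc : LinearlyConnectedConst M (2 * C) := by
    intro x y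
    obtain ⟨J, hxJ, hyJ, hJc, hJsub⟩ := WGHAux.exists_connected_of_chains hC1 hch x y
    refine ⟨J, hxJ, hyJ, hJc, ?_⟩
    apply EMetric.diam_le
    intro p hp q hq
    rw [edist_dist]
    apply ENNReal.ofReal_le_ofReal
    have hpx : dist p x ≤ C * dist x y := hJsub hp
    have hqx : dist q x ≤ C * dist x y := hJsub hq
    calc dist p q ≤ dist p x + dist x q := dist_triangle _ _ _
      _ ≤ 2 * C * dist x y := by rw [dist_comm x q]; linarith
  have hconn : ConnectedSpace M := by
    rw [connectedSpace_iff_univ]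
    have x0 : M := Classical.arbitrary M
    have hcc : connectedComponent x0 = Set.univ := by
      apply Set.eq_univ_of_forall
      intro y
      obtain ⟨J, hxJ, hyJ, hJc, -⟩ := hlc x0 y
      exact hJc.isPreconnected.subset_connectedComponent hxJ hyJ
    rw [← hcc]
    exact isConnected_connectedComponent
  have hjoin : ∀ x y : M, JoinedIn (closedBall x (3 * C * dist x y)) x y :=
    WGHAux.joinedIn_closedBall_of_chains hC1 hch
  refine ⟨⟨2 * C, hlc⟩, hconn, ?_⟩
  refine ⟨fun x => Filter.hasBasis_self.mpr fun U hU => ?_⟩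
  obtain ⟨r, hr, hball⟩ := Metric.mem_nhds_iff.mp hU
  have h3C : (0:ℝ) < 3 * C := by linarith
  set ρ := r / (3 * C + 1) with hρ
  have hρpos : 0 < ρ := div_pos hr (by linarith)
  refine ⟨pathComponentIn (ball x r) x, ?_,
    isPathConnected_pathComponentIn (mem_ball_self hr), pathComponentIn_subset.trans hball⟩
  apply Filter.mem_of_superset (ball_mem_nhds x hρpos)
  intro y hy
  have h1 : dist x y < ρ := by rwa [mem_ball, dist_comm] at hy
  have hsub : closedBall x (3 * C * dist x y) ⊆ ball x r := by
    intro z hz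
    rw [mem_ball]
    rw [mem_closedBall] at hz
    have h2 : (3 * C + 1) * ρ = r := by
      rw [hρ]; field_simp
    calc dist z x ≤ 3 * C * dist x y := hz
      _ < 3 * C * ρ := mul_lt_mul_of_pos_left h1 h3C
      _ < r := by nlinarith
  exact (hjoin x y).mono hsub
end
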